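/- arXiv:2505.24587 — 7 statements merged into one kernel-verified Lean document; each statement's English description precedes it below -/
import Mathlib

section
/- Let α ∈ [0,1] and let M = (M_y)_{y ∈ Y} (Y finite) be a measurement on ℂ^d whose operators M_y are all positive semidefinite. If for every pure state ρ = |ψ⟩⟨ψ| and every outcome y with Tr(ρ M_y† M_y) > 0 one has ‖ρ − ρ_{M→y}‖_Tr ≤ α, then the same holds for every (possibly mixed) quantum state ρ on ℂ^d: for every outcome y with Tr(ρ M_y† M_y) > 0, ‖ρ − ρ_{M→y}‖_Tr ≤ α. -/
open scoped BigOperators ComplexOrder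
open Matrix

/-- Trace-norm distance: half the sum of the absolute values of the eigenvalues of `A - B`. -/
noncomputable def traceDist {ι : Type*} [Fintype ι] [DecidableEq ι]
    (A B : Matrix ι ι ℂ) : ℝ :=
  if h : (A - B).IsHermitian then (∑ i, |h.eigenvalues i|) / 2 else 0

/-- A quantum state: positive semidefinite with trace one. -/
def IsState {ι : Type*} [Fintype ι] (ρ : Matrix ι ι ℂ) : Prop :=
  ρ.PosSemidef ∧ ρ.trace = 1

/-- Probability of the outcome corresponding to measurement operator `N` on state `ρ`. -/
noncomputable def outProb {ι : Type*} [Fintype ι] (N ρ : Matrix ι ι ℂ) : ℝ :=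
  ((ρ * (Nᴴ * N)).trace).re

/-- Post-measurement state `N ρ Nᴴ / Tr(ρ Nᴴ N)`. -/
noncomputable def postState {ι : Type*} [Fintype ι] (N ρ : Matrix ι ι ℂ) :
    Matrix ι ι ℂ :=
  ((ρ * (Nᴴ * N)).trace)⁻¹ • (N * ρ * Nᴴ)

/-- `M` is `α`-gentle on all quantum states. -/
def IsGentle {ι : Type*} [Fintype ι] [DecidableEq ι] {Y : Type*}
    (M : Y → Matrix ι ι ℂ) (α : ℝ) : Prop :=
  ∀ ρ : Matrix ι ι ℂ, IsState ρ → ∀ y : Y,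
    0 < outProb (M y) ρ → traceDist ρ (postState (M y) ρ) ≤ α

private lemma dft_row_sum {d : ℕ} (j l : Fin d) :
    ∑ k : Fin d, Complex.exp (2 * Real.pi * Complex.I / d) ^ ((j : ℕ) * (k : ℕ)) *
      (starRingEnd ℂ) (Complex.exp (2 * Real.pi * Complex.I / d) ^ ((l : ℕ) * (k : ℕ))) =
    if j = l then (d : ℂ) else 0 := by
  have hd : 0 < d := j.pos
  have hdC : (d : ℂ) ≠ 0 := Nat.cast_ne_zero.mpr hd.ne'
  set ω : ℂ := Complex.exp (2 * Real.pi * Complex.I / d) with hω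
  have hω0 : ω ≠ 0 := Complex.exp_ne_zero _
  have hconj : (starRingEnd ℂ) ω = ω⁻¹ := by
    rw [hω, ← Complex.exp_conj, ← Complex.exp_neg]
    congr 1
    simp [map_div₀, Complex.conj_I, map_ofNat]
    norm_num
    ring
  set m : ℤ := (j : ℤ) - (l : ℤ) with hm
  set z : ℂ := ω ^ m with hz
  have hterm : ∀ k : Fin d,
      ω ^ ((j : ℕ) * (k : ℕ)) * (starRingEnd ℂ) (ω ^ ((l : ℕ) * (k : ℕ))) = z ^ (k : ℕ) := by
    intro k
    rw [map_pow, hconj, hz, ← zpow_natCast ω, ← zpow_natCast ω⁻¹, _root_.inv_zpow, ← _root_.zpow_neg, ← zpow_add₀ hω0,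
      ← zpow_natCast (ω ^ m), ← _root_.zpow_mul]
    congr 1
    push_cast
    ring
  rw [Finset.sum_congr rfl (fun k _ => hterm k), Fin.sum_univ_eq_sum_range (fun k => z ^ k)]
  by_cases hjl : j = l
  · subst hjl
    have : z = 1 := by rw [hz, hm, sub_self, zpow_zero]
    simp [this]
  · rw [if_neg hjl]
    have hzd : z ^ d = 1 := by
      rw [hz, ← zpow_natCast (ω ^ m), ← _root_.zpow_mul, hω, ← Complex.exp_int_mul]
      have : (↑(m * d) : ℂ) * (2 * Real.pi * Complex.I / d) = m * (2 * Real.pi * Complex.I) := by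
        push_cast
        field_simp
      rw [this, Complex.exp_int_mul_two_pi_mul_I]
    have hz1 : z ≠ 1 := by
      intro h
      rw [hz, hω, ← Complex.exp_int_mul, Complex.exp_eq_one_iff] at h
      obtain ⟨n, hn⟩ := h
      have h2pi : (2 : ℂ) * Real.pi * Complex.I ≠ 0 := by
        simp [Real.pi_ne_zero, Complex.I_ne_zero]
      have hmc : (m : ℂ) = n * d := by
        field_simp at hn
        linear_combination hn
      have hmz : m = n * d := by exact_mod_cast hmc
      have hm0 : m ≠ 0 := by
        simp only [hm, sub_ne_zero]
        exact_mod_cast fun h => hjl (Fin.ext (by exact_mod_cast h))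
      have hjd : (j : ℤ) < d := by exact_mod_cast j.isLt
      have hld : (l : ℤ) < d := by exact_mod_cast l.isLt
      have hj0 : (0 : ℤ) ≤ (j : ℤ) := by positivity
      have hl0 : (0 : ℤ) ≤ (l : ℤ) := by positivity
      have hmlt : |m| < d := by
        rw [hm, abs_lt]
        omega
      have : n ≠ 0 := fun h => hm0 (by simp [hmz, h])
      have h1 : (1 : ℤ) ≤ |n| := Int.one_le_abs (by exact_mod_cast this)
      have : (d : ℤ) ≤ |m| := by
        rw [hmz, abs_mul, abs_of_nonneg (by positivity : (0:ℤ) ≤ (d:ℤ))]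
        nlinarith
      linarith
    rw [geom_sum_eq hz1, hzd, sub_self, zero_div]

private lemma exists_unitary_diagZero {d : ℕ} {C : Matrix (Fin d) (Fin d) ℂ}
    (hC : C.IsHermitian) (htr : C.trace = 0) :
    ∃ V : Matrix (Fin d) (Fin d) ℂ, V * Vᴴ = 1 ∧ ∀ i, (Vᴴ * C * V) i i = 0 := by
  classical
  set ω : ℂ := Complex.exp (2 * Real.pi * Complex.I / d) with hω
  have hzre : (2 * (Real.pi : ℂ) * Complex.I / d) = ((2 * Real.pi / d : ℝ) : ℂ) * Complex.I := by
    push_cast; ring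
  have hωabs : ‖ω‖ = 1 := by
    rw [hω, hzre, Complex.norm_exp]
    simp
  have habs : ∀ n : ℕ, (starRingEnd ℂ) (ω ^ n) * ω ^ n = 1 := by
    intro n
    rw [← Complex.normSq_eq_conj_mul_self, Complex.normSq_eq_norm_sq, norm_pow, hωabs]
    norm_num
  set U : Matrix (Fin d) (Fin d) ℂ := (hC.eigenvectorUnitary : Matrix (Fin d) (Fin d) ℂ) with hU
  have hUU : U * star U = 1 := (Matrix.mem_unitaryGroup_iff).mp hC.eigenvectorUnitary.2
  have hUU' : star U * U = 1 := (Matrix.mem_unitaryGroup_iff').mp hC.eigenvectorUnitary.2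
  set c : ℂ := (((Real.sqrt d)⁻¹ : ℝ) : ℂ) with hc
  set F : Matrix (Fin d) (Fin d) ℂ := Matrix.of fun j k => c * ω ^ ((j : ℕ) * (k : ℕ)) with hF
  have hcc : ∀ j : Fin d, c * c * (d : ℂ) = 1 := by
    intro j
    have hd : 0 < d := j.pos
    rw [hc]
    rw [← Complex.ofReal_mul]
    rw [← Real.sqrt_inv, Real.mul_self_sqrt (by positivity)]
    rw [← Complex.ofReal_natCast, ← Complex.ofReal_mul]
    rw [inv_mul_cancel₀ (by positivity : (d:ℝ) ≠ 0)]
    norm_num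
  have hFF : F * Fᴴ = 1 := by
    ext j l
    rw [Matrix.mul_apply, Matrix.one_apply]
    have hterm : ∀ k, F j k * Fᴴ k l =
        (c * c) * (ω ^ ((j : ℕ) * (k : ℕ)) * (starRingEnd ℂ) (ω ^ ((l : ℕ) * (k : ℕ)))) := by
      intro k
      rw [Matrix.conjTranspose_apply, hF]
      simp only [Matrix.of_apply, star_mul']
      rw [Complex.star_def, hc, Complex.conj_ofReal]
      ring
    rw [Finset.sum_congr rfl fun k _ => hterm k, ← Finset.mul_sum, dft_row_sum]
    split_ifs with h
    · exact hcc j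
    · exact mul_zero _
  refine ⟨U * F, ?_, ?_⟩
  · rw [Matrix.conjTranspose_mul, ← Matrix.mul_assoc, Matrix.mul_assoc U F Fᴴ, hFF,
      Matrix.mul_one, ← Matrix.star_eq_conjTranspose, hUU]
  · intro i
    have hspec : star U * C * U = Matrix.diagonal (RCLike.ofReal ∘ hC.eigenvalues) :=
      by rw [← hC.conjStarAlgAut_star_eigenvectorUnitary, Unitary.conjStarAlgAut_apply]; simp [hU]
    have hVCV : (U * F)ᴴ * C * (U * F) =
        Fᴴ * (Matrix.diagonal (RCLike.ofReal ∘ hC.eigenvalues)) * F := by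
      rw [Matrix.conjTranspose_mul, ← hspec, Matrix.star_eq_conjTranspose]
      simp only [Matrix.mul_assoc]
    have hcstar : star c = c := by
      rw [hc, Complex.star_def, Complex.conj_ofReal]
    have hsum : ∑ μ, hC.eigenvalues μ = 0 := by
      have h1 : C.trace = Matrix.trace (Matrix.diagonal (RCLike.ofReal ∘ hC.eigenvalues)) := by
        conv_lhs => rw [hC.spectral_theorem, Unitary.conjStarAlgAut_apply]
        rw [Matrix.trace_mul_cycle, ← hU, hUU', Matrix.one_mul]
      rw [htr, Matrix.trace_diagonal] at h1
      have h1' : (0 : ℂ) = ∑ μ, ((hC.eigenvalues μ : ℝ) : ℂ) := by simpa using h1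
      have h2 : ((∑ μ, hC.eigenvalues μ : ℝ) : ℂ) = 0 := by
        rw [Complex.ofReal_sum]
        exact h1'.symm
      exact_mod_cast h2
    rw [hVCV, Matrix.mul_assoc, Matrix.mul_apply]
    have hterm2 : ∀ j : Fin d,
        Fᴴ i j * ((Matrix.diagonal (RCLike.ofReal ∘ hC.eigenvalues) : Matrix (Fin d) (Fin d) ℂ) * F) j i
          = (c * c) * (RCLike.ofReal (hC.eigenvalues j) : ℂ) := by
      intro j
      rw [Matrix.diagonal_mul, Matrix.conjTranspose_apply, hF]
      simp only [Matrix.of_apply, Function.comp_apply, star_mul', hcstar]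
      have h3 := habs ((j : ℕ) * (i : ℕ))
      rw [Complex.star_def]
      linear_combination (c * c * (RCLike.ofReal (hC.eigenvalues j) : ℂ)) * h3
    have h5 : ∑ j, Fᴴ i j * ((Matrix.diagonal (RCLike.ofReal ∘ hC.eigenvalues) : Matrix (Fin d) (Fin d) ℂ) * F) j i
        = ∑ j, (c * c) * (RCLike.ofReal (hC.eigenvalues j) : ℂ) :=
      Finset.sum_congr rfl fun j _ => hterm2 j
    have h6 : ∑ j, (RCLike.ofReal (hC.eigenvalues j) : ℂ) = 0 := by
      have : ∑ j, (RCLike.ofReal (hC.eigenvalues j) : ℂ) = ((∑ j, hC.eigenvalues j : ℝ) : ℂ) := by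
        push_cast
        rfl
      rw [this, hsum, Complex.ofReal_zero]
    rw [h5, ← Finset.mul_sum, h6, mul_zero]

private lemma psd_diag_nonneg {d : ℕ} {P : Matrix (Fin d) (Fin d) ℂ} (hP : P.PosSemidef)
    (i : Fin d) : 0 ≤ P i i := by
  have h := hP.dotProduct_mulVec_nonneg (Pi.single i 1)
  have : dotProduct (star (Pi.single i 1)) (P *ᵥ Pi.single i 1) = P i i := by
    simp [dotProduct, Matrix.mulVec_single, Pi.single_apply, apply_ite]
  rwa [this] at h

private lemma sum_abs_eigenvalues_le {d : ℕ} {A P Q : Matrix (Fin d) (Fin d) ℂ}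
    (hA : A.IsHermitian) (hP : P.PosSemidef) (hQ : Q.PosSemidef)
    (hPQ : A = P - Q) :
    ∑ i, |hA.eigenvalues i| ≤ ((P + Q).trace).re := by
  classical
  set U : Matrix (Fin d) (Fin d) ℂ := (hA.eigenvectorUnitary : Matrix (Fin d) (Fin d) ℂ) with hU
  have hUU : U * star U = 1 := (Matrix.mem_unitaryGroup_iff).mp hA.eigenvectorUnitary.2
  have hP' : (Uᴴ * P * U).PosSemidef := hP.conjTranspose_mul_mul_same U
  have hQ' : (Uᴴ * Q * U).PosSemidef := hQ.conjTranspose_mul_mul_same U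
  have hspec : star U * A * U = Matrix.diagonal (RCLike.ofReal ∘ hA.eigenvalues) :=
    by rw [← hA.conjStarAlgAut_star_eigenvectorUnitary, Unitary.conjStarAlgAut_apply]; simp [hU]
  have hdiagA : ∀ i, (Uᴴ * P * U) i i - (Uᴴ * Q * U) i i = (hA.eigenvalues i : ℂ) := by
    intro i
    have h1 : Uᴴ * P * U - Uᴴ * Q * U = Matrix.diagonal (RCLike.ofReal ∘ hA.eigenvalues) := by
      rw [← hspec, Matrix.star_eq_conjTranspose, hPQ]
      noncomm_ring
    have h2 := congrFun (congrFun h1 i) i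
    simpa using h2
  have hkey : ∀ i, |hA.eigenvalues i| ≤ ((Uᴴ * (P + Q) * U) i i).re := by
    intro i
    have hp := Complex.nonneg_iff.mp (psd_diag_nonneg hP' i)
    have hq := Complex.nonneg_iff.mp (psd_diag_nonneg hQ' i)
    have h3 : (hA.eigenvalues i : ℂ).re = ((Uᴴ * P * U) i i).re - ((Uᴴ * Q * U) i i).re := by
      rw [← Complex.sub_re, hdiagA i]
    have h4 : (Uᴴ * (P + Q) * U) i i = (Uᴴ * P * U) i i + (Uᴴ * Q * U) i i := by
      have : Uᴴ * (P + Q) * U = Uᴴ * P * U + Uᴴ * Q * U := by noncomm_ring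
      rw [this]
      simp
    rw [h4, Complex.add_re]
    rw [Complex.ofReal_re] at h3
    rw [abs_le]
    constructor <;> [linarith [hp.1, hq.1]; linarith [hp.1, hq.1]]
  have htr : Matrix.trace (Uᴴ * (P + Q) * U) = Matrix.trace (P + Q) := by
    rw [Matrix.trace_mul_cycle, ← Matrix.star_eq_conjTranspose, hUU, Matrix.one_mul]
  calc ∑ i, |hA.eigenvalues i| ≤ ∑ i, ((Uᴴ * (P + Q) * U) i i).re :=
        Finset.sum_le_sum fun i _ => hkey i
    _ = (Matrix.trace (Uᴴ * (P + Q) * U)).re := by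
        rw [Matrix.trace, Complex.re_sum]
        rfl
    _ = ((P + Q).trace).re := by rw [htr]

private lemma exists_jordan {d : ℕ} {A : Matrix (Fin d) (Fin d) ℂ} (hA : A.IsHermitian) :
    ∃ P Q : Matrix (Fin d) (Fin d) ℂ, P.PosSemidef ∧ Q.PosSemidef ∧ A = P - Q ∧
      ((P + Q).trace).re = ∑ i, |hA.eigenvalues i| := by
  classical
  set U : Matrix (Fin d) (Fin d) ℂ := (hA.eigenvectorUnitary : Matrix (Fin d) (Fin d) ℂ) with hU
  have hUU' : star U * U = 1 := (Matrix.mem_unitaryGroup_iff').mp hA.eigenvectorUnitary.2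
  set f : Fin d → ℝ := fun i => max (hA.eigenvalues i) 0 with hf
  set g : Fin d → ℝ := fun i => max (-(hA.eigenvalues i)) 0 with hg
  refine ⟨U * Matrix.diagonal (fun i => (f i : ℂ)) * Uᴴ,
          U * Matrix.diagonal (fun i => (g i : ℂ)) * Uᴴ, ?_, ?_, ?_, ?_⟩
  · exact (Matrix.PosSemidef.diagonal fun i => Complex.zero_le_real.mpr (le_max_right _ _)).mul_mul_conjTranspose_same U
  · exact (Matrix.PosSemidef.diagonal fun i => Complex.zero_le_real.mpr (le_max_right _ _)).mul_mul_conjTranspose_same U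
  · have h1 : U * Matrix.diagonal (fun i => (f i : ℂ)) * Uᴴ - U * Matrix.diagonal (fun i => (g i : ℂ)) * Uᴴ
        = U * (Matrix.diagonal (fun i => (f i : ℂ)) - Matrix.diagonal (fun i => (g i : ℂ))) * Uᴴ := by
      noncomm_ring
    rw [h1, Matrix.diagonal_sub]
    have h2 : (fun i => (f i : ℂ) - (g i : ℂ)) = (RCLike.ofReal ∘ hA.eigenvalues) := by
      funext i
      simp only [Function.comp_apply, hf, hg]
      rw [← Complex.ofReal_sub]
      have h3 : max (hA.eigenvalues i) 0 - max (-(hA.eigenvalues i)) 0 = hA.eigenvalues i := by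
        rcases le_total (hA.eigenvalues i) 0 with h | h
        · rw [max_eq_right h, max_eq_left (by linarith)]; ring
        · rw [max_eq_left h, max_eq_right (by linarith)]; ring
      rw [h3]
      rfl
    rw [h2, ← Matrix.star_eq_conjTranspose]
    exact hA.spectral_theorem
  · have h1 : U * Matrix.diagonal (fun i => (f i : ℂ)) * Uᴴ + U * Matrix.diagonal (fun i => (g i : ℂ)) * Uᴴ
        = U * (Matrix.diagonal fun i => ((f i + g i : ℝ) : ℂ)) * Uᴴ := by
      have : (Matrix.diagonal fun i => ((f i + g i : ℝ) : ℂ))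
          = Matrix.diagonal (fun i => (f i : ℂ)) + Matrix.diagonal (fun i => (g i : ℂ)) := by
        rw [Matrix.diagonal_add]
        congr 1
        funext i
        push_cast
        ring
      rw [this]
      noncomm_ring
    rw [h1]
    have h2 : Matrix.trace (U * (Matrix.diagonal fun i => ((f i + g i : ℝ) : ℂ)) * Uᴴ)
        = Matrix.trace (Matrix.diagonal fun i => ((f i + g i : ℝ) : ℂ)) := by
      rw [Matrix.trace_mul_cycle, ← Matrix.star_eq_conjTranspose, hUU', Matrix.one_mul]
    rw [h2, Matrix.trace_diagonal, ← Complex.ofReal_sum, Complex.ofReal_re]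
    refine Finset.sum_congr rfl fun i _ => ?_
    simp only [hf, hg]
    rcases le_total (hA.eigenvalues i) 0 with h | h
    · rw [max_eq_right h, max_eq_left (by linarith), abs_of_nonpos h]; ring
    · rw [max_eq_left h, max_eq_right (by linarith), abs_of_nonneg h]; ring

private lemma herm_trace_real {d : ℕ} {X : Matrix (Fin d) (Fin d) ℂ} (hX : X.IsHermitian) :
    X.trace = (X.trace.re : ℂ) := by
  have h := congrArg Matrix.trace hX
  rw [Matrix.trace_conjTranspose] at h
  exact (Complex.conj_eq_iff_re.mp h).symm

private lemma psd_smul {d : ℕ} {P : Matrix (Fin d) (Fin d) ℂ} (hP : P.PosSemidef) {c : ℝ}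
    (hc : 0 ≤ c) : ((c : ℂ) • P).PosSemidef := by
  refine Matrix.PosSemidef.of_dotProduct_mulVec_nonneg ?_ ?_
  · show ((c:ℂ) • P)ᴴ = (c:ℂ) • P
    rw [Matrix.conjTranspose_smul, Complex.star_def, Complex.conj_ofReal, hP.1.eq]
  · intro x
    rw [Matrix.smul_mulVec, dotProduct_smul]
    exact mul_nonneg (Complex.zero_le_real.mpr hc) (hP.dotProduct_mulVec_nonneg x)

private lemma psd_sum {d : ℕ} {ι : Type*} (s : Finset ι) (f : ι → Matrix (Fin d) (Fin d) ℂ)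
    (h : ∀ i ∈ s, (f i).PosSemidef) : (∑ i ∈ s, f i).PosSemidef :=
  Finset.sum_induction f _ (fun _ _ ha hb => ha.add hb) Matrix.PosSemidef.zero h

private lemma vecMulVec_herm {d : ℕ} (u : Fin d → ℂ) :
    (Matrix.vecMulVec u (star u)).IsHermitian := by
  show (Matrix.vecMulVec u (star u))ᴴ = _
  ext j k
  simp [Matrix.vecMulVec_apply, Matrix.conjTranspose_apply, mul_comm]

private lemma sum_vecMulVec_col {d : ℕ} (W : Matrix (Fin d) (Fin d) ℂ) :
    ∑ i, Matrix.vecMulVec (fun k => W k i) (star (fun k => W k i)) = W * Wᴴ := by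
  ext j k
  rw [Matrix.sum_apply, Matrix.mul_apply]
  refine Finset.sum_congr rfl fun i _ => ?_
  simp [Matrix.vecMulVec_apply, Matrix.conjTranspose_apply]

private lemma trace_vecMulVec_mul {d : ℕ} (u : Fin d → ℂ) (T : Matrix (Fin d) (Fin d) ℂ) :
    (Matrix.vecMulVec u (star u) * T).trace = dotProduct (star u) (T *ᵥ u) := by
  rw [Matrix.trace, dotProduct]
  simp only [Matrix.diag_apply, Matrix.mul_apply, Matrix.vecMulVec_apply, Pi.star_apply,
    Matrix.mulVec, dotProduct]
  rw [Finset.sum_comm]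
  refine Finset.sum_congr rfl fun k _ => ?_
  rw [Finset.mul_sum]
  refine Finset.sum_congr rfl fun j _ => ?_
  ring

private lemma entry_sandwich {d : ℕ} (W T : Matrix (Fin d) (Fin d) ℂ) (i : Fin d) :
    (Wᴴ * T * W) i i = dotProduct (star (fun k => W k i)) (T *ᵥ (fun k => W k i)) := by
  rw [Matrix.mul_assoc, Matrix.mul_apply, dotProduct]
  refine Finset.sum_congr rfl fun k _ => ?_
  rw [Matrix.conjTranspose_apply, Matrix.mul_apply, Matrix.mulVec, dotProduct]
  rfl

/-- a measurement with positive semidefinite operators that is `α`-gentle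
on all pure states is `α`-gentle on all (possibly mixed) quantum states. -/
theorem gentle_of_gentle_on_pure {d : ℕ} {Y : Type*} [Fintype Y]
    (α : ℝ) (hα0 : 0 ≤ α) (hα1 : α ≤ 1)
    (M : Y → Matrix (Fin d) (Fin d) ℂ)
    (hcomp : ∑ y, (M y)ᴴ * M y = 1)
    (hpos : ∀ y, (M y).PosSemidef)
    (hpure : ∀ ψ : Fin d → ℂ, (∑ i, ‖ψ i‖ ^ 2 = 1) →
      ∀ y, 0 < outProb (M y) (vecMulVec ψ (star ψ)) →
        traceDist (vecMulVec ψ (star ψ)) (postState (M y) (vecMulVec ψ (star ψ))) ≤ α) :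
    ∀ ρ : Matrix (Fin d) (Fin d) ℂ, IsState ρ → ∀ y, 0 < outProb (M y) ρ →
      traceDist ρ (postState (M y) ρ) ≤ α := by
  classical
  intro ρ hρ y hq
  set N : Matrix (Fin d) (Fin d) ℂ := M y with hN
  obtain ⟨T, hT⟩ : ∃ T' : Matrix (Fin d) (Fin d) ℂ, T' = Nᴴ * N := ⟨_, rfl⟩
  obtain ⟨q, hqdef⟩ : ∃ q' : ℝ, q' = outProb N ρ := ⟨_, rfl⟩
  have hq0 : 0 < q := by rw [hqdef]; exact hq
  have hTh : T.IsHermitian := by rw [hT]; exact Matrix.isHermitian_conjTranspose_mul_self N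
  have hρherm : ρ.IsHermitian := hρ.1.1
  obtain ⟨B, hBB, hBh⟩ : ∃ B : Matrix (Fin d) (Fin d) ℂ, B * B = ρ ∧ Bᴴ = B :=
    open MatrixOrder in
    ⟨CFC.sqrt ρ, CFC.sqrt_mul_sqrt_self ρ hρ.1.nonneg, (CFC.sqrt_nonneg ρ).posSemidef.1⟩
  have hqre : q = ((ρ * T).trace).re := by
    rw [hqdef]
    simp only [outProb]
    rw [hT]
  have hBTB : (B * T * B).IsHermitian := by
    have h := Matrix.isHermitian_conjTranspose_mul_mul B hTh
    rwa [hBh] at h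
  have htrBTB : (B * T * B).trace = (ρ * T).trace := by
    rw [Matrix.trace_mul_cycle, hBB]
  have htrρT : (ρ * T).trace = (q : ℂ) := by
    rw [hqre, ← htrBTB]
    exact herm_trace_real hBTB
  -- the matrix C and the unitary V
  set C : Matrix (Fin d) (Fin d) ℂ := B * (T - (q : ℂ) • 1) * B with hC
  have hsubh : (T - (q : ℂ) • 1).IsHermitian := by
    show (T - (q : ℂ) • 1)ᴴ = _
    rw [Matrix.conjTranspose_sub, hTh.eq, Matrix.conjTranspose_smul, Matrix.conjTranspose_one,
      Complex.star_def, Complex.conj_ofReal]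
  have hCherm : C.IsHermitian := by
    have h := Matrix.isHermitian_conjTranspose_mul_mul B hsubh
    rwa [hBh] at h
  have hCtr : C.trace = 0 := by
    have hCeq : C = B * T * B - (q : ℂ) • ρ := by
      rw [hC, Matrix.mul_sub, Matrix.sub_mul, Matrix.mul_smul, Matrix.mul_one,
        Matrix.smul_mul, hBB]
    rw [hCeq, Matrix.trace_sub, Matrix.trace_smul, htrBTB, htrρT, hρ.2]
    simp
  obtain ⟨V, hV, hdiag⟩ := exists_unitary_diagZero hCherm hCtr
  set W : Matrix (Fin d) (Fin d) ℂ := B * V with hW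
  have hWH : Wᴴ = Vᴴ * B := by rw [hW, Matrix.conjTranspose_mul, hBh]
  have hWW : W * Wᴴ = ρ := by
    rw [hW, hWH]
    calc B * V * (Vᴴ * B) = B * (V * Vᴴ) * B := by noncomm_ring
      _ = ρ := by rw [hV, Matrix.mul_one, hBB]
  -- columns, weights
  set p : Fin d → ℝ := fun i => ∑ k, ‖W k i‖ ^ 2 with hp
  have hpnn : ∀ i, 0 ≤ p i := fun i => Finset.sum_nonneg fun k _ => sq_nonneg _
  have hWWdiag : ∀ i, (Wᴴ * W) i i = ((p i : ℝ) : ℂ) := by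
    intro i
    rw [Matrix.mul_apply, hp]
    rw [Complex.ofReal_sum]
    refine Finset.sum_congr rfl fun k _ => ?_
    rw [Matrix.conjTranspose_apply, Complex.star_def, Complex.sq_norm,
      ← Complex.normSq_eq_conj_mul_self]
  have hpsum : ∑ i, p i = 1 := by
    have h1 : (Wᴴ * W).trace = (1 : ℂ) := by
      rw [Matrix.trace_mul_comm, hWW, hρ.2]
    rw [Matrix.trace] at h1
    have h2 : ∑ i, ((p i : ℝ) : ℂ) = 1 := by
      rw [← h1]
      exact Finset.sum_congr rfl fun i _ => (hWWdiag i).symm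
    rw [← Complex.ofReal_sum] at h2
    exact_mod_cast h2
  have hTdiag : ∀ i, (Wᴴ * T * W) i i = (q : ℂ) * ((p i : ℝ) : ℂ) := by
    intro i
    have h := hdiag i
    have hrw : Vᴴ * C * V = Wᴴ * T * W - (q : ℂ) • (Wᴴ * W) := by
      have step1 : Vᴴ * C * V = Wᴴ * (T - (q : ℂ) • 1) * W := by
        rw [hC, hWH, hW]
        noncomm_ring
      have step2 : Wᴴ * (T - (q : ℂ) • 1) * W = Wᴴ * T * W - (q : ℂ) • (Wᴴ * W) := by
        rw [Matrix.mul_sub, Matrix.sub_mul, Matrix.mul_smul, Matrix.mul_one, Matrix.smul_mul]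
      rw [step1, step2]
    rw [hrw, Matrix.sub_apply, Matrix.smul_apply, hWWdiag i, sub_eq_zero] at h
    rw [h, smul_eq_mul]
  -- normalized columns
  set c : Fin d → ℂ := fun i => (((Real.sqrt (p i))⁻¹ : ℝ) : ℂ) with hc
  set ψ : Fin d → Fin d → ℂ := fun i k => c i * W k i with hψ
  set ρs : Fin d → Matrix (Fin d) (Fin d) ℂ := fun i => vecMulVec (ψ i) (star (ψ i)) with hρs
  have hφzero : ∀ i, p i = 0 → ∀ k, W k i = 0 := by
    intro i h k
    have h2 : ∀ j ∈ Finset.univ, (0:ℝ) ≤ ‖W j i‖ ^ 2 := fun j _ => sq_nonneg _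
    have h3 : ‖W k i‖ ^ 2 = 0 := by
      refine (Finset.sum_eq_zero_iff_of_nonneg h2).mp ?_ k (Finset.mem_univ k)
      have h4 := h
      simp only [hp] at h4
      exact h4
    exact norm_eq_zero.mp (sq_eq_zero_iff.mp h3)
  have hcc : ∀ i, p i ≠ 0 → c i * star (c i) = (((p i)⁻¹ : ℝ) : ℂ) := by
    intro i hpi
    have hps : 0 < p i := lt_of_le_of_ne (hpnn i) (Ne.symm hpi)
    rw [hc]
    rw [Complex.star_def, Complex.conj_ofReal, ← Complex.ofReal_mul, ← mul_inv,
      Real.mul_self_sqrt hps.le]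
  have hppinv : ∀ i, p i ≠ 0 → ((p i : ℝ) : ℂ) * (((p i)⁻¹ : ℝ) : ℂ) = 1 := by
    intro i hpi
    rw [← Complex.ofReal_mul, mul_inv_cancel₀ hpi, Complex.ofReal_one]
  have hcol : ∀ i, vecMulVec (fun k => W k i) (star (fun k => W k i)) = ((p i : ℝ) : ℂ) • ρs i := by
    intro i
    by_cases hpi : p i = 0
    · have hz : (fun k => W k i) = (0 : Fin d → ℂ) := funext fun k => hφzero i hpi k
      rw [hz, hpi]
      ext j k
      simp [Matrix.vecMulVec_apply, Matrix.smul_apply]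
    · ext j k
      rw [Matrix.smul_apply, hρs]
      simp only [Matrix.vecMulVec_apply, Pi.star_apply, hψ, smul_eq_mul]
      have expand : ((p i : ℝ) : ℂ) * ((c i * W j i) * star (c i * W k i))
          = (((p i : ℝ) : ℂ) * (c i * star (c i))) * (W j i * star (W k i)) := by
        rw [star_mul']; ring
      rw [expand, hcc i hpi, hppinv i hpi, one_mul]
  have hρsum : ρ = ∑ i, ((p i : ℝ) : ℂ) • ρs i := by
    rw [← hWW, ← sum_vecMulVec_col W]
    exact Finset.sum_congr rfl fun i _ => hcol i
  -- traces of pure pieces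
  have htrρsT : ∀ i, p i ≠ 0 → (ρs i * T).trace = (q : ℂ) := by
    intro i hpi
    have h1 : (((p i : ℝ) : ℂ) • (ρs i * T)).trace = (q : ℂ) * ((p i : ℝ) : ℂ) := by
      have h2 : ((p i : ℝ) : ℂ) • (ρs i * T) = (vecMulVec (fun k => W k i) (star (fun k => W k i))) * T := by
        rw [hcol i, Matrix.smul_mul]
      rw [h2, trace_vecMulVec_mul, ← entry_sandwich, hTdiag i]
    rw [Matrix.trace_smul, smul_eq_mul] at h1
    have hpc : ((p i : ℝ) : ℂ) ≠ 0 := by simpa using hpi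
    rw [mul_comm ((q : ℝ) : ℂ) _] at h1
    exact mul_left_cancel₀ hpc h1
  -- post states
  set σs : Fin d → Matrix (Fin d) (Fin d) ℂ := fun i => ((q : ℂ))⁻¹ • (N * ρs i * Nᴴ) with hσs
  have hσρ : ∀ i, p i ≠ 0 → postState N (ρs i) = σs i := by
    intro i hpi
    simp only [postState]
    rw [← hT, htrρsT i hpi]
  have hpzero : ∀ i, p i = 0 → ρs i = 0 := by
    intro i hpi
    ext j k
    simp only [hρs, Matrix.vecMulVec_apply, Pi.star_apply, hψ]
    rw [hφzero i hpi j]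
    simp
  have hσ : postState N ρ = ∑ i, ((p i : ℝ) : ℂ) • σs i := by
    simp only [postState]
    rw [← hT, htrρT]
    have h1 : N * ρ * Nᴴ = ∑ i, ((p i : ℝ) : ℂ) • (N * ρs i * Nᴴ) := by
      conv_lhs => rw [hρsum]
      rw [Matrix.mul_sum, Matrix.sum_mul]
      refine Finset.sum_congr rfl fun i _ => ?_
      rw [Matrix.mul_smul, Matrix.smul_mul]
    rw [h1, Finset.smul_sum]
    refine Finset.sum_congr rfl fun i _ => ?_
    simp only [hσs]
    rw [smul_comm]
  -- hermitian pieces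
  have hρsherm : ∀ i, (ρs i).IsHermitian := fun i => vecMulVec_herm (ψ i)
  have hσsherm : ∀ i, (σs i).IsHermitian := by
    intro i
    show (σs i)ᴴ = σs i
    rw [hσs, Matrix.conjTranspose_smul, Matrix.conjTranspose_mul, Matrix.conjTranspose_mul,
      Matrix.conjTranspose_conjTranspose, (hρsherm i).eq]
    congr 1
    rw [star_inv₀, Complex.star_def, Complex.conj_ofReal]
    rw [Matrix.mul_assoc]
  have hDherm : ∀ i, (ρs i - σs i).IsHermitian := fun i => (hρsherm i).sub (hσsherm i)
  -- pure-state bound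
  have hqpos : 0 < q := hq0
  have hpurebound : ∀ i, p i ≠ 0 → ∑ j, |(hDherm i).eigenvalues j| ≤ 2 * α := by
    intro i hpi
    have hnorm : ∑ k, ‖ψ i k‖ ^ 2 = 1 := by
      have hps : 0 < p i := lt_of_le_of_ne (hpnn i) (Ne.symm hpi)
      have h1 : ∀ k, ‖ψ i k‖ ^ 2 = (p i)⁻¹ * ‖W k i‖ ^ 2 := by
        intro k
        simp only [hψ, hc, norm_mul, Complex.norm_real, Real.norm_eq_abs, mul_pow]
        rw [abs_of_nonneg (by positivity : (0:ℝ) ≤ (Real.sqrt (p i))⁻¹), ← Real.sqrt_inv,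
          Real.sq_sqrt (by positivity : (0:ℝ) ≤ (p i)⁻¹)]
      rw [Finset.sum_congr rfl fun k _ => h1 k, ← Finset.mul_sum]
      have h5 : ∑ k, ‖W k i‖ ^ 2 = p i := by simp only [hp]
      rw [h5]
      exact inv_mul_cancel₀ hpi
    have hout : 0 < outProb N (ρs i) := by
      have h6 : outProb N (ρs i) = q := by
        simp only [outProb]
        rw [← hT, htrρsT i hpi, Complex.ofReal_re]
      rw [h6]; exact hqpos
    have h := hpure (ψ i) hnorm y (by rw [← hN]; exact hout)
    rw [← hN] at h
    have hρs_eq : vecMulVec (ψ i) (star (ψ i)) = ρs i := by simp only [hρs]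
    rw [hρs_eq, hσρ i hpi] at h
    simp only [traceDist] at h
    rw [dif_pos (hDherm i)] at h
    linarith
  -- Jordan decompositions
  have hjordan : ∀ i, ∃ P Q : Matrix (Fin d) (Fin d) ℂ, P.PosSemidef ∧ Q.PosSemidef ∧
      (ρs i - σs i) = P - Q ∧ ((P + Q).trace).re = ∑ j, |(hDherm i).eigenvalues j| :=
    fun i => exists_jordan (hDherm i)
  choose Pm Qm hPm hQm hPQm htm using hjordan
  set Pt : Matrix (Fin d) (Fin d) ℂ := ∑ i, ((p i : ℝ) : ℂ) • Pm i with hPt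
  set Qt : Matrix (Fin d) (Fin d) ℂ := ∑ i, ((p i : ℝ) : ℂ) • Qm i with hQt
  have hPtpsd : Pt.PosSemidef :=
    psd_sum _ _ fun i _ => psd_smul (hPm i) (hpnn i)
  have hQtpsd : Qt.PosSemidef :=
    psd_sum _ _ fun i _ => psd_smul (hQm i) (hpnn i)
  have hdec : ρ - postState N ρ = Pt - Qt := by
    rw [hσ]
    conv_lhs => rw [hρsum]
    rw [hPt, hQt, ← Finset.sum_sub_distrib, ← Finset.sum_sub_distrib]
    refine Finset.sum_congr rfl fun i _ => ?_
    rw [← smul_sub, ← smul_sub, hPQm i]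
  have hΔ : (ρ - postState N ρ).IsHermitian := by
    rw [hdec]
    exact hPtpsd.1.sub hQtpsd.1
  simp only [traceDist]
  rw [dif_pos hΔ]
  have hb := sum_abs_eigenvalues_le hΔ hPtpsd hQtpsd hdec
  have htrPQ : ((Pt + Qt).trace).re ≤ 2 * α := by
    have h1 : Pt + Qt = ∑ i, ((p i : ℝ) : ℂ) • (Pm i + Qm i) := by
      rw [hPt, hQt, ← Finset.sum_add_distrib]
      exact Finset.sum_congr rfl fun i _ => (smul_add _ _ _).symm
    have h2 : ((Pt + Qt).trace).re = ∑ i, p i * ((Pm i + Qm i).trace).re := by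
      rw [h1, Matrix.trace_sum, Complex.re_sum]
      refine Finset.sum_congr rfl fun i _ => ?_
      rw [Matrix.trace_smul, smul_eq_mul, Complex.re_ofReal_mul]
    rw [h2]
    calc ∑ i, p i * ((Pm i + Qm i).trace).re ≤ ∑ i, p i * (2 * α) := by
          refine Finset.sum_le_sum fun i _ => ?_
          by_cases hpi : p i = 0
          · rw [hpi]; simp
          · refine mul_le_mul_of_nonneg_left ?_ (hpnn i)
            rw [htm i]
            exact hpurebound i hpi
      _ = 2 * α := by rw [← Finset.sum_mul, hpsum, one_mul]
  linarith
end

section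
/- Let α ∈ [0, 1/2) and let M = (M_y)_{y ∈ Y} be a measurement on ℂ^d that is α-gentle on all quantum states on ℂ^d. Then M is δ-quantum-differentially-private on all quantum states on ℂ^d with δ = 2·log((1+2α)/(1−2α)); that is, for all states ρ1, ρ2 and all outcomes y, Tr(ρ1 M_y† M_y) ≤ ((1+2α)/(1−2α))² · Tr(ρ2 M_y† M_y). -/
open scoped BigOperators ComplexOrder
open Matrix

namespace GentleAux

noncomputable section

variable {d : ℕ}

/-- Sum of squared norms of the entries of a vector. -/
def nsq (x : Fin d → ℂ) : ℝ := ∑ i, Complex.normSq (x i)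

lemma nsq_nonneg (x : Fin d → ℂ) : 0 ≤ nsq x :=
  Finset.sum_nonneg fun _ _ => Complex.normSq_nonneg _

lemma conj_dot (x y : Fin d → ℂ) : (starRingEnd ℂ) (star x ⬝ᵥ y) = star y ⬝ᵥ x := by
  simp [dotProduct, map_sum, mul_comm]

lemma dot_self_eq_nsq (x : Fin d → ℂ) : star x ⬝ᵥ x = (nsq x : ℂ) := by
  rw [nsq, Complex.ofReal_sum]
  refine Finset.sum_congr rfl fun i _ => ?_
  simp [Complex.normSq_eq_conj_mul_self]

lemma nsq_eq_zero_iff {x : Fin d → ℂ} : nsq x = 0 ↔ x = 0 := by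
  constructor
  · intro h
    funext i
    have := (Finset.sum_eq_zero_iff_of_nonneg
      (fun i _ => Complex.normSq_nonneg (x i))).mp h i (Finset.mem_univ i)
    simpa using this
  · intro h; simp [h, nsq]

lemma nsq_smul_real (r : ℝ) (x : Fin d → ℂ) : nsq ((r : ℂ) • x) = r ^ 2 * nsq x := by
  simp [nsq, Complex.normSq_mul, Finset.mul_sum, sq]

/-- The pure state associated to a vector. -/
def pure (ψ : Fin d → ℂ) : Matrix (Fin d) (Fin d) ℂ := vecMulVec ψ (star ψ)

lemma pure_mulVec (ψ x : Fin d → ℂ) : pure ψ *ᵥ x = (star ψ ⬝ᵥ x) • ψ := by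
  funext i
  simp only [mulVec, dotProduct, pure, vecMulVec_apply, Pi.smul_apply, smul_eq_mul,
    Finset.sum_mul]
  exact Finset.sum_congr rfl fun j _ => by ring

lemma pure_isHermitian (ψ : Fin d → ℂ) : (pure ψ).IsHermitian := by
  show (pure ψ)ᴴ = pure ψ
  ext i j
  simp [pure, vecMulVec_apply, conjTranspose_apply, mul_comm]

lemma pure_posSemidef (ψ : Fin d → ℂ) : (pure ψ).PosSemidef := by
  refine PosSemidef.of_dotProduct_mulVec_nonneg (pure_isHermitian ψ) fun x => ?_
  rw [pure_mulVec, dotProduct_smul, smul_eq_mul, ← conj_dot ψ x, Complex.mul_conj]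
  exact_mod_cast Complex.normSq_nonneg _

lemma trace_pure (ψ : Fin d → ℂ) : (pure ψ).trace = (nsq ψ : ℂ) := by
  rw [← dot_self_eq_nsq]
  simp [Matrix.trace, Matrix.diag, pure, vecMulVec_apply, dotProduct, mul_comm]

lemma trace_pure_mul (ψ : Fin d → ℂ) (B : Matrix (Fin d) (Fin d) ℂ) :
    (pure ψ * B).trace = star ψ ⬝ᵥ (B *ᵥ ψ) := by
  simp only [Matrix.trace, Matrix.diag, Matrix.mul_apply, pure, vecMulVec_apply, dotProduct,
    mulVec, Finset.mul_sum]
  rw [Finset.sum_comm]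
  exact Finset.sum_congr rfl fun j _ => Finset.sum_congr rfl fun i _ => by
    simp [Pi.star_apply]; ring

lemma dot_consq (N : Matrix (Fin d) (Fin d) ℂ) (x : Fin d → ℂ) :
    star x ⬝ᵥ ((Nᴴ * N) *ᵥ x) = (nsq (N *ᵥ x) : ℂ) := by
  rw [← mulVec_mulVec, dotProduct_mulVec, ← star_mulVec, dot_self_eq_nsq]

lemma outProb_pure (N : Matrix (Fin d) (Fin d) ℂ) (ψ : Fin d → ℂ) :
    outProb N (pure ψ) = nsq (N *ᵥ ψ) := by
  rw [outProb, trace_pure_mul, dot_consq, Complex.ofReal_re]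

lemma conjmul_pure (N : Matrix (Fin d) (Fin d) ℂ) (ψ : Fin d → ℂ) :
    N * pure ψ * Nᴴ = pure (N *ᵥ ψ) := by
  ext i j
  show (N * pure ψ * Nᴴ) i j = (N *ᵥ ψ) i * star ((N *ᵥ ψ) j)
  simp only [mulVec, dotProduct, Complex.star_def, map_sum]
  rw [Finset.sum_mul_sum]
  simp only [Matrix.mul_apply, pure, vecMulVec_apply, conjTranspose_apply, Finset.sum_mul]
  rw [Finset.sum_comm]
  refine Finset.sum_congr rfl fun k _ => Finset.sum_congr rfl fun l _ => ?_
  simp only [Pi.star_apply, Complex.star_def, _root_.map_mul]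
  ring

lemma postState_pure (N : Matrix (Fin d) (Fin d) ℂ) (ψ : Fin d → ℂ) :
    postState N (pure ψ) = ((nsq (N *ᵥ ψ) : ℂ))⁻¹ • pure (N *ᵥ ψ) := by
  rw [postState, trace_pure_mul, dot_consq, conjmul_pure]

lemma isState_pure {ψ : Fin d → ℂ} (h : nsq ψ = 1) : IsState (pure ψ) :=
  ⟨pure_posSemidef ψ, by rw [trace_pure, h, Complex.ofReal_one]⟩

/-- Cauchy-Schwarz. -/
lemma normSq_dot_le (x y : Fin d → ℂ) :
    Complex.normSq (star x ⬝ᵥ y) ≤ nsq x * nsq y := by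
  have h := norm_inner_le_norm (𝕜 := ℂ)
    ((WithLp.equiv 2 (Fin d → ℂ)).symm x) ((WithLp.equiv 2 (Fin d → ℂ)).symm y)
  have e : inner ℂ ((WithLp.equiv 2 (Fin d → ℂ)).symm x) ((WithLp.equiv 2 (Fin d → ℂ)).symm y)
      = star x ⬝ᵥ y := by
    rw [EuclideanSpace.inner_eq_star_dotProduct]; exact dotProduct_comm _ _
  rw [e] at h
  have hn : ∀ z : Fin d → ℂ, ‖(WithLp.equiv 2 (Fin d → ℂ)).symm z‖ ^ 2 = nsq z := by
    intro z
    rw [EuclideanSpace.norm_eq, Real.sq_sqrt (by positivity)]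
    refine Finset.sum_congr rfl fun i _ => ?_
    simp [Complex.sq_norm]
  have h2 : ‖star x ⬝ᵥ y‖ ^ 2 ≤ (‖(WithLp.equiv 2 (Fin d → ℂ)).symm x‖ *
      ‖(WithLp.equiv 2 (Fin d → ℂ)).symm y‖) ^ 2 :=
    pow_le_pow_left₀ (norm_nonneg _) h 2
  rw [mul_pow, hn, hn] at h2
  calc Complex.normSq (star x ⬝ᵥ y) = ‖star x ⬝ᵥ y‖ ^ 2 := by
        rw [Complex.sq_norm]
    _ ≤ nsq x * nsq y := h2

/-- Key spectral estimate: quadratic form of a traceless Hermitian difference is at most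
the trace distance times the norm of the vector. -/
lemma quadform_le_traceDist (ρ σ : Matrix (Fin d) (Fin d) ℂ)
    (h : (ρ - σ).IsHermitian) (htr : (ρ - σ).trace = 0) (χ : Fin d → ℂ) :
    (star χ ⬝ᵥ ((ρ - σ) *ᵥ χ)).re ≤ traceDist ρ σ * nsq χ := by
  have hV : ((h.eigenvectorUnitary : Matrix (Fin d) (Fin d) ℂ)) ∈
      Matrix.unitaryGroup (Fin d) ℂ := h.eigenvectorUnitary.2
  set V : Matrix (Fin d) (Fin d) ℂ := (h.eigenvectorUnitary : Matrix (Fin d) (Fin d) ℂ) with hVdef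
  set lam : Fin d → ℝ := h.eigenvalues with hlam
  set y : Fin d → ℂ := star V *ᵥ χ with hy
  have hdecomp : ρ - σ = V * Matrix.diagonal (RCLike.ofReal ∘ lam) * star V :=
    h.spectral_theorem
  have hstary : star y = star χ ᵥ* V := by
    rw [hy, star_mulVec, ← Matrix.star_eq_conjTranspose, star_star]
  -- the quadratic form in eigencoordinates
  have h1 : star χ ⬝ᵥ ((ρ - σ) *ᵥ χ) = ∑ i, (lam i : ℂ) * (Complex.normSq (y i) : ℂ) := by
    rw [hdecomp, ← mulVec_mulVec, ← mulVec_mulVec, dotProduct_mulVec, ← hstary]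
    simp only [dotProduct, mulVec_diagonal, ← hy, Function.comp_apply]
    refine Finset.sum_congr rfl fun i _ => ?_
    rw [Pi.star_apply, Complex.star_def,
      show (RCLike.ofReal (lam i) : ℂ) = ((lam i : ℝ) : ℂ) from rfl,
      Complex.normSq_eq_conj_mul_self]
    ring
  -- norms agree
  have h2 : nsq y = nsq χ := by
    have : star y ⬝ᵥ y = star χ ⬝ᵥ χ := by
      rw [hstary, hy, ← dotProduct_mulVec, mulVec_mulVec,
        (Matrix.mem_unitaryGroup_iff).mp hV, one_mulVec]
    have := this
    rw [dot_self_eq_nsq, dot_self_eq_nsq] at this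
    exact_mod_cast this
  -- eigenvalues sum to zero
  have h3 : ∑ i, lam i = 0 := by
    have ht : (ρ - σ).trace = ∑ i, (lam i : ℂ) := by
      conv_lhs => rw [hdecomp]
      rw [Matrix.trace_mul_cycle, (Matrix.mem_unitaryGroup_iff').mp hV, one_mul,
        trace_diagonal]
      rfl
    rw [htr] at ht
    exact_mod_cast ht.symm
  have h4 : traceDist ρ σ = (∑ i, |lam i|) / 2 := by
    rw [traceDist, dif_pos h]
  -- put it together
  have h5 : (star χ ⬝ᵥ ((ρ - σ) *ᵥ χ)).re = ∑ i, lam i * Complex.normSq (y i) := by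
    rw [h1, Complex.re_sum]
    refine Finset.sum_congr rfl fun i _ => ?_
    rw [← Complex.ofReal_mul, Complex.ofReal_re]
  rw [h5, h4]
  have hterm : ∀ i, Complex.normSq (y i) ≤ nsq χ := by
    intro i
    rw [← h2]
    exact Finset.single_le_sum (fun j _ => Complex.normSq_nonneg (y j)) (Finset.mem_univ i)
  calc ∑ i, lam i * Complex.normSq (y i)
      ≤ ∑ i, max (lam i) 0 * Complex.normSq (y i) :=
        Finset.sum_le_sum fun i _ =>
          mul_le_mul_of_nonneg_right (le_max_left _ _) (Complex.normSq_nonneg _)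
    _ ≤ ∑ i, max (lam i) 0 * nsq χ :=
        Finset.sum_le_sum fun i _ =>
          mul_le_mul_of_nonneg_left (hterm i) (le_max_right _ _)
    _ = (∑ i, max (lam i) 0) * nsq χ := by rw [Finset.sum_mul]
    _ = (∑ i, |lam i|) / 2 * nsq χ := by
        congr 1
        have hmx : ∀ a : ℝ, max a 0 = (|a| + a) / 2 := by
          intro a
          rcases le_total a 0 with ha | ha
          · rw [max_eq_right ha, abs_of_nonpos ha]; ring
          · rw [max_eq_left ha, abs_of_nonneg ha]; ring
        rw [Finset.sum_congr rfl fun i _ => hmx (lam i), ← Finset.sum_div,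
          Finset.sum_add_distrib, h3, add_zero]


/-- Gentleness forces high fidelity on (unit-norm) pure states. -/
lemma fidelity_of_gentle {Y : Type*} {α : ℝ} {M : Y → Matrix (Fin d) (Fin d) ℂ}
    (hα0 : 0 ≤ α) (hα : α < 1/2) (hg : IsGentle M α) (y : Y) (ψ : Fin d → ℂ)
    (hψ : nsq ψ = 1) (hp : 0 < nsq (M y *ᵥ ψ)) :
    (1 - α ^ 2) * nsq (M y *ᵥ ψ) ≤ Complex.normSq (star ψ ⬝ᵥ (M y *ᵥ ψ)) := by
  set N := M y with hN
  set w : Fin d → ℂ := N *ᵥ ψ with hw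
  set p : ℝ := nsq w with hpdef
  set c : ℂ := star ψ ⬝ᵥ w with hc
  have hp0 : p ≠ 0 := ne_of_gt hp
  have hpC : (p : ℂ) ≠ 0 := Complex.ofReal_ne_zero.mpr hp0
  have hst : IsState (pure ψ) := isState_pure hψ
  have hout : 0 < outProb N (pure ψ) := by rw [outProb_pure]; exact hp
  have htd : traceDist (pure ψ) (postState N (pure ψ)) ≤ α := hg (pure ψ) hst y hout
  set σ := postState N (pure ψ) with hσ
  have hσeq : σ = ((p : ℂ))⁻¹ • pure w := postState_pure N ψ
  have hherm : (pure ψ - σ).IsHermitian := by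
    have h2 : σ.IsHermitian := by
      show σᴴ = σ
      rw [hσeq, conjTranspose_smul, show (pure w)ᴴ = pure w from pure_isHermitian w]
      congr 1
      rw [← Complex.ofReal_inv, Complex.star_def, Complex.conj_ofReal]
    exact (pure_isHermitian ψ).sub h2
  have htrz : (pure ψ - σ).trace = 0 := by
    rw [Matrix.trace_sub, trace_pure, hψ, hσeq, Matrix.trace_smul, trace_pure, ← hpdef,
      Complex.ofReal_one, smul_eq_mul, inv_mul_cancel₀ hpC, sub_self]
  have hquad : ∀ χ : Fin d → ℂ, star χ ⬝ᵥ ((pure ψ - σ) *ᵥ χ)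
      = (Complex.normSq (star ψ ⬝ᵥ χ) : ℂ) - (p : ℂ)⁻¹ * (Complex.normSq (star w ⬝ᵥ χ) : ℂ) := by
    intro χ
    have e1 : ((Complex.normSq (star ψ ⬝ᵥ χ) : ℝ) : ℂ)
        = (starRingEnd ℂ) (star ψ ⬝ᵥ χ) * (star ψ ⬝ᵥ χ) := Complex.normSq_eq_conj_mul_self
    have e2 : ((Complex.normSq (star w ⬝ᵥ χ) : ℝ) : ℂ)
        = (starRingEnd ℂ) (star w ⬝ᵥ χ) * (star w ⬝ᵥ χ) := Complex.normSq_eq_conj_mul_self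
    rw [Matrix.sub_mulVec, dotProduct_sub, hσeq, Matrix.smul_mulVec, dotProduct_smul,
      pure_mulVec, pure_mulVec, dotProduct_smul, dotProduct_smul, smul_eq_mul, smul_eq_mul,
      smul_eq_mul, ← conj_dot ψ χ, ← conj_dot w χ, e1, e2]
    ring
  by_cases hc0 : c = 0
  · exfalso
    have h1 := quadform_le_traceDist (pure ψ) σ hherm htrz ψ
    have h2 : star w ⬝ᵥ ψ = 0 := by rw [← conj_dot ψ w, ← hc, hc0, map_zero]
    rw [hquad ψ, dot_self_eq_nsq, hψ, h2] at h1
    simp only [Complex.ofReal_one, Complex.normSq_one, Complex.normSq_zero, Complex.ofReal_zero,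
      mul_zero, sub_zero, Complex.one_re, mul_one, hψ] at h1
    linarith
  · have hmle : Complex.normSq c ≤ p := by
      have := normSq_dot_le ψ w
      rw [hψ, one_mul] at this
      exact this
    set m : ℝ := Complex.normSq c with hmdef
    have hm0 : 0 < m := Complex.normSq_pos.mpr hc0
    have hmp1 : m / p ≤ 1 := (div_le_one hp).mpr hmle
    set G : ℝ := Real.sqrt (1 - m / p) with hG
    have hG0 : 0 ≤ G := Real.sqrt_nonneg _
    have hGsq : G ^ 2 = 1 - m / p := Real.sq_sqrt (by linarith)
    have hmG : m = (1 - G ^ 2) * p := by rw [hGsq]; field_simp; ring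
    have hG1 : G < 1 := by nlinarith [div_pos hm0 hp]
    by_cases hGα : G ≤ α
    · have : G ^ 2 ≤ α ^ 2 := pow_le_pow_left₀ hG0 hGα 2
      nlinarith [hp]
    · exfalso
      push_neg at hGα
      have hGpos : 0 < G := lt_of_le_of_lt hα0 hGα
      set χ : Fin d → ℂ := c • ψ + ((G : ℂ) - 1) • w with hχ
      have hψψ : star ψ ⬝ᵥ ψ = 1 := by rw [dot_self_eq_nsq, hψ, Complex.ofReal_one]
      have hww : star w ⬝ᵥ w = (p : ℂ) := dot_self_eq_nsq w
      have hwψ : star w ⬝ᵥ ψ = (starRingEnd ℂ) c := by rw [← conj_dot ψ w, hc]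
      have hcconj : c * (starRingEnd ℂ) c = (m : ℂ) := Complex.mul_conj c
      have hd1 : star ψ ⬝ᵥ χ = (G : ℂ) * c := by
        simp only [hχ, dotProduct_add, dotProduct_smul, smul_eq_mul, hψψ, ← hc]
        ring
      have hd2 : star w ⬝ᵥ χ = ((m + (G - 1) * p : ℝ) : ℂ) := by
        simp only [hχ, dotProduct_add, dotProduct_smul, smul_eq_mul, hww, hwψ]
        push_cast
        linear_combination hcconj
      have hχdot : star χ ⬝ᵥ χ = (((2 * G - 1) * m + (G - 1) ^ 2 * p : ℝ) : ℂ) := by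
        have hstz : star χ = (starRingEnd ℂ) c • star ψ + (starRingEnd ℂ) ((G : ℂ) - 1) • star w := by
          simp [hχ, star_add, star_smul, Complex.star_def]
        rw [hstz, add_dotProduct, smul_dotProduct, smul_dotProduct, hd1, hd2, smul_eq_mul,
          smul_eq_mul, map_sub, RingHom.map_one, Complex.conj_ofReal]
        push_cast
        linear_combination (G : ℂ) * hcconj
      have hnχ : nsq χ = (2 * G - 1) * m + (G - 1) ^ 2 * p := by
        have := hχdot
        rw [dot_self_eq_nsq] at this
        exact_mod_cast this
      have hqf := quadform_le_traceDist (pure ψ) σ hherm htrz χ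
      rw [hquad χ, hd1, hd2] at hqf
      have e : ((Complex.normSq ((G : ℂ) * c) : ℂ)
          - (p : ℂ)⁻¹ * (Complex.normSq ((m + (G - 1) * p : ℝ) : ℂ) : ℂ)).re
          = G ^ 2 * m - (m + (G - 1) * p) ^ 2 / p := by
        have e' : Complex.normSq ((G : ℂ) * c) = G ^ 2 * m := by
          rw [Complex.normSq_mul, Complex.normSq_ofReal, ← hmdef]; ring
        have e'' : Complex.normSq ((m + (G - 1) * p : ℝ) : ℂ) = (m + (G - 1) * p) ^ 2 := by
          rw [Complex.normSq_ofReal]; ring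
        rw [e', e'', ← Complex.ofReal_inv, ← Complex.ofReal_mul, ← Complex.ofReal_sub,
          Complex.ofReal_re]
        rw [div_eq_inv_mul]
      rw [e, hnχ] at hqf
      have htd2 : traceDist (pure ψ) σ * ((2 * G - 1) * m + (G - 1) ^ 2 * p)
          ≤ α * ((2 * G - 1) * m + (G - 1) ^ 2 * p) := by
        apply mul_le_mul_of_nonneg_right htd
        rw [← hnχ]; exact nsq_nonneg χ
      have hL : G ^ 2 * m - (m + (G - 1) * p) ^ 2 / p = 2 * p * G ^ 3 * (1 - G) := by
        rw [hmG]; field_simp; ring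
      have hR : (2 * G - 1) * m + (G - 1) ^ 2 * p = 2 * p * G ^ 2 * (1 - G) := by
        rw [hmG]; ring
      rw [hL, hR] at hqf
      rw [hR] at htd2
      have hfact : 0 < 2 * p * G ^ 2 * (1 - G) := by
        have := mul_pos (mul_pos (mul_pos (by norm_num : (0:ℝ) < 2) hp) (pow_pos hGpos 2))
          (sub_pos.mpr hG1)
        linarith [this]
      nlinarith [mul_lt_mul_of_pos_right hGα hfact, hqf, htd2]

/-- Scale-invariant form of the fidelity estimate. -/
lemma fidelity_of_gentle' {Y : Type*} {α : ℝ} {M : Y → Matrix (Fin d) (Fin d) ℂ}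
    (hα0 : 0 ≤ α) (hα : α < 1/2) (hg : IsGentle M α) (y : Y) (ψ : Fin d → ℂ)
    (hp : 0 < nsq (M y *ᵥ ψ)) :
    (1 - α ^ 2) * nsq (M y *ᵥ ψ) * nsq ψ ≤ Complex.normSq (star ψ ⬝ᵥ (M y *ᵥ ψ)) := by
  have hψ0 : ψ ≠ 0 := by
    rintro rfl
    rw [mulVec_zero] at hp
    simp [nsq] at hp
  have hn : 0 < nsq ψ :=
    lt_of_le_of_ne (nsq_nonneg ψ) fun h => hψ0 (nsq_eq_zero_iff.mp h.symm)
  set r : ℝ := (Real.sqrt (nsq ψ))⁻¹ with hr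
  have hr2 : r ^ 2 = (nsq ψ)⁻¹ := by
    rw [hr, ← Real.sqrt_inv, Real.sq_sqrt (inv_nonneg.mpr hn.le)]
  have h1 : nsq ((r : ℂ) • ψ) = 1 := by
    rw [nsq_smul_real, hr2, inv_mul_cancel₀ (ne_of_gt hn)]
  have h2 : M y *ᵥ ((r : ℂ) • ψ) = (r : ℂ) • (M y *ᵥ ψ) := mulVec_smul _ _ _
  have h3 : 0 < nsq (M y *ᵥ ((r : ℂ) • ψ)) := by
    rw [h2, nsq_smul_real]
    have : 0 < r ^ 2 := by rw [hr2]; positivity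
    positivity
  have h4 := fidelity_of_gentle hα0 hα hg y ((r : ℂ) • ψ) h1 h3
  rw [h2, nsq_smul_real] at h4
  have h5 : star ((r : ℂ) • ψ) ⬝ᵥ ((r : ℂ) • (M y *ᵥ ψ))
      = ((r ^ 2 : ℝ) : ℂ) * (star ψ ⬝ᵥ (M y *ᵥ ψ)) := by
    rw [star_smul, smul_dotProduct, dotProduct_smul, smul_eq_mul, smul_eq_mul,
      Complex.star_def, Complex.conj_ofReal]
    push_cast
    ring
  rw [h5, Complex.normSq_mul, Complex.normSq_ofReal, hr2] at h4
  have hn' : nsq ψ ≠ 0 := ne_of_gt hn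
  have h6 := mul_le_mul_of_nonneg_left h4 (mul_pos hn hn).le
  have e1 : nsq ψ * nsq ψ * ((1 - α ^ 2) * ((nsq ψ)⁻¹ * nsq (M y *ᵥ ψ)))
      = (1 - α ^ 2) * nsq (M y *ᵥ ψ) * nsq ψ := by field_simp
  have e2 : nsq ψ * nsq ψ * ((nsq ψ)⁻¹ * (nsq ψ)⁻¹
      * Complex.normSq (star ψ ⬝ᵥ (M y *ᵥ ψ)))
      = Complex.normSq (star ψ ⬝ᵥ (M y *ᵥ ψ)) := by field_simp
  rw [e1, e2] at h6
  exact h6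

/-- Bessel inequality for two orthonormal vectors. -/
lemma bessel_two {u v : Fin d → ℂ} (w : Fin d → ℂ) (huu : star u ⬝ᵥ u = 1)
    (hvv : star v ⬝ᵥ v = 1) (huv : star u ⬝ᵥ v = 0) :
    Complex.normSq (star u ⬝ᵥ w) + Complex.normSq (star v ⬝ᵥ w) ≤ nsq w := by
  set A : ℂ := star u ⬝ᵥ w with hA
  set B : ℂ := star v ⬝ᵥ w with hB
  set z : Fin d → ℂ := w - A • u - B • v with hz
  have hvu : star v ⬝ᵥ u = 0 := by rw [← conj_dot u v, huv, map_zero]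
  have hwu : star w ⬝ᵥ u = (starRingEnd ℂ) A := by rw [← conj_dot u w, hA]
  have hwv : star w ⬝ᵥ v = (starRingEnd ℂ) B := by rw [← conj_dot v w, hB]
  have hstz : star z = star w - (starRingEnd ℂ) A • star u - (starRingEnd ℂ) B • star v := by
    simp [hz, star_sub, star_smul, Complex.star_def]
  have key : (nsq z : ℂ) = (nsq w : ℂ) - (Complex.normSq A : ℂ) - (Complex.normSq B : ℂ) := by
    rw [← dot_self_eq_nsq z]
    nth_rewrite 1 [hstz]
    simp only [hz, sub_dotProduct, dotProduct_sub, smul_dotProduct, dotProduct_smul,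
      smul_eq_mul, huu, hvv, huv, hvu, hwu, hwv, ← hA, ← hB, dot_self_eq_nsq w]
    rw [← Complex.mul_conj A, ← Complex.mul_conj B]
    ring
  have key' : nsq z = nsq w - Complex.normSq A - Complex.normSq B := by exact_mod_cast key
  have h0 : 0 ≤ nsq z := nsq_nonneg z
  linarith

/-- The outcome probability on a state lies between the extreme eigenvalues of `NᴴN`. -/
lemma outProb_bounds (N : Matrix (Fin d) (Fin d) ℂ) (hE : (Nᴴ * N).IsHermitian)
    {ρ : Matrix (Fin d) (Fin d) ℂ} (hρ : IsState ρ) {lo hi : ℝ}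
    (hlo : ∀ i, lo ≤ hE.eigenvalues i) (hhi : ∀ i, hE.eigenvalues i ≤ hi) :
    lo ≤ outProb N ρ ∧ outProb N ρ ≤ hi := by
  have hV : ((hE.eigenvectorUnitary : Matrix (Fin d) (Fin d) ℂ)) ∈
      Matrix.unitaryGroup (Fin d) ℂ := hE.eigenvectorUnitary.2
  set V : Matrix (Fin d) (Fin d) ℂ := (hE.eigenvectorUnitary : Matrix (Fin d) (Fin d) ℂ) with hVdef
  set lam : Fin d → ℝ := hE.eigenvalues with hlam
  have hdecomp : Nᴴ * N = V * Matrix.diagonal (RCLike.ofReal ∘ lam) * star V :=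
    hE.spectral_theorem
  set B := star V * ρ * V with hB
  have htr : (ρ * (Nᴴ * N)).trace = ∑ i, B i i * (lam i : ℂ) := by
    calc (ρ * (Nᴴ * N)).trace
        = (ρ * V * Matrix.diagonal (RCLike.ofReal ∘ lam) * star V).trace := by
          rw [hdecomp, ← Matrix.mul_assoc, ← Matrix.mul_assoc]
      _ = (star V * (ρ * V * Matrix.diagonal (RCLike.ofReal ∘ lam))).trace := by
          rw [Matrix.trace_mul_comm]
      _ = (B * Matrix.diagonal (RCLike.ofReal ∘ lam)).trace := by
          rw [hB, Matrix.mul_assoc, Matrix.mul_assoc, Matrix.mul_assoc]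
      _ = ∑ i, B i i * (lam i : ℂ) := by
          simp only [Matrix.trace, Matrix.diag, Matrix.mul_diagonal, Function.comp_apply]
          rfl
  have hdiag : ∀ i, 0 ≤ (B i i).re := by
    intro i
    have hrepr : B i i = star (fun j => V j i) ⬝ᵥ (ρ *ᵥ fun j => V j i) := by
      simp only [hB, Matrix.mul_apply, mulVec, dotProduct, Matrix.star_apply,
        Pi.star_apply, Finset.mul_sum, Finset.sum_mul]
      rw [Finset.sum_comm]
      refine Finset.sum_congr rfl fun j _ => Finset.sum_congr rfl fun k _ => by ring
    rw [hrepr]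
    have := hρ.1.dotProduct_mulVec_nonneg fun j => V j i
    exact (Complex.le_def.mp this).1
  have hsum : ∑ i, (B i i).re = 1 := by
    have htrB : B.trace = 1 := by
      rw [hB, Matrix.trace_mul_cycle, (Matrix.mem_unitaryGroup_iff).mp hV, Matrix.one_mul]
      exact hρ.2
    have : (∑ i, B i i).re = (1 : ℂ).re := by
      rw [show (∑ i, B i i) = B.trace from rfl, htrB]
    rw [Complex.re_sum] at this
    simpa using this
  have hre : outProb N ρ = ∑ i, (B i i).re * lam i := by
    rw [outProb, htr, Complex.re_sum]
    refine Finset.sum_congr rfl fun i _ => ?_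
    rw [Complex.mul_re, Complex.ofReal_re, Complex.ofReal_im, mul_zero, sub_zero]
  constructor
  · rw [hre, ← one_mul lo, ← hsum, Finset.sum_mul]
    exact Finset.sum_le_sum fun i _ => mul_le_mul_of_nonneg_left (hlo i) (hdiag i)
  · rw [hre, ← one_mul hi, ← hsum, Finset.sum_mul]
    exact Finset.sum_le_sum fun i _ => mul_le_mul_of_nonneg_left (hhi i) (hdiag i)

/-- Final real-arithmetic step. -/
lemma real_final {α sa sb : ℝ} (hα0 : 0 ≤ α) (hα : α < 1/2) (hsa : 0 < sa) (hsb : 0 ≤ sb)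
    (h : ∀ s : ℝ, 0 ≤ s →
      (1 - α ^ 2) * (1 + s) * (sa ^ 2 + s * sb ^ 2) ≤ (sa + s * sb) ^ 2 + s * α ^ 2 * (sa + sb) ^ 2) :
    sa ^ 2 * (1 - 2 * α) ^ 2 ≤ sb ^ 2 * (1 + 2 * α) ^ 2 := by
  have hα2 : α ^ 2 < 1 / 4 := by nlinarith
  rcases eq_or_lt_of_le hsb with hb | hbpos
  · exfalso
    have h1 := h 1 zero_le_one
    rw [← hb] at h1
    nlinarith [h1, hsa, hα0]
  · have h1 := h (sa / sb) (div_pos hsa hbpos).le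
    have hb' : sb ≠ 0 := ne_of_gt hbpos
    have h2 : (sa - sb) ^ 2 ≤ 2 * α ^ 2 * (sa + sb) ^ 2 := by
      have hkey : (1 - α ^ 2) * sa * (sa + sb) ^ 2
          ≤ 4 * sa ^ 2 * sb + sa * α ^ 2 * (sa + sb) ^ 2 := by
        have h1' := mul_le_mul_of_nonneg_left h1 hbpos.le
        calc (1 - α ^ 2) * sa * (sa + sb) ^ 2
            = sb * ((1 - α ^ 2) * (1 + sa / sb) * (sa ^ 2 + sa / sb * sb ^ 2)) := by
              field_simp
              ring
          _ ≤ sb * ((sa + sa / sb * sb) ^ 2 + sa / sb * α ^ 2 * (sa + sb) ^ 2) := h1'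
          _ = 4 * sa ^ 2 * sb + sa * α ^ 2 * (sa + sb) ^ 2 := by
              field_simp
              ring_nf
      nlinarith [hkey, hsa, hbpos, mul_pos hsa hbpos, sq_nonneg (sa - sb), sq_nonneg (sa + sb)]
    have h3 : sa - sb ≤ 2 * α * (sa + sb) := by
      have hY : 0 ≤ 2 * α * (sa + sb) := by positivity
      nlinarith [h2, hY, sq_nonneg (sa - sb + 2 * α * (sa + sb))]
    have h5 : sa * (1 - 2 * α) ≤ sb * (1 + 2 * α) := by nlinarith [h3]
    have h4 : 0 ≤ sa * (1 - 2 * α) := by nlinarith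
    nlinarith [mul_self_le_mul_self h4 h5]

end

end GentleAux

open GentleAux

set_option maxHeartbeats 2000000

/-- an `α`-gentle measurement (`α < 1/2`) is
`2 log((1+2α)/(1−2α))`-quantum-differentially-private. -/
theorem dp_of_gentle {d : ℕ} {Y : Type*} [Fintype Y]
    (α : ℝ) (hα0 : 0 ≤ α) (hα : α < 1/2)
    (M : Y → Matrix (Fin d) (Fin d) ℂ)
    (hcomp : ∑ y, (M y)ᴴ * M y = 1)
    (hgentle : IsGentle M α) :
    ∀ ρ1 ρ2 : Matrix (Fin d) (Fin d) ℂ, IsState ρ1 → IsState ρ2 → ∀ y,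
      outProb (M y) ρ1 ≤ ((1 + 2*α) / (1 - 2*α)) ^ 2 * outProb (M y) ρ2 := by
  intro ρ1 ρ2 hρ1 hρ2 y
  classical
  have hd : Nonempty (Fin d) := by
    rcases Nat.eq_zero_or_pos d with h0 | hpos
    · exfalso
      have h1 := hρ1.2
      subst h0
      simp [Matrix.trace] at h1
    · exact ⟨⟨0, hpos⟩⟩
  have hPSD : ((M y)ᴴ * (M y)).PosSemidef := Matrix.posSemidef_conjTranspose_mul_self (M y)
  have hE : ((M y)ᴴ * (M y)).IsHermitian := hPSD.1
  obtain ⟨i0, -, hmax⟩ := Finset.exists_max_image (Finset.univ : Finset (Fin d))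
    hE.eigenvalues ⟨hd.some, Finset.mem_univ _⟩
  obtain ⟨j0, -, hmin⟩ := Finset.exists_min_image (Finset.univ : Finset (Fin d))
    hE.eigenvalues ⟨hd.some, Finset.mem_univ _⟩
  set a := hE.eigenvalues i0 with ha
  set b := hE.eigenvalues j0 with hb
  have hlamnn : ∀ i, 0 ≤ hE.eigenvalues i := fun i => hPSD.eigenvalues_nonneg i
  have ha0 : 0 ≤ a := hlamnn i0
  have hb0 : 0 ≤ b := hlamnn j0
  have h2α : (0:ℝ) < 1 - 2*α := by linarith
  have hbnd1 := outProb_bounds (M y) hE hρ1 (lo := b) (hi := a)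
    (fun i => hmin i (Finset.mem_univ i)) (fun i => hmax i (Finset.mem_univ i))
  have hbnd2 := outProb_bounds (M y) hE hρ2 (lo := b) (hi := a)
    (fun i => hmin i (Finset.mem_univ i)) (fun i => hmax i (Finset.mem_univ i))
  have key : a * (1 - 2*α)^2 ≤ b * (1 + 2*α)^2 := by
    rcases eq_or_lt_of_le ha0 with hA | hApos
    · rw [← hA, zero_mul]
      exact mul_nonneg hb0 (sq_nonneg _)
    rcases eq_or_ne i0 j0 with hij | hij
    · have hab : a = b := by rw [ha, hb, hij]
      rw [hab]
      nlinarith [mul_nonneg hb0 hα0]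
    -- main case: distinct max/min eigenvectors
    set u : Fin d → ℂ := ⇑(hE.eigenvectorBasis i0) with hu
    set v : Fin d → ℂ := ⇑(hE.eigenvectorBasis j0) with hv
    have horth := hE.eigenvectorBasis.orthonormal
    rw [orthonormal_iff_ite] at horth
    have hdd : ∀ k l : Fin d,
        star (⇑(hE.eigenvectorBasis k) : Fin d → ℂ) ⬝ᵥ (⇑(hE.eigenvectorBasis l) : Fin d → ℂ)
          = if k = l then 1 else 0 := fun k l => by
        rw [← horth k l, EuclideanSpace.inner_eq_star_dotProduct]; exact dotProduct_comm _ _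
    have huu : star u ⬝ᵥ u = 1 := by rw [hu]; simpa using hdd i0 i0
    have hvv : star v ⬝ᵥ v = 1 := by rw [hv]; simpa using hdd j0 j0
    have huv : star u ⬝ᵥ v = 0 := by rw [hu, hv]; simpa [hij] using hdd i0 j0
    have hvu : star v ⬝ᵥ u = 0 := by rw [hu, hv]; simpa [Ne.symm hij] using hdd j0 i0
    have hnu : nsq u = 1 := by
      have h := huu; rw [dot_self_eq_nsq] at h; exact_mod_cast h
    have hnv : nsq v = 1 := by
      have h := hvv; rw [dot_self_eq_nsq] at h; exact_mod_cast h
    have hsmul : ∀ (r : ℝ) (x : Fin d → ℂ), r • x = ((r : ℝ) : ℂ) • x := by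
      intro r x
      funext i
      simp [Pi.smul_apply, Complex.real_smul]
    have hEu : ((M y)ᴴ * (M y)) *ᵥ u = ((a : ℝ) : ℂ) • u := by
      have h := hE.mulVec_eigenvectorBasis i0
      rw [hsmul] at h
      exact h
    have hEv : ((M y)ᴴ * (M y)) *ᵥ v = ((b : ℝ) : ℂ) • v := by
      have h := hE.mulVec_eigenvectorBasis j0
      rw [hsmul] at h
      exact h
    have hw1 : nsq ((M y) *ᵥ u) = a := by
      have h := (dot_consq (M y) u).symm
      rw [hEu, dotProduct_smul, huu, smul_eq_mul, mul_one] at h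
      exact_mod_cast h
    have hw2 : nsq ((M y) *ᵥ v) = b := by
      have h := (dot_consq (M y) v).symm
      rw [hEv, dotProduct_smul, hvv, smul_eq_mul, mul_one] at h
      exact_mod_cast h
    set A' : ℂ := star u ⬝ᵥ ((M y) *ᵥ u) with hA'
    set B' : ℂ := star u ⬝ᵥ ((M y) *ᵥ v) with hB'
    set C' : ℂ := star v ⬝ᵥ ((M y) *ᵥ u) with hC'
    set D' : ℂ := star v ⬝ᵥ ((M y) *ᵥ v) with hD'
    have hupos : 0 < nsq ((M y) *ᵥ u) := by rw [hw1]; exact hApos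
    have hfidA := fidelity_of_gentle' hα0 hα hgentle y u hupos
    rw [hw1, hnu, mul_one, ← hA'] at hfidA
    have hbesA := bessel_two ((M y) *ᵥ u) huu hvv huv
    rw [hw1, ← hA', ← hC'] at hbesA
    have hCb : Complex.normSq C' ≤ α^2 * a := by linarith [hfidA, hbesA]
    have hAb : Complex.normSq A' ≤ a := by linarith [hbesA, Complex.normSq_nonneg C']
    have hDb : Complex.normSq D' ≤ b := by
      have h := normSq_dot_le v ((M y) *ᵥ v)
      rw [hnv, hw2, one_mul, ← hD'] at h
      exact h
    have hBb : Complex.normSq B' ≤ α^2 * b := by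
      rcases eq_or_lt_of_le hb0 with hb' | hbpos
      · have hz : (M y) *ᵥ v = 0 := nsq_eq_zero_iff.mp (by rw [hw2, ← hb'])
        have hB0 : B' = 0 := by rw [hB', hz, dotProduct_zero]
        rw [hB0, Complex.normSq_zero, ← hb']
        simp
      · have hvpos : 0 < nsq ((M y) *ᵥ v) := by rw [hw2]; exact hbpos
        have hfidD := fidelity_of_gentle' hα0 hα hgentle y v hvpos
        rw [hw2, hnv, mul_one, ← hD'] at hfidD
        have hbesD := bessel_two ((M y) *ᵥ v) hvv huu hvu
        rw [hw2, ← hD', ← hB'] at hbesD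
        linarith [hfidD, hbesD]
    set sa := Real.sqrt a with hsa
    set sb := Real.sqrt b with hsb
    have hsa2 : sa^2 = a := Real.sq_sqrt ha0
    have hsb2 : sb^2 = b := Real.sq_sqrt hb0
    have hsapos : 0 < sa := Real.sqrt_pos.mpr hApos
    have hsb0 : 0 ≤ sb := Real.sqrt_nonneg b
    have habs : ∀ (z : ℂ) (r : ℝ), 0 ≤ r → Complex.normSq z ≤ r^2 → ‖z‖ ≤ r := by
      intro z r hr hzr
      rw [Complex.norm_def]
      calc Real.sqrt (Complex.normSq z) ≤ Real.sqrt (r^2) := Real.sqrt_le_sqrt hzr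
        _ = r := by rw [Real.sqrt_sq hr]
    have haA : ‖A'‖ ≤ sa := habs _ _ hsapos.le (by rw [hsa2]; exact hAb)
    have haD : ‖D'‖ ≤ sb := habs _ _ hsb0 (by rw [hsb2]; exact hDb)
    have haC : ‖C'‖ ≤ α * sa :=
      habs _ _ (mul_nonneg hα0 hsapos.le) (by rw [mul_pow, hsa2]; exact hCb)
    have haB : ‖B'‖ ≤ α * sb :=
      habs _ _ (mul_nonneg hα0 hsb0) (by rw [mul_pow, hsb2]; exact hBb)
    have hfam : ∀ s : ℝ, 0 ≤ s →
        (1-α^2)*(1+s)*(sa^2+s*sb^2) ≤ (sa+s*sb)^2 + s*α^2*(sa+sb)^2 := by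
      intro s hs
      set t := Real.sqrt s with htdef
      have ht2 : t^2 = s := Real.sq_sqrt hs
      have ht0 : 0 ≤ t := Real.sqrt_nonneg s
      set ψp : Fin d → ℂ := u + (t:ℂ) • v with hψp
      set ψm : Fin d → ℂ := u - (t:ℂ) • v with hψm
      have hsp : star ψp = star u + (t:ℂ) • star v := by
        simp [hψp, star_add, star_smul, Complex.star_def, Complex.conj_ofReal]
      have hsm : star ψm = star u - (t:ℂ) • star v := by
        simp [hψm, star_sub, star_smul, Complex.star_def, Complex.conj_ofReal]
      have hnsqp : nsq ψp = 1 + s := by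
        have h : star ψp ⬝ᵥ ψp = ((1 + s : ℝ) : ℂ) := by
          rw [hsp, hψp]
          simp only [add_dotProduct, dotProduct_add, smul_dotProduct, dotProduct_smul,
            huu, hvv, huv, hvu, smul_eq_mul]
          push_cast [← ht2]
          ring
        rw [dot_self_eq_nsq] at h
        exact_mod_cast h
      have hnsqm : nsq ψm = 1 + s := by
        have h : star ψm ⬝ᵥ ψm = ((1 + s : ℝ) : ℂ) := by
          rw [hsm, hψm]
          simp only [sub_dotProduct, dotProduct_sub, smul_dotProduct, dotProduct_smul,
            huu, hvv, huv, hvu, smul_eq_mul]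
          push_cast [← ht2]
          ring
        rw [dot_self_eq_nsq] at h
        exact_mod_cast h
      have hMp : (M y) *ᵥ ψp = ((M y) *ᵥ u) + (t:ℂ) • ((M y) *ᵥ v) := by
        rw [hψp, mulVec_add, mulVec_smul]
      have hMm : (M y) *ᵥ ψm = ((M y) *ᵥ u) - (t:ℂ) • ((M y) *ᵥ v) := by
        rw [hψm, mulVec_sub, mulVec_smul]
      have hEp : ((M y)ᴴ * (M y)) *ᵥ ψp = ((a:ℝ):ℂ) • u + (t:ℂ) • (((b:ℝ):ℂ) • v) := by
        rw [hψp, mulVec_add, mulVec_smul, hEu, hEv]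
      have hEm : ((M y)ᴴ * (M y)) *ᵥ ψm = ((a:ℝ):ℂ) • u - (t:ℂ) • (((b:ℝ):ℂ) • v) := by
        rw [hψm, mulVec_sub, mulVec_smul, hEu, hEv]
      have hMp2 : nsq ((M y) *ᵥ ψp) = a + s * b := by
        have h := dot_consq (M y) ψp
        rw [hEp, hsp] at h
        simp only [add_dotProduct, dotProduct_add, smul_dotProduct, dotProduct_smul,
          huu, hvv, huv, hvu, smul_eq_mul] at h
        have h2 : ((a + s*b : ℝ) : ℂ) = (nsq ((M y) *ᵥ ψp) : ℂ) := by
          rw [← h]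
          push_cast [← ht2]
          ring
        exact_mod_cast h2.symm
      have hMm2 : nsq ((M y) *ᵥ ψm) = a + s * b := by
        have h := dot_consq (M y) ψm
        rw [hEm, hsm] at h
        simp only [sub_dotProduct, dotProduct_sub, smul_dotProduct, dotProduct_smul,
          huu, hvv, huv, hvu, smul_eq_mul] at h
        have h2 : ((a + s*b : ℝ) : ℂ) = (nsq ((M y) *ᵥ ψm) : ℂ) := by
          rw [← h]
          push_cast [← ht2]
          ring
        exact_mod_cast h2.symm
      have hppos : 0 < nsq ((M y) *ᵥ ψp) := by
        rw [hMp2]; linarith [mul_nonneg hs hb0]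
      have hmpos : 0 < nsq ((M y) *ᵥ ψm) := by
        rw [hMm2]; linarith [mul_nonneg hs hb0]
      have h1 := fidelity_of_gentle' hα0 hα hgentle y ψp hppos
      have h2 := fidelity_of_gentle' hα0 hα hgentle y ψm hmpos
      rw [hMp2, hnsqp] at h1
      rw [hMm2, hnsqm] at h2
      have hcp : star ψp ⬝ᵥ ((M y) *ᵥ ψp) = (A' + ((s:ℝ):ℂ)*D') + ((t:ℝ):ℂ)*(B'+C') := by
        rw [hMp, hsp, hA', hB', hC', hD']
        simp only [add_dotProduct, dotProduct_add, smul_dotProduct, dotProduct_smul,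
          smul_eq_mul]
        push_cast [← ht2]
        ring
      have hcm : star ψm ⬝ᵥ ((M y) *ᵥ ψm) = (A' + ((s:ℝ):ℂ)*D') - ((t:ℝ):ℂ)*(B'+C') := by
        rw [hMm, hsm, hA', hB', hC', hD']
        simp only [sub_dotProduct, dotProduct_sub, smul_dotProduct, dotProduct_smul,
          smul_eq_mul]
        push_cast [← ht2]
        ring
      rw [hcp] at h1
      rw [hcm] at h2
      have hpar : Complex.normSq ((A' + ((s:ℝ):ℂ)*D') + ((t:ℝ):ℂ)*(B'+C'))
          + Complex.normSq ((A' + ((s:ℝ):ℂ)*D') - ((t:ℝ):ℂ)*(B'+C'))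
          = 2*Complex.normSq (A' + ((s:ℝ):ℂ)*D') + 2*s*Complex.normSq (B'+C') := by
        simp only [Complex.normSq_apply, Complex.add_re, Complex.add_im, Complex.sub_re,
          Complex.sub_im, Complex.mul_re, Complex.mul_im, Complex.ofReal_re, Complex.ofReal_im]
        rw [← ht2]
        ring
      have hXb : Complex.normSq (A' + ((s:ℝ):ℂ)*D') ≤ (sa + s*sb)^2 := by
        have habs1 : ‖A' + ((s:ℝ):ℂ)*D'‖ ≤ sa + s*sb := by
          calc ‖A' + ((s:ℝ):ℂ)*D'‖
              ≤ ‖A'‖ + ‖((s:ℝ):ℂ)*D'‖ := norm_add_le _ _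
            _ = ‖A'‖ + s * ‖D'‖ := by
                rw [norm_mul, Complex.norm_real, Real.norm_eq_abs, abs_of_nonneg hs]
            _ ≤ sa + s*sb := add_le_add haA (mul_le_mul_of_nonneg_left haD hs)
        calc Complex.normSq (A' + ((s:ℝ):ℂ)*D') = ‖A' + ((s:ℝ):ℂ)*D'‖ ^ 2 :=
              (Complex.sq_norm _).symm
          _ ≤ (sa + s*sb)^2 :=
              pow_le_pow_left₀ (norm_nonneg _) habs1 2
      have hYb : Complex.normSq (B'+C') ≤ α^2*(sa+sb)^2 := by
        have habs2 : ‖B'+C'‖ ≤ α*(sa+sb) := by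
          calc ‖B'+C'‖ ≤ ‖B'‖ + ‖C'‖ := norm_add_le _ _
            _ ≤ α*sb + α*sa := add_le_add haB haC
            _ = α*(sa+sb) := by ring
        calc Complex.normSq (B'+C') = ‖B'+C'‖ ^ 2 := (Complex.sq_norm _).symm
          _ ≤ (α*(sa+sb))^2 := pow_le_pow_left₀ (norm_nonneg _) habs2 2
          _ = α^2*(sa+sb)^2 := by ring
      have hs' : s * Complex.normSq (B'+C') ≤ s * (α^2*(sa+sb)^2) :=
        mul_le_mul_of_nonneg_left hYb hs
      rw [hsa2, hsb2]
      linarith [h1, h2, hpar, hXb, hs']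
    have hrf := real_final hα0 hα hsapos hsb0 hfam
    rw [hsa2, hsb2] at hrf
    exact hrf
  have h1 : outProb (M y) ρ1 ≤ a := hbnd1.2
  have h2 : b ≤ outProb (M y) ρ2 := hbnd2.1
  have hc2 : a ≤ ((1+2*α)/(1-2*α))^2 * b := by
    rw [div_pow, div_mul_eq_mul_div, le_div_iff₀ (pow_pos h2α 2)]
    linarith [key]
  calc outProb (M y) ρ1 ≤ a := h1
    _ ≤ ((1+2*α)/(1-2*α))^2 * b := hc2
    _ ≤ ((1+2*α)/(1-2*α))^2 * outProb (M y) ρ2 :=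
        mul_le_mul_of_nonneg_left h2 (sq_nonneg _)
    _ = ((1 + 2*α) / (1 - 2*α)) ^ 2 * outProb (M y) ρ2 := by norm_num
end

section
/- Let α ∈ [0,1) and let M = (M_y)_{y ∈ Y} be a measurement on ℂ^d whose operators M_y are positive definite and which is α-gentle on all quantum states on ℂ^d. Then M is δ-quantum-differentially-private on all quantum states on ℂ^d with δ = 2·log((1+α)/(1−α)); in particular λ_max(M_y)/λ_min(M_y) ≤ (1+α)/(1−α) for every y. -/
open scoped BigOperators ComplexOrder
open Matrix

section aux
variable {d : ℕ}


lemma vecMulVec_mul_vecMulVec (a b c e : Fin d → ℂ) :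
    vecMulVec a b * vecMulVec c e = (b ⬝ᵥ c) • vecMulVec a e := by
  ext i j
  simp [mul_apply, vecMulVec_apply, dotProduct, Finset.sum_mul, Finset.mul_sum]
  congr 1; ext k; ring

lemma trace_vecMulVec (a b : Fin d → ℂ) : (vecMulVec a b).trace = b ⬝ᵥ a := by
  simp [Matrix.trace, Matrix.diag, vecMulVec_apply, dotProduct, mul_comm]

lemma mul_vecMulVec (A : Matrix (Fin d) (Fin d) ℂ) (a b : Fin d → ℂ) :
    A * vecMulVec a b = vecMulVec (A *ᵥ a) b := by
  ext i j
  simp [mul_apply, vecMulVec_apply, mulVec, dotProduct, Finset.sum_mul]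
  congr 1; ext k; ring

lemma vecMulVec_mul (A : Matrix (Fin d) (Fin d) ℂ) (a b : Fin d → ℂ) :
    vecMulVec a b * A = vecMulVec a (b ᵥ* A) := by
  ext i j
  simp [mul_apply, vecMulVec_apply, vecMul, dotProduct, Finset.mul_sum]
  congr 1; ext k; ring

lemma conjTranspose_vecMulVec (a b : Fin d → ℂ) :
    (vecMulVec a b)ᴴ = vecMulVec (star b) (star a) := by
  ext i j
  simp [conjTranspose_apply, vecMulVec_apply, mul_comm]

lemma posSemidef_vecMulVec_star (v : Fin d → ℂ) :
    (vecMulVec v (star v)).PosSemidef := by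
  have h := posSemidef_conjTranspose_mul_self (Matrix.replicateRow Unit (star v))
  have : (Matrix.replicateRow Unit (star v))ᴴ * Matrix.replicateRow Unit (star v) = vecMulVec v (star v) := by
    rw [vecMulVec_eq Unit]
    congr 1
    ext i j
    simp [Matrix.replicateRow_apply, Matrix.replicateCol_apply, conjTranspose_apply]
  rwa [this] at h


lemma cancel_V {V : Matrix (Fin d) (Fin d) ℂ} (hV : V * star V = 1)
    (X : Matrix (Fin d) (Fin d) ℂ) : V * (star V * X) = X := by
  rw [← Matrix.mul_assoc, hV, Matrix.one_mul]

lemma cancel_V' {V : Matrix (Fin d) (Fin d) ℂ} (hV : star V * V = 1)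
    (X : Matrix (Fin d) (Fin d) ℂ) : star V * (V * X) = X := by
  rw [← Matrix.mul_assoc, hV, Matrix.one_mul]

lemma eigen_cube {H : Matrix (Fin d) (Fin d) ℂ} (hH : H.IsHermitian) (c : ℝ)
    (h3 : H * H * H = ((c : ℝ) : ℂ) • H) (i : Fin d) :
    hH.eigenvalues i ^ 3 = c * hH.eigenvalues i := by
  classical
  set V : Matrix (Fin d) (Fin d) ℂ := (hH.eigenvectorUnitary : Matrix (Fin d) (Fin d) ℂ) with hVdef
  have hV : V * star V = 1 := (Matrix.mem_unitaryGroup_iff).mp hH.eigenvectorUnitary.2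
  have hD : star V * H * V = diagonal (RCLike.ofReal ∘ hH.eigenvalues) :=
    by have h := hH.conjStarAlgAut_star_eigenvectorUnitary; rw [Unitary.conjStarAlgAut_star_apply] at h; exact h
  set D : Matrix (Fin d) (Fin d) ℂ := diagonal (RCLike.ofReal ∘ hH.eigenvalues) with hDdef
  have key : D * D * D = ((c : ℝ) : ℂ) • D := by
    have h1 : D * D * D = star V * (H * H * H) * V := by
      rw [← hD]
      simp only [Matrix.mul_assoc, cancel_V hV]
    rw [h1, h3, Matrix.mul_smul, Matrix.smul_mul, hD]
  have key2 := congrFun (congrFun key i) i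
  simp only [hDdef, diagonal_mul_diagonal, Matrix.smul_apply, diagonal_apply_eq,
    Function.comp_apply, smul_eq_mul] at key2
  have : ((hH.eigenvalues i ^ 3 : ℝ) : ℂ) = ((c * hH.eigenvalues i : ℝ) : ℂ) := by
    have hcast : ∀ r : ℝ, (RCLike.ofReal r : ℂ) = Complex.ofReal r := fun r => rfl
    simp only [hcast] at key2
    push_cast
    linear_combination key2
  exact_mod_cast this

lemma trace_sq {H : Matrix (Fin d) (Fin d) ℂ} (hH : H.IsHermitian) :
    (H * H).trace = ((∑ i, hH.eigenvalues i ^ 2 : ℝ) : ℂ) := by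
  classical
  set V : Matrix (Fin d) (Fin d) ℂ := (hH.eigenvectorUnitary : Matrix (Fin d) (Fin d) ℂ) with hVdef
  have hV : V * star V = 1 := (Matrix.mem_unitaryGroup_iff).mp hH.eigenvectorUnitary.2
  have hD : star V * H * V = diagonal (RCLike.ofReal ∘ hH.eigenvalues) :=
    by have h := hH.conjStarAlgAut_star_eigenvectorUnitary; rw [Unitary.conjStarAlgAut_star_apply] at h; exact h
  set D : Matrix (Fin d) (Fin d) ℂ := diagonal (RCLike.ofReal ∘ hH.eigenvalues) with hDdef
  have h1 : star V * (H * H) * V = D * D := by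
    rw [← hD]
    simp only [Matrix.mul_assoc, cancel_V hV]
  have h2 : (H * H).trace = (D * D).trace := by
    rw [← h1, Matrix.trace_mul_cycle, ← Matrix.mul_assoc, hV, Matrix.one_mul]
  rw [h2, hDdef, diagonal_mul_diagonal, trace_diagonal]
  push_cast
  congr 1; ext i; simp [sq]

lemma traceDist_eq_of {ρ σ : Matrix (Fin d) (Fin d) ℂ} (hH : (ρ - σ).IsHermitian) (x : ℝ)
    (hx : x ≠ 0)
    (h3 : (ρ - σ) * (ρ - σ) * (ρ - σ) = ((x ^ 2 : ℝ) : ℂ) • (ρ - σ))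
    (htr : ((ρ - σ) * (ρ - σ)).trace = ((2 * x ^ 2 : ℝ) : ℂ)) :
    traceDist ρ σ = |x| := by
  rw [traceDist, dif_pos hH]
  have habs : ∀ i, |hH.eigenvalues i| * |x| = hH.eigenvalues i ^ 2 := by
    intro i
    have h := eigen_cube hH (x ^ 2) h3 i
    have h0 : hH.eigenvalues i * (hH.eigenvalues i ^ 2 - x ^ 2) = 0 := by
      linear_combination h
    rcases mul_eq_zero.mp h0 with h1 | h1
    · rw [h1]; simp
    · have h2 : hH.eigenvalues i ^ 2 = x ^ 2 := by linarith
      have h3' : |hH.eigenvalues i| = |x| := by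
        have := congrArg (fun t => Real.sqrt t) h2
        simpa [Real.sqrt_sq_eq_abs] using this
      rw [← h3', abs_mul_abs_self]; ring
  have hsum : ∑ i, hH.eigenvalues i ^ 2 = 2 * x ^ 2 := by
    have h := trace_sq hH
    rw [htr] at h
    exact_mod_cast h.symm
  have h4 : (∑ i, |hH.eigenvalues i|) * |x| = 2 * x ^ 2 := by
    rw [Finset.sum_mul]
    simp_rw [habs]
    exact hsum
  have h5 : (∑ i, |hH.eigenvalues i|) * |x| = (2 * |x|) * |x| := by
    rw [h4]; rw [mul_assoc, ← sq_abs x]; ring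
  have h6 : (∑ i, |hH.eigenvalues i|) = 2 * |x| :=
    mul_right_cancel₀ (abs_ne_zero.mpr hx) h5
  rw [h6]; ring

lemma outProb_bounds (A : Matrix (Fin d) (Fin d) ℂ) (hA : A.IsHermitian)
    (ρ : Matrix (Fin d) (Fin d) ℂ) (hρ : IsState ρ) {m L : ℝ} (hm : 0 ≤ m)
    (h : ∀ i, m ≤ hA.eigenvalues i ∧ hA.eigenvalues i ≤ L) :
    m ^ 2 ≤ outProb A ρ ∧ outProb A ρ ≤ L ^ 2 := by
  classical
  set V : Matrix (Fin d) (Fin d) ℂ := (hA.eigenvectorUnitary : Matrix (Fin d) (Fin d) ℂ) with hVdef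
  have hV : V * star V = 1 := (Matrix.mem_unitaryGroup_iff).mp hA.eigenvectorUnitary.2
  have hV' : star V * V = 1 := (Matrix.mem_unitaryGroup_iff').mp hA.eigenvectorUnitary.2
  set D : Matrix (Fin d) (Fin d) ℂ := diagonal (RCLike.ofReal ∘ hA.eigenvalues) with hDdef
  have hD : star V * A * V = D := by have h := hA.conjStarAlgAut_star_eigenvectorUnitary; rw [Unitary.conjStarAlgAut_star_apply] at h; exact h
  have hspec : A = V * D * star V := by have h := hA.spectral_theorem; rw [Unitary.conjStarAlgAut_apply] at h; exact h
  have hAA : A * A = V * (D * D) * star V := by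
    rw [hspec]
    simp only [Matrix.mul_assoc, cancel_V' hV']
  set ρ' : Matrix (Fin d) (Fin d) ℂ := star V * ρ * V with hρ'def
  have hρ'psd : ρ'.PosSemidef := by
    have := hρ.1.conjTranspose_mul_mul_same V
    rwa [← Matrix.star_eq_conjTranspose] at this
  have htrρ' : ρ'.trace = 1 := by
    rw [hρ'def, Matrix.trace_mul_cycle, hV, Matrix.one_mul, hρ.2]
  have hcast : ∀ r : ℝ, (RCLike.ofReal r : ℂ) = Complex.ofReal r := fun r => rfl
  have hdiag : ∀ i, 0 ≤ (ρ' i i).re := by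
    intro i
    have h0 := hρ'psd.dotProduct_mulVec_nonneg (Pi.single i 1)
    have h1 : star (Pi.single i 1 : Fin d → ℂ) ⬝ᵥ (ρ' *ᵥ Pi.single i 1) = ρ' i i := by
      simp [Matrix.mulVec_single, dotProduct, Pi.single_apply, apply_ite,
        Finset.sum_ite_eq]
    rw [h1] at h0
    exact (Complex.nonneg_iff.mp h0).1
  have hsum1 : ∑ i, (ρ' i i).re = 1 := by
    have h0 := congrArg Complex.re htrρ'
    rw [Matrix.trace] at h0
    simpa [Complex.re_sum, Matrix.diag] using h0
  have hkey : outProb A ρ = ∑ i, (ρ' i i).re * hA.eigenvalues i ^ 2 := by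
    have hAH : Aᴴ = A := hA
    rw [outProb, hAH, hAA]
    have h5 : (ρ * (V * (D * D) * star V)).trace = (ρ' * (D * D)).trace := by
      rw [hρ'def]
      rw [show ρ * (V * (D * D) * star V) = (ρ * V) * (D * D) * star V by
        simp only [Matrix.mul_assoc]]
      rw [Matrix.trace_mul_cycle]
      congr 1
      simp only [Matrix.mul_assoc]
    rw [h5]
    have h6 : ρ' * (D * D) = ρ' * diagonal (fun i => ((hA.eigenvalues i ^ 2 : ℝ) : ℂ)) := by
      rw [hDdef, diagonal_mul_diagonal]
      congr 1
      funext i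
      simp only [Pi.mul_apply, Function.comp_apply, hcast]
      push_cast
      ring
    rw [h6]
    have h7 : (ρ' * diagonal (fun i => ((hA.eigenvalues i ^ 2 : ℝ) : ℂ))).trace
        = ∑ i, ρ' i i * ((hA.eigenvalues i ^ 2 : ℝ) : ℂ) := by
      simp [Matrix.trace, Matrix.diag, Matrix.mul_diagonal]
    rw [h7, Complex.re_sum]
    congr 1
    funext i
    simp [Complex.mul_re, ← Complex.ofReal_pow]
  constructor
  · calc m ^ 2 = ∑ i, (ρ' i i).re * m ^ 2 := by rw [← Finset.sum_mul, hsum1, one_mul]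
      _ ≤ ∑ i, (ρ' i i).re * hA.eigenvalues i ^ 2 := by
          refine Finset.sum_le_sum fun i _ => ?_
          exact mul_le_mul_of_nonneg_left (pow_le_pow_left₀ hm (h i).1 2) (hdiag i)
      _ = outProb A ρ := hkey.symm
  · calc outProb A ρ = ∑ i, (ρ' i i).re * hA.eigenvalues i ^ 2 := hkey
      _ ≤ ∑ i, (ρ' i i).re * L ^ 2 := by
          refine Finset.sum_le_sum fun i _ => ?_
          exact mul_le_mul_of_nonneg_left
            (pow_le_pow_left₀ (le_trans hm (h i).1) (h i).2 2) (hdiag i)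
      _ = L ^ 2 := by rw [← Finset.sum_mul, hsum1, one_mul]


lemma dot_combo {u w : Fin d → ℂ}
    (huu : star u ⬝ᵥ u = 1) (hww : star w ⬝ᵥ w = 1)
    (huw : star u ⬝ᵥ w = 0) (hwu : star w ⬝ᵥ u = 0) (x y x' y' : ℂ) :
    star (x • u + y • w) ⬝ᵥ (x' • u + y' • w) = star x * x' + star y * y' := by
  simp only [star_add, star_smul, add_dotProduct, smul_dotProduct, dotProduct_add,
    dotProduct_smul, huu, hww, huw, hwu, smul_eq_mul]
  ring

set_option maxHeartbeats 1600000 in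
lemma eig_ratio {α : ℝ} (hα0 : 0 ≤ α) (hα : α < 1)
    (A : Matrix (Fin d) (Fin d) ℂ) (hA : A.PosDef)
    (hg : ∀ ρ, IsState ρ → 0 < outProb A ρ → traceDist ρ (postState A ρ) ≤ α)
    (i j : Fin d) :
    hA.isHermitian.eigenvalues i ≤ (1 + α) / (1 - α) * hA.isHermitian.eigenvalues j := by
  have h1α : (0:ℝ) < 1 - α := by linarith
  have hepos : ∀ k, 0 < hA.isHermitian.eigenvalues k := hA.eigenvalues_pos
  set e := hA.isHermitian.eigenvalues with he
  have hr1 : (1:ℝ) ≤ (1 + α) / (1 - α) := by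
    rw [le_div_iff₀ h1α]; linarith
  by_cases hle : e i ≤ e j
  · calc e i ≤ e j := hle
      _ = 1 * e j := (one_mul _).symm
      _ ≤ (1 + α) / (1 - α) * e j := mul_le_mul_of_nonneg_right hr1 (hepos j).le
  push_neg at hle
  have hij : i ≠ j := fun h => absurd (congrArg e h) (by intro h'; rw [h'] at hle; exact lt_irrefl _ hle)
  set lam := e i with hlam
  set mu := e j with hmu
  have hlam0 : 0 < lam := hepos i
  have hmu0 : 0 < mu := hepos j
  have hs0 : 0 < lam + mu := by linarith
  set a : ℝ := Real.sqrt (mu / (lam + mu)) with hadef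
  set b : ℝ := Real.sqrt (lam / (lam + mu)) with hbdef
  have ha2 : a ^ 2 = mu / (lam + mu) := Real.sq_sqrt (by positivity)
  have hb2 : b ^ 2 = lam / (lam + mu) := Real.sq_sqrt (by positivity)
  have ha0 : 0 < a := Real.sqrt_pos.mpr (by positivity)
  have hb0 : 0 < b := Real.sqrt_pos.mpr (by positivity)
  have haa : a * a = mu / (lam + mu) := by rw [← pow_two]; exact ha2
  have hbb : b * b = lam / (lam + mu) := by rw [← pow_two]; exact hb2
  -- eigenvectors
  set u : Fin d → ℂ := ⇑(hA.isHermitian.eigenvectorBasis i) with hu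
  set w : Fin d → ℂ := ⇑(hA.isHermitian.eigenvectorBasis j) with hw
  have hortho : ∀ k l : Fin d,
      star (⇑(hA.isHermitian.eigenvectorBasis k) : Fin d → ℂ) ⬝ᵥ
        (⇑(hA.isHermitian.eigenvectorBasis l) : Fin d → ℂ) = if k = l then 1 else 0 := by
    intro k l
    have horth := hA.isHermitian.eigenvectorBasis.orthonormal
    rw [orthonormal_iff_ite] at horth
    have h := horth k l
    rw [EuclideanSpace.inner_eq_star_dotProduct, dotProduct_comm] at h
    simpa using h
  have huu : star u ⬝ᵥ u = 1 := by simpa using hortho i i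
  have hww : star w ⬝ᵥ w = 1 := by simpa using hortho j j
  have huw : star u ⬝ᵥ w = 0 := by simpa [hij] using hortho i j
  have hwu : star w ⬝ᵥ u = 0 := by simpa [hij, Ne.symm hij] using hortho j i
  have hrsmul : ∀ (r : ℝ) (v : Fin d → ℂ), r • v = (r : ℂ) • v := by
    intro r v; funext k
    simp [Pi.smul_apply, Complex.real_smul]
  have hAu : A *ᵥ u = (lam : ℂ) • u := by
    have h := hA.isHermitian.mulVec_eigenvectorBasis i
    rw [← hrsmul]
    exact h
  have hAw : A *ᵥ w = (mu : ℂ) • w := by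
    have h := hA.isHermitian.mulVec_eigenvectorBasis j
    rw [← hrsmul]
    exact h
  set ac : ℂ := (a : ℂ) with hac
  set bc : ℂ := (b : ℂ) with hbc
  set ψ : Fin d → ℂ := ac • u + bc • w with hψ
  set ρ : Matrix (Fin d) (Fin d) ℂ := vecMulVec ψ (star ψ) with hρ
  have hAH : Aᴴ = A := hA.isHermitian
  -- state
  have hψψ : star ψ ⬝ᵥ ψ = 1 := by
    rw [hψ, dot_combo huu hww huw hwu]
    have : (starRingEnd ℂ) ac * ac + (starRingEnd ℂ) bc * bc = ((a^2 + b^2 : ℝ) : ℂ) := by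
      rw [hac, hbc]; push_cast; rw [Complex.conj_ofReal, Complex.conj_ofReal]; ring
    rw [show (star ac * ac + star bc * bc) = ((a^2+b^2 : ℝ):ℂ) from this]
    rw [ha2, hb2]
    have : mu / (lam + mu) + lam / (lam + mu) = 1 := by field_simp; ring
    rw [this]; norm_num
  have hρstate : IsState ρ := by
    constructor
    · exact posSemidef_vecMulVec_star ψ
    · rw [hρ, _root_.trace_vecMulVec]; exact hψψ
  -- A ρ A
  set χ : Fin d → ℂ := A *ᵥ ψ with hχ
  have hχval : χ = ((a * lam : ℝ) : ℂ) • u + ((b * mu : ℝ) : ℂ) • w := by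
    rw [hχ, hψ, mulVec_add, mulVec_smul, mulVec_smul, hAu, hAw, smul_smul, smul_smul]
    congr 1
    · congr 1; rw [hac]; push_cast; ring
    · congr 1; rw [hbc]; push_cast; ring
  have hAρA : A * ρ * A = vecMulVec χ (star χ) := by
    rw [hρ, _root_.mul_vecMulVec, vecMulVec_mul]
    congr 1
    rw [hχ]
    rw [show star (A *ᵥ ψ) = star ψ ᵥ* Aᴴ from star_mulVec A ψ, hAH]
  have hχχ : star χ ⬝ᵥ χ = ((lam * mu : ℝ) : ℂ) := by
    rw [hχval, dot_combo huu hww huw hwu]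
    have h1 : (starRingEnd ℂ) ((a * lam : ℝ) : ℂ) = ((a * lam : ℝ) : ℂ) := Complex.conj_ofReal _
    have h2 : (starRingEnd ℂ) ((b * mu : ℝ) : ℂ) = ((b * mu : ℝ) : ℂ) := Complex.conj_ofReal _
    rw [show star (((a * lam : ℝ) : ℂ)) = ((a * lam : ℝ) : ℂ) from h1,
        show star (((b * mu : ℝ) : ℂ)) = ((b * mu : ℝ) : ℂ) from h2]
    push_cast
    have hstep : (a:ℝ) * lam * (a * lam) + b * mu * (b * mu) = lam * mu := by
      have h0 : (a*a)*(lam*lam) + (b*b)*(mu*mu) = lam * mu := by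
        rw [haa, hbb]; field_simp
      linear_combination h0
    exact_mod_cast congrArg (fun r : ℝ => (r : ℂ)) hstep
  have hptrace : (ρ * (Aᴴ * A)).trace = ((lam * mu : ℝ) : ℂ) := by
    rw [hAH, ← Matrix.mul_assoc, Matrix.trace_mul_cycle, hAρA, _root_.trace_vecMulVec]
    exact hχχ
  have houtProb : outProb A ρ = lam * mu := by
    rw [outProb, hptrace, Complex.ofReal_re]
  have hppos : 0 < outProb A ρ := by rw [houtProb]; positivity
  -- post-measurement state
  have hpost : postState A ρ = ((lam * mu : ℝ) : ℂ)⁻¹ • vecMulVec χ (star χ) := by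
    rw [postState, hptrace]
    congr 1
    rw [show A * ρ * Aᴴ = A * ρ * A by rw [hAH], hAρA]
  -- H = ρ - postState
  set x0 : ℝ := a ^ 2 - b ^ 2 with hx0
  set E11 : Matrix (Fin d) (Fin d) ℂ := vecMulVec u (star u) with hE11
  set E22 : Matrix (Fin d) (Fin d) ℂ := vecMulVec w (star w) with hE22
  have hq : ((lam * mu : ℝ) : ℂ) ≠ 0 := by
    simp only [ne_eq, Complex.ofReal_eq_zero]
    positivity
  set q : ℂ := ((lam * mu : ℝ) : ℂ)⁻¹ with hqdef
  have h1 : q * (((a * lam : ℝ) : ℂ) * ((a * lam : ℝ) : ℂ)) = bc * bc := by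
    rw [hqdef, hbc, inv_mul_eq_div, div_eq_iff hq]
    have hstep : a * lam * (a * lam) = b * b * (lam * mu) := by
      have h0 : (a*a)*(lam*lam) = (b*b)*(lam*mu) := by rw [haa, hbb]; field_simp
      linear_combination h0
    push_cast
    exact_mod_cast congrArg (fun r : ℝ => (r : ℂ)) hstep
  have h2 : q * (((a * lam : ℝ) : ℂ) * ((b * mu : ℝ) : ℂ)) = ac * bc := by
    rw [hqdef, hac, hbc, inv_mul_eq_div, div_eq_iff hq]
    have hstep : a * lam * (b * mu) = a * b * (lam * mu) := by ring
    push_cast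
    exact_mod_cast congrArg (fun r : ℝ => (r : ℂ)) hstep
  have h3c : q * (((b * mu : ℝ) : ℂ) * ((b * mu : ℝ) : ℂ)) = ac * ac := by
    rw [hqdef, hac, inv_mul_eq_div, div_eq_iff hq]
    have hstep : b * mu * (b * mu) = a * a * (lam * mu) := by
      have h0 : (b*b)*(mu*mu) = (a*a)*(lam*mu) := by rw [haa, hbb]; field_simp
      linear_combination h0
    push_cast
    exact_mod_cast congrArg (fun r : ℝ => (r : ℂ)) hstep
  have h4 : ac * ac - bc * bc = (x0 : ℂ) := by
    rw [hac, hbc, hx0]; push_cast; ring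
  have hstar : ∀ r : ℝ, star ((r : ℝ) : ℂ) = ((r : ℝ) : ℂ) := fun r => Complex.conj_ofReal r
  have hHeq : ρ - postState A ρ = (x0 : ℂ) • (E11 - E22) := by
    rw [hpost, hρ, hψ, hχval, hE11, hE22]
    ext k l
    simp only [Matrix.sub_apply, Matrix.smul_apply, vecMulVec_apply, Pi.add_apply,
      Pi.smul_apply, Pi.star_apply, star_add, star_smul, smul_eq_mul]
    rw [hstar (a * lam), hstar (b * mu), hstar a, hstar b]
    linear_combination (-(u k * star (u l))) * h1 + (-(u k * star (w l) + w k * star (u l))) * h2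
      + (-(w k * star (w l))) * h3c + (u k * star (u l) - w k * star (w l)) * h4
  -- Hermitian
  have hE11H : E11ᴴ = E11 := by rw [hE11, _root_.conjTranspose_vecMulVec, star_star]
  have hE22H : E22ᴴ = E22 := by rw [hE22, _root_.conjTranspose_vecMulVec, star_star]
  have hHerm : (ρ - postState A ρ).IsHermitian := by
    rw [hHeq]
    unfold Matrix.IsHermitian
    rw [conjTranspose_smul, conjTranspose_sub, hE11H, hE22H]
    congr 1
    exact Complex.conj_ofReal x0
  -- algebra of E's
  have hK2 : (E11 - E22) * (E11 - E22) = E11 + E22 := by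
    rw [hE11, hE22]
    rw [Matrix.sub_mul, Matrix.mul_sub, Matrix.mul_sub]
    rw [_root_.vecMulVec_mul_vecMulVec, _root_.vecMulVec_mul_vecMulVec, _root_.vecMulVec_mul_vecMulVec,
      _root_.vecMulVec_mul_vecMulVec, huu, hww, huw, hwu]
    simp
  have hK3 : (E11 - E22) * (E11 - E22) * (E11 - E22) = E11 - E22 := by
    rw [hK2, Matrix.add_mul, hE11, hE22, Matrix.mul_sub, Matrix.mul_sub,
      _root_.vecMulVec_mul_vecMulVec, _root_.vecMulVec_mul_vecMulVec, _root_.vecMulVec_mul_vecMulVec,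
      _root_.vecMulVec_mul_vecMulVec, huu, hww, huw, hwu]
    simp
    abel
  have h3 : (ρ - postState A ρ) * (ρ - postState A ρ) * (ρ - postState A ρ)
      = ((x0 ^ 2 : ℝ) : ℂ) • (ρ - postState A ρ) := by
    rw [hHeq]
    simp only [Matrix.smul_mul, Matrix.mul_smul, smul_smul]
    rw [hK3]
    congr 1
    push_cast
    ring
  have htr : ((ρ - postState A ρ) * (ρ - postState A ρ)).trace = ((2 * x0 ^ 2 : ℝ) : ℂ) := by
    rw [hHeq]
    simp only [Matrix.smul_mul, Matrix.mul_smul, smul_smul]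
    rw [hK2, Matrix.trace_smul, Matrix.trace_add, hE11, hE22, _root_.trace_vecMulVec,
      _root_.trace_vecMulVec, huu, hww]
    push_cast
    simp only [smul_eq_mul]
    ring
  have hx0ne : x0 ≠ 0 := by
    rw [hx0, ha2, hb2]
    have : mu / (lam + mu) - lam / (lam + mu) = (mu - lam) / (lam + mu) := by ring
    rw [this]
    apply div_ne_zero _ (ne_of_gt hs0)
    intro h
    have : mu = lam := by linarith [sub_eq_zero.mp h]
    rw [this] at hle
    exact lt_irrefl _ hle
  have hdist : traceDist ρ (postState A ρ) = |x0| := traceDist_eq_of hHerm x0 hx0ne h3 htr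
  have hgb := hg ρ hρstate hppos
  rw [hdist] at hgb
  -- conclude
  have hx0val : |x0| = (lam - mu) / (lam + mu) := by
    rw [hx0, ha2, hb2]
    rw [abs_of_nonpos (by rw [div_sub_div_same]; apply div_nonpos_of_nonpos_of_nonneg <;> linarith)]
    field_simp
    ring
  rw [hx0val, div_le_iff₀ hs0] at hgb
  rw [div_mul_eq_mul_div, le_div_iff₀ h1α]
  nlinarith [hgb]

end aux

/-- an `α`-gentle measurement with positive-definite operators is
`2 log((1+α)/(1−α))`-quantum-differentially-private, and in particular
`λ_max(M_y) ≤ ((1+α)/(1−α)) λ_min(M_y)` for every `y`. -/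
theorem dp_of_gentle_posDef {d : ℕ} {Y : Type*} [Fintype Y]
    (α : ℝ) (hα0 : 0 ≤ α) (hα : α < 1)
    (M : Y → Matrix (Fin d) (Fin d) ℂ)
    (hcomp : ∑ y, (M y)ᴴ * M y = 1)
    (hpos : ∀ y, (M y).PosDef)
    (hgentle : IsGentle M α) :
    (∀ ρ1 ρ2 : Matrix (Fin d) (Fin d) ℂ, IsState ρ1 → IsState ρ2 → ∀ y,
      outProb (M y) ρ1
        ≤ Real.exp (2 * Real.log ((1 + α) / (1 - α))) * outProb (M y) ρ2) ∧
    ∀ y, (⨆ i, (hpos y).isHermitian.eigenvalues i)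
        ≤ ((1 + α) / (1 - α)) * ⨅ i, (hpos y).isHermitian.eigenvalues i := by
  have h1α : (0:ℝ) < 1 - α := by linarith
  have hr0 : (0:ℝ) < (1 + α) / (1 - α) := div_pos (by linarith) h1α
  have hexp : Real.exp (2 * Real.log ((1 + α) / (1 - α))) = ((1 + α) / (1 - α)) ^ 2 := by
    rw [two_mul, Real.exp_add, Real.exp_log hr0]; ring
  have hkey : ∀ (y : Y) (i j : Fin d), (hpos y).isHermitian.eigenvalues i
      ≤ (1 + α) / (1 - α) * (hpos y).isHermitian.eigenvalues j := by
    intro y i j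
    exact eig_ratio hα0 hα (M y) (hpos y) (fun ρ hρ hp => hgentle ρ hρ y hp) i j
  constructor
  · intro ρ1 ρ2 h1 h2 y
    rcases Nat.eq_zero_or_pos d with hd | hd
    · subst hd
      have hz : ∀ ρ : Matrix (Fin 0) (Fin 0) ℂ, outProb (M y) ρ = 0 := by
        intro ρ
        simp [outProb, Matrix.trace]
      rw [hz ρ1, hz ρ2, mul_zero]
    · haveI : Nonempty (Fin d) := ⟨⟨0, hd⟩⟩
      set e := (hpos y).isHermitian.eigenvalues with he
      obtain ⟨i0, -, hi0⟩ := Finset.exists_max_image Finset.univ e Finset.univ_nonempty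
      obtain ⟨j0, -, hj0⟩ := Finset.exists_min_image Finset.univ e Finset.univ_nonempty
      have hm0 : 0 ≤ e j0 := ((hpos y).eigenvalues_pos j0).le
      have hbnd : ∀ i, e j0 ≤ e i ∧ e i ≤ e i0 :=
        fun i => ⟨hj0 i (Finset.mem_univ i), hi0 i (Finset.mem_univ i)⟩
      have hb1 := outProb_bounds (M y) (hpos y).isHermitian ρ1 h1 hm0 hbnd
      have hb2 := outProb_bounds (M y) (hpos y).isHermitian ρ2 h2 hm0 hbnd
      have hLm : e i0 ≤ (1 + α) / (1 - α) * e j0 := hkey y i0 j0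
      calc outProb (M y) ρ1 ≤ e i0 ^ 2 := hb1.2
        _ ≤ ((1 + α) / (1 - α) * e j0) ^ 2 :=
            pow_le_pow_left₀ ((hpos y).eigenvalues_pos i0).le hLm 2
        _ = ((1 + α) / (1 - α)) ^ 2 * e j0 ^ 2 := by ring
        _ ≤ Real.exp (2 * Real.log ((1 + α) / (1 - α))) * outProb (M y) ρ2 := by
            rw [hexp]
            exact mul_le_mul_of_nonneg_left hb2.1 (sq_nonneg _)
  · intro y
    rcases Nat.eq_zero_or_pos d with hd | hd
    · subst hd
      haveI : IsEmpty (Fin 0) := inferInstance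
      rw [Real.iSup_of_isEmpty, Real.iInf_of_isEmpty, mul_zero]
    · haveI : Nonempty (Fin d) := ⟨⟨0, hd⟩⟩
      set e := (hpos y).isHermitian.eigenvalues with he
      obtain ⟨j0, -, hj0⟩ := Finset.exists_min_image Finset.univ e Finset.univ_nonempty
      have hinf : (⨅ i, e i) = e j0 :=
        le_antisymm (ciInf_le (Finite.bddBelow_range e) j0)
          (le_ciInf fun i => hj0 i (Finset.mem_univ i))
      rw [hinf]
      exact ciSup_le fun i => hkey y i j0
end

section
/- Let α ∈ [0,1), set δ = 4·arctanh(α), and let P_1, P_0 be orthogonal projections on ℂ^d with P_1 + P_0 = I. Define the two-outcome measurement M_α = (M_{α,1}, M_{α,0}) by M_{α,1} = √(e^δ/(e^δ+1)) P_1 + √(1/(e^δ+1)) P_0 and M_{α,0} = √(1/(e^δ+1)) P_1 + √(e^δ/(e^δ+1)) P_0. Then M_α is α-gentle on all quantum states on ℂ^d: for every state ρ and every outcome y ∈ {0,1} with Tr(ρ M_{α,y}² ) > 0, ‖ρ − ρ_{M_α→y}‖_Tr ≤ α. -/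
open scoped BigOperators ComplexOrder
open Matrix

/-- Inverse hyperbolic tangent. -/
noncomputable def arctanh (x : ℝ) : ℝ := Real.log ((1 + x) / (1 - x)) / 2

lemma frob_eq {d : ℕ} (X : Matrix (Fin d) (Fin d) ℂ) :
    (Xᴴ * X).trace = ((∑ i, ∑ j, ‖X i j‖ ^ 2 : ℝ) : ℂ) := by
  simp only [Matrix.trace, Matrix.diag, Matrix.mul_apply, Matrix.conjTranspose_apply]
  rw [Finset.sum_comm]
  push_cast
  congr 1; funext i; congr 1; funext j
  rw [← Complex.ofReal_pow, Complex.sq_norm, Complex.normSq_eq_conj_mul_self]; rfl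

lemma trace_psd_nonneg {d : ℕ} {X : Matrix (Fin d) (Fin d) ℂ} (hX : X.PosSemidef) :
    ∃ u : ℝ, 0 ≤ u ∧ X.trace = (u : ℂ) := by
  have h0 : (0:ℂ) ≤ X.trace := by
    apply Finset.sum_nonneg
    intro i _
    exact hX.diag_nonneg
  obtain ⟨hre, him⟩ := Complex.nonneg_iff.mp h0
  exact ⟨X.trace.re, hre, by rw [Complex.ext_iff]; simp [← him]⟩

lemma sum_abs_eig_le {d : ℕ} {Δ : Matrix (Fin d) (Fin d) ℂ} (h : Δ.IsHermitian)
    (A B : Matrix (Fin d) (Fin d) ℂ) (hΔ : Δ = (2:ℂ)⁻¹ • (A * Bᴴ + B * Aᴴ)) :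
    ∑ i, |h.eigenvalues i| ≤
      Real.sqrt (∑ i, ∑ j, ‖A i j‖ ^ 2) *
      Real.sqrt (∑ i, ∑ j, ‖B i j‖ ^ 2) := by
  classical
  set V : Matrix (Fin d) (Fin d) ℂ := (h.eigenvectorUnitary : Matrix (Fin d) (Fin d) ℂ) with hV
  have hVV : Vᴴ * V = 1 := by
    rw [← Matrix.star_eq_conjTranspose]
    exact Matrix.mem_unitaryGroup_iff'.mp h.eigenvectorUnitary.2
  have hVV' : V * Vᴴ = 1 := by
    rw [← Matrix.star_eq_conjTranspose]
    exact Matrix.mem_unitaryGroup_iff.mp h.eigenvectorUnitary.2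
  set c : Fin d → ℂ := fun i => if h.eigenvalues i < 0 then (-1 : ℂ) else 1 with hc
  have hcstar : ∀ i, star (c i) = c i := by
    intro i; simp only [hc]; split <;> simp
  have hcc : ∀ i, c i * c i = 1 := by
    intro i; simp only [hc]; split <;> norm_num
  have hdc : (Matrix.diagonal c)ᴴ = Matrix.diagonal c := by
    rw [Matrix.diagonal_conjTranspose, show star c = c from funext hcstar]
  set U : Matrix (Fin d) (Fin d) ℂ := V * Matrix.diagonal c * Vᴴ with hU
  have hUherm : Uᴴ = U := by
    rw [hU, Matrix.conjTranspose_mul, Matrix.conjTranspose_mul,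
      Matrix.conjTranspose_conjTranspose, hdc, ← Matrix.mul_assoc]
  have hUU : Uᴴ * U = 1 := by
    rw [hUherm, hU]
    simp only [Matrix.mul_assoc]
    rw [← Matrix.mul_assoc Vᴴ V, hVV, Matrix.one_mul, ← Matrix.mul_assoc (Matrix.diagonal c),
      Matrix.diagonal_mul_diagonal]
    have : (fun i => c i * c i) = fun _ => (1:ℂ) := funext hcc
    rw [this, Matrix.diagonal_one, Matrix.one_mul, hVV']
  have hspec' : Δ = V * Matrix.diagonal (fun i => ((h.eigenvalues i : ℝ) : ℂ)) * Vᴴ := by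
    have := h.spectral_theorem
    rw [Unitary.conjStarAlgAut_apply, Matrix.star_eq_conjTranspose] at this
    exact this
  have hUΔ : U * Δ = V * Matrix.diagonal (fun i => c i * (h.eigenvalues i : ℂ)) * Vᴴ := by
    conv_lhs => rw [hspec']
    rw [hU]
    simp only [Matrix.mul_assoc]
    rw [← Matrix.mul_assoc Vᴴ V, hVV, Matrix.one_mul,
      ← Matrix.mul_assoc (Matrix.diagonal c), Matrix.diagonal_mul_diagonal]
  have htrUΔ : (U * Δ).trace = ((∑ i, |h.eigenvalues i| : ℝ) : ℂ) := by
    rw [hUΔ, Matrix.trace_mul_comm, ← Matrix.mul_assoc, hVV, Matrix.one_mul,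
      Matrix.trace_diagonal]
    push_cast
    refine Finset.sum_congr rfl fun i _ => ?_
    simp only [hc]
    split_ifs with hlt
    · rw [abs_of_neg hlt]; push_cast; ring
    · rw [abs_of_nonneg (not_lt.mp hlt)]; ring
  set z : ℂ := (U * A * Bᴴ).trace with hz
  have h1 : (U * Δ).trace = (2:ℂ)⁻¹ * ((U * (A * Bᴴ)).trace + (U * (B * Aᴴ)).trace) := by
    rw [hΔ, Matrix.mul_smul, Matrix.trace_smul, Matrix.mul_add, Matrix.trace_add]
    simp [smul_eq_mul]
  have h2 : (U * (A * Bᴴ)).trace = z := by rw [hz, ← Matrix.mul_assoc]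
  have hconj : (U * A * Bᴴ)ᴴ = B * Aᴴ * U := by
    rw [Matrix.conjTranspose_mul, Matrix.conjTranspose_mul,
      Matrix.conjTranspose_conjTranspose, hUherm, Matrix.mul_assoc]
  have h3 : (U * (B * Aᴴ)).trace = star z :=
    calc (U * (B * Aᴴ)).trace = ((B * Aᴴ) * U).trace := Matrix.trace_mul_comm _ _
      _ = ((U * A * Bᴴ)ᴴ).trace := by rw [hconj, Matrix.mul_assoc]
      _ = star z := Matrix.trace_conjTranspose _
  have hre : (∑ i, |h.eigenvalues i|) = z.re := by
    have := htrUΔ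
    rw [h1, h2, h3] at this
    have h4 : z + star z = ((2 * z.re : ℝ) : ℂ) := Complex.add_conj z
    rw [h4] at this
    have : ((∑ i, |h.eigenvalues i| : ℝ) : ℂ) = ((z.re : ℝ) : ℂ) := by
      rw [← this]; push_cast; ring
    exact_mod_cast this
  have zsum : z = ∑ i, ∑ j, star (B j i) * (U * A) j i := by
    rw [hz, Matrix.trace_mul_comm]
    simp only [Matrix.trace, Matrix.diag, Matrix.mul_apply, Matrix.conjTranspose_apply]
  have habs : ‖z‖ ≤ ∑ i, ∑ j, ‖B j i‖ * ‖(U * A) j i‖ := by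
    rw [zsum]
    refine (norm_sum_le _ _).trans ?_
    refine Finset.sum_le_sum fun i _ => ?_
    refine (norm_sum_le _ _).trans (le_of_eq ?_)
    refine Finset.sum_congr rfl fun j _ => ?_
    rw [norm_mul]; simp [Complex.norm_conj]
  have hCS : ∑ i, ∑ j, ‖B j i‖ * ‖(U * A) j i‖ ≤
      Real.sqrt (∑ i, ∑ j, ‖B i j‖ ^ 2) *
      Real.sqrt (∑ i, ∑ j, ‖(U * A) i j‖ ^ 2) := by
    have := Real.sum_mul_le_sqrt_mul_sqrt (Finset.univ : Finset (Fin d × Fin d))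
      (fun p => ‖B p.2 p.1‖) (fun p => ‖(U * A) p.2 p.1‖)
    rw [Fintype.sum_prod_type] at this
    refine this.trans (le_of_eq ?_)
    congr 1
    · congr 1
      rw [Fintype.sum_prod_type, Finset.sum_comm]
    · congr 1
      rw [Fintype.sum_prod_type, Finset.sum_comm]
  have hWA : (∑ i, ∑ j, ‖(U * A) i j‖ ^ 2) = ∑ i, ∑ j, ‖A i j‖ ^ 2 := by
    have hmat : (U * A)ᴴ * (U * A) = Aᴴ * A := by
      rw [Matrix.conjTranspose_mul, Matrix.mul_assoc Aᴴ, ← Matrix.mul_assoc Uᴴ, hUU,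
        Matrix.one_mul]
    have e1 := frob_eq (U * A)
    have e2 := frob_eq A
    rw [hmat, e2] at e1
    exact_mod_cast e1.symm
  rw [hre]
  calc z.re ≤ ‖z‖ := Complex.re_le_norm z
    _ ≤ _ := habs.trans hCS
    _ = _ := by rw [hWA, mul_comm]

lemma herm_half {d : ℕ} (A B : Matrix (Fin d) (Fin d) ℂ) :
    ((2:ℂ)⁻¹ • (A * Bᴴ + B * Aᴴ)).IsHermitian := by
  show _ = _
  rw [Matrix.conjTranspose_smul, Matrix.conjTranspose_add, Matrix.conjTranspose_mul,
    Matrix.conjTranspose_mul, Matrix.conjTranspose_conjTranspose,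
    Matrix.conjTranspose_conjTranspose, add_comm]
  congr 1
  simp [Complex.star_def]

open scoped MatrixOrder in
lemma key {d : ℕ} {α : ℝ} (hα0 : 0 ≤ α) (M ρ : Matrix (Fin d) (Fin d) ℂ)
    (hM : M.IsHermitian) (hρ : ρ.PosSemidef) (hρ1 : ρ.trace = 1)
    {p t : ℝ} (hp : 0 < p)
    (hpdef : (ρ * (M * M)).trace = (p : ℂ))
    (htdef : (ρ * M).trace = (t : ℂ))
    (hpt : p - t ^ 2 ≤ α ^ 2 * p) :
    traceDist ρ (postState M ρ) ≤ α := by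
  classical
  set s : ℝ := Real.sqrt p with hsdef
  have hs0 : 0 < s := Real.sqrt_pos.mpr hp
  have hss : s * s = p := Real.mul_self_sqrt hp.le
  have hsC : (s : ℂ) * (s : ℂ) = (p : ℂ) := by exact_mod_cast congrArg Complex.ofReal hss
  obtain ⟨R, hRsa, -, hRR⟩ := CFC.exists_sqrt_of_isSelfAdjoint_of_quasispectrumRestricts
    hρ.isHermitian (QuasispectrumRestricts.nnreal_of_nonneg hρ.nonneg)
  have hRH : Rᴴ = R := hRsa.star_eq
  set N : Matrix (Fin d) (Fin d) ℂ := ((s : ℂ))⁻¹ • M with hNdef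
  have hNH : Nᴴ = N := by
    rw [hNdef, Matrix.conjTranspose_smul, hM.eq]
    congr 1
    simp [Complex.star_def, Complex.conj_ofReal]
  set A : Matrix (Fin d) (Fin d) ℂ := (1 - N) * R with hAdef
  set B : Matrix (Fin d) (Fin d) ℂ := (1 + N) * R with hBdef
  have hpost : postState M ρ = ((p:ℂ))⁻¹ • (M * ρ * M) := by
    rw [postState, hM.eq, hpdef]
  have hNρN : N * ρ * N = ((p:ℂ))⁻¹ • (M * ρ * M) := by
    rw [hNdef, Matrix.smul_mul, Matrix.smul_mul, Matrix.mul_smul, smul_smul, ← hsC]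
    rw [mul_inv]
  have hAB : A * Bᴴ = ρ + ρ * N - N * ρ - N * ρ * N := by
    rw [hAdef, hBdef, Matrix.conjTranspose_mul, hRH, Matrix.conjTranspose_add,
      Matrix.conjTranspose_one, hNH, ← hRR]
    noncomm_ring
  have hBA : B * Aᴴ = ρ - ρ * N + N * ρ - N * ρ * N := by
    rw [hAdef, hBdef, Matrix.conjTranspose_mul, hRH, Matrix.conjTranspose_sub,
      Matrix.conjTranspose_one, hNH, ← hRR]
    noncomm_ring
  have hΔ : ρ - postState M ρ = (2:ℂ)⁻¹ • (A * Bᴴ + B * Aᴴ) := by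
    rw [hpost, hAB, hBA, ← hNρN]
    module
  have h : (ρ - postState M ρ).IsHermitian := hΔ ▸ herm_half A B
  have hbound := sum_abs_eig_le h A B hΔ
  have htrρN : (ρ * N).trace = ((s:ℂ))⁻¹ * (t:ℂ) := by
    rw [hNdef, Matrix.mul_smul, Matrix.trace_smul, htdef, smul_eq_mul]
  have htrρNN : (ρ * (N * N)).trace = 1 := by
    have e : N * N = ((s:ℂ)⁻¹ * (s:ℂ)⁻¹) • (M * M) := by
      rw [hNdef, Matrix.smul_mul, Matrix.mul_smul, smul_smul]
    rw [e, Matrix.mul_smul, Matrix.trace_smul, hpdef, smul_eq_mul, ← mul_inv, hsC]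
    have hpne : (p : ℂ) ≠ 0 := by exact_mod_cast hp.ne'
    field_simp
  have htrA : (Aᴴ * A).trace = ((2 - 2*(t/s) : ℝ) : ℂ) := by
    have e : Aᴴ * A = R * ((1 - N) * (1 - N)) * R := by
      rw [hAdef, Matrix.conjTranspose_mul, hRH, Matrix.conjTranspose_sub,
        Matrix.conjTranspose_one, hNH]
      noncomm_ring
    have e2 : ρ * ((1 - N) * (1 - N)) = ρ - ρ * N - ρ * N + ρ * (N * N) := by noncomm_ring
    rw [e, Matrix.trace_mul_comm, ← Matrix.mul_assoc, hRR, e2, Matrix.trace_add,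
      Matrix.trace_sub, Matrix.trace_sub, hρ1, htrρN, htrρNN]
    have hsne : (s : ℂ) ≠ 0 := by exact_mod_cast hs0.ne'
    push_cast
    field_simp
    ring
  have htrB : (Bᴴ * B).trace = ((2 + 2*(t/s) : ℝ) : ℂ) := by
    have e : Bᴴ * B = R * ((1 + N) * (1 + N)) * R := by
      rw [hBdef, Matrix.conjTranspose_mul, hRH, Matrix.conjTranspose_add,
        Matrix.conjTranspose_one, hNH]
      noncomm_ring
    have e2 : ρ * ((1 + N) * (1 + N)) = ρ + ρ * N + ρ * N + ρ * (N * N) := by noncomm_ring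
    rw [e, Matrix.trace_mul_comm, ← Matrix.mul_assoc, hRR, e2, Matrix.trace_add,
      Matrix.trace_add, Matrix.trace_add, hρ1, htrρN, htrρNN]
    have hsne : (s : ℂ) ≠ 0 := by exact_mod_cast hs0.ne'
    push_cast
    field_simp
    ring
  have hA2 : (∑ i, ∑ j, ‖A i j‖ ^ 2) = 2 - 2*(t/s) := by
    have := frob_eq A; rw [htrA] at this; exact_mod_cast this.symm
  have hB2 : (∑ i, ∑ j, ‖B i j‖ ^ 2) = 2 + 2*(t/s) := by
    have := frob_eq B; rw [htrB] at this; exact_mod_cast this.symm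
  have hA2nn : (0:ℝ) ≤ 2 - 2*(t/s) := by rw [← hA2]; positivity
  rw [hA2, hB2] at hbound
  rw [traceDist, dif_pos h]
  have hs2 : s ^ 2 = p := by rw [sq, hss]
  have hprod : (2 - 2*(t/s)) * (2 + 2*(t/s)) = 4 - 4*(t^2/p) := by
    rw [← hs2]
    have hsne : s ≠ 0 := hs0.ne'
    field_simp
    ring
  have h4 : 4 - 4*(t^2/p) ≤ (2*α)^2 := by
    have e : 4 - 4*(t^2/p) = (4*p - 4*t^2)/p := by field_simp
    rw [e, div_le_iff₀ hp]
    nlinarith [hpt]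
  have hsq : Real.sqrt (2 - 2*(t/s)) * Real.sqrt (2 + 2*(t/s)) ≤ 2*α := by
    rw [← Real.sqrt_mul hA2nn, hprod]
    calc Real.sqrt (4 - 4*(t^2/p)) ≤ Real.sqrt ((2*α)^2) := Real.sqrt_le_sqrt h4
      _ = 2*α := Real.sqrt_sq (by linarith)
  linarith [hbound.trans hsq]

lemma trace_rho_proj {d : ℕ} {ρ P : Matrix (Fin d) (Fin d) ℂ}
    (hρ : ρ.PosSemidef) (hP : P.IsHermitian) (hidem : P * P = P) :
    ∃ u : ℝ, 0 ≤ u ∧ (ρ * P).trace = (u : ℂ) := by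
  have hX : (P * ρ * Pᴴ).PosSemidef := hρ.mul_mul_conjTranspose_same P
  obtain ⟨u, hu, htr⟩ := trace_psd_nonneg hX
  refine ⟨u, hu, ?_⟩
  rw [← htr, hP.eq]
  conv_rhs => rw [Matrix.mul_assoc, Matrix.trace_mul_comm, Matrix.mul_assoc, hidem]

lemma outcome {d : ℕ} {α a b : ℝ} (hα0 : 0 ≤ α) (ha : 0 < a) (hb : 0 < b)
    (hab : a - b = α * (a + b))
    (P1 P0 : Matrix (Fin d) (Fin d) ℂ) (hP1 : P1.IsHermitian) (hP0 : P0.IsHermitian)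
    (hP1idem : P1 * P1 = P1) (hP0idem : P0 * P0 = P0) (hsum : P1 + P0 = 1)
    (ρ : Matrix (Fin d) (Fin d) ℂ) (hρ : IsState ρ) :
    traceDist ρ (postState ((a:ℂ) • P1 + (b:ℂ) • P0) ρ) ≤ α := by
  obtain ⟨hρpsd, hρ1⟩ := hρ
  set M : Matrix (Fin d) (Fin d) ℂ := (a:ℂ) • P1 + (b:ℂ) • P0 with hMdef
  have hP0eq : P0 = 1 - P1 := by rw [← hsum]; abel
  have h10 : P1 * P0 = 0 := by rw [hP0eq, Matrix.mul_sub, Matrix.mul_one, hP1idem, sub_self]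
  have h01 : P0 * P1 = 0 := by rw [hP0eq, Matrix.sub_mul, Matrix.one_mul, hP1idem, sub_self]
  have hM : M.IsHermitian := by
    show _ = _
    rw [hMdef, Matrix.conjTranspose_add, Matrix.conjTranspose_smul,
      Matrix.conjTranspose_smul, hP1.eq, hP0.eq]
    congr 1 <;> · congr 1; simp [Complex.star_def, Complex.conj_ofReal]
  have hMM : M * M = ((a^2 : ℝ) : ℂ) • P1 + ((b^2 : ℝ) : ℂ) • P0 := by
    rw [hMdef]
    simp only [Matrix.add_mul, Matrix.mul_add, Matrix.smul_mul, Matrix.mul_smul,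
      hP1idem, hP0idem, h10, h01, smul_zero, add_zero, zero_add, smul_smul]
    congr 1 <;> congr 1 <;> push_cast <;> ring
  obtain ⟨u1, hu1nn, hu1⟩ := trace_rho_proj hρpsd hP1 hP1idem
  obtain ⟨u0, hu0nn, hu0⟩ := trace_rho_proj hρpsd hP0 hP0idem
  have husum : u1 + u0 = 1 := by
    have : (ρ * P1).trace + (ρ * P0).trace = 1 := by
      rw [← Matrix.trace_add, ← Matrix.mul_add, hsum, Matrix.mul_one, hρ1]
    rw [hu1, hu0] at this
    exact_mod_cast this
  set t : ℝ := a * u1 + b * u0 with htdef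
  set p : ℝ := a^2 * u1 + b^2 * u0 with hpdef
  have htr_t : (ρ * M).trace = (t : ℂ) := by
    rw [hMdef, Matrix.mul_add, Matrix.mul_smul, Matrix.mul_smul, Matrix.trace_add,
      Matrix.trace_smul, Matrix.trace_smul, hu1, hu0, htdef]
    push_cast
    simp [smul_eq_mul]
  have htr_p : (ρ * (M * M)).trace = (p : ℂ) := by
    rw [hMM, Matrix.mul_add, Matrix.mul_smul, Matrix.mul_smul, Matrix.trace_add,
      Matrix.trace_smul, Matrix.trace_smul, hu1, hu0, hpdef]
    push_cast
    simp [smul_eq_mul]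
  have hp : 0 < p := by
    rcases lt_or_ge 0 u1 with h | h
    · have h1 : 0 < a^2 * u1 := by positivity
      nlinarith [mul_nonneg (mul_nonneg hb.le hb.le) hu0nn]
    · have h1 : u1 = 0 := le_antisymm h hu1nn
      have h0 : u0 = 1 := by linarith
      rw [hpdef, h1, h0]; nlinarith
  have hu0' : u0 = 1 - u1 := by linarith
  have hpt : p - t ^ 2 ≤ α ^ 2 * p := by
    have e : p - t^2 - α^2*p = -(α^2*(a*u1 - b*(1-u1))^2) := by
      rw [hpdef, htdef, hu0']
      linear_combination (u1*(1-u1)*((a-b)+α*(a+b))) * hab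
    linarith [e, mul_nonneg (sq_nonneg α) (sq_nonneg (a*u1 - b*(1-u1)))]
  exact key hα0 M ρ hM hρpsd hρ1 hp htr_p htr_t hpt


/-- the gentle-ized version of a two-outcome PVM `(P₁, P₀)` is
`α`-gentle on all quantum states. -/
theorem qLS_gentle {d : ℕ} (α : ℝ) (hα0 : 0 ≤ α) (hα : α < 1)
    (P1 P0 : Matrix (Fin d) (Fin d) ℂ)
    (hP1 : P1.IsHermitian) (hP0 : P0.IsHermitian)
    (hP1idem : P1 * P1 = P1) (hP0idem : P0 * P0 = P0)
    (hsum : P1 + P0 = 1) :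
    let δ : ℝ := 4 * arctanh α
    let M1 : Matrix (Fin d) (Fin d) ℂ :=
      (Real.sqrt (Real.exp δ / (Real.exp δ + 1)) : ℂ) • P1
        + (Real.sqrt (1 / (Real.exp δ + 1)) : ℂ) • P0
    let M0 : Matrix (Fin d) (Fin d) ℂ :=
      (Real.sqrt (1 / (Real.exp δ + 1)) : ℂ) • P1
        + (Real.sqrt (Real.exp δ / (Real.exp δ + 1)) : ℂ) • P0
    ∀ ρ : Matrix (Fin d) (Fin d) ℂ, IsState ρ →
      (0 < outProb M1 ρ → traceDist ρ (postState M1 ρ) ≤ α) ∧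
      (0 < outProb M0 ρ → traceDist ρ (postState M0 ρ) ≤ α) := by
  intro δ M1 M0 ρ hρ
  have hδ : δ = 4 * arctanh α := rfl
  have hM1 : M1 = (Real.sqrt (Real.exp δ / (Real.exp δ + 1)) : ℂ) • P1
      + (Real.sqrt (1 / (Real.exp δ + 1)) : ℂ) • P0 := rfl
  have hM0 : M0 = (Real.sqrt (1 / (Real.exp δ + 1)) : ℂ) • P1
      + (Real.sqrt (Real.exp δ / (Real.exp δ + 1)) : ℂ) • P0 := rfl
  set E : ℝ := Real.exp δ with hE
  have hE0 : 0 < E := Real.exp_pos δ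
  set a : ℝ := Real.sqrt (E / (E + 1)) with hadef
  set b : ℝ := Real.sqrt (1 / (E + 1)) with hbdef
  have ha : 0 < a := Real.sqrt_pos.mpr (by positivity)
  have hb : 0 < b := Real.sqrt_pos.mpr (by positivity)
  have h1α : 0 < 1 - α := by linarith
  set r : ℝ := (1 + α) / (1 - α) with hr
  have hr0 : 0 < r := by positivity
  have hEr : E = r ^ 2 := by
    rw [hE, hδ, arctanh, show 4 * (Real.log ((1 + α) / (1 - α)) / 2) =
      Real.log r + Real.log r by rw [hr]; ring, Real.exp_add, Real.exp_log hr0, sq]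
  have hab' : a = r * b := by
    rw [hadef, hbdef, show E / (E + 1) = r ^ 2 * (1 / (E + 1)) by rw [hEr]; ring,
      Real.sqrt_mul (sq_nonneg r), Real.sqrt_sq hr0.le]
  have hab : a - b = α * (a + b) := by
    have h2 : r - 1 = α * (r + 1) := by rw [hr]; field_simp; ring
    rw [hab']
    linear_combination b * h2
  constructor
  · intro _
    rw [hM1]
    exact outcome hα0 ha hb hab P1 P0 hP1 hP0 hP1idem hP0idem hsum ρ hρ
  · intro _
    rw [hM0, add_comm ((b : ℂ) • P1) ((a : ℂ) • P0)]
    exact outcome hα0 ha hb hab P0 P1 hP0 hP1 hP0idem hP1idem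
      (by rw [add_comm]; exact hsum) ρ hρ
end

section
/- Let α ∈ (0,1), δ = 4·arctanh(α), and let M_{α,z} = (M_{α,z_+}, M_{α,z_−}) be the qubit quantum-Label-Switch measurement in the z-direction, M_{α,z_±} = √(e^δ/(e^δ+1)) |z_±⟩⟨z_±| + √(1/(e^δ+1)) |z_∓⟩⟨z_∓| with |z_+⟩ = (1,0), |z_−⟩ = (0,1). For any qubit ρ(r) with Bloch vector r = (r_x, r_y, r_z), if the outcome z_+ has positive probability then the post-measurement state is ρ(r)_{M_{α,z}→z_+} = ρ(r'), where r' = (1/(e^δ + 1 + r_z(e^δ − 1))) · ( 2 e^{δ/2} r_x , 2 e^{δ/2} r_y , r_z(e^δ + 1) + e^δ − 1 ); and if the outcome z_− has positive probability then ρ(r)_{M_{α,z}→z_−} = ρ(r''), where r'' = (1/(e^δ + 1 − r_z(e^δ − 1))) · ( 2 e^{δ/2} r_x , 2 e^{δ/2} r_y , r_z(e^δ + 1) − (e^δ − 1) ). -/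
open scoped BigOperators ComplexOrder
open Matrix

noncomputable def sigx : Matrix (Fin 2) (Fin 2) ℂ := !![0, 1; 1, 0]
noncomputable def sigy : Matrix (Fin 2) (Fin 2) ℂ := !![0, -Complex.I; Complex.I, 0]
noncomputable def sigz : Matrix (Fin 2) (Fin 2) ℂ := !![1, 0; 0, -1]

/-- The qubit with Bloch vector `r`. -/
noncomputable def blochState (r : Fin 3 → ℝ) : Matrix (Fin 2) (Fin 2) ℂ :=
  (2 : ℂ)⁻¹ • ((1 : Matrix (Fin 2) (Fin 2) ℂ)
    + (r 0 : ℂ) • sigx + (r 1 : ℂ) • sigy + (r 2 : ℂ) • sigz)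

section Helpers

lemma blochState_eq (x y z : ℝ) :
    blochState ![x, y, z] =
      !![((1+z)/2 : ℂ), (x - y*Complex.I)/2; (x + y*Complex.I)/2, (1-z)/2] := by
  ext i j
  fin_cases i <;> fin_cases j <;>
    simp [blochState, sigx, sigy, sigz, Matrix.one_apply] <;> ring

lemma trace_diag (a b x y z : ℝ) :
    (blochState ![x,y,z] * ((!![(a:ℂ),0;0,(b:ℂ)])ᴴ * !![(a:ℂ),0;0,(b:ℂ)])).trace
      = (((a^2*(1+z) + b^2*(1-z))/2 : ℝ) : ℂ) := by
  rw [blochState_eq]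
  simp [Matrix.trace_fin_two, Matrix.mul_apply, Fin.sum_univ_two, Matrix.vecMul,
    dotProduct, Matrix.conjTranspose_apply, Complex.conj_ofReal]
  push_cast
  ring

lemma outProb_diag (a b x y z : ℝ) :
    outProb !![(a:ℂ),0;0,(b:ℂ)] (blochState ![x,y,z])
      = (a^2*(1+z) + b^2*(1-z))/2 := by
  rw [outProb, trace_diag]
  exact Complex.ofReal_re _

lemma postState_diag (a b x y z : ℝ)
    (hT : 0 < a^2*(1+z) + b^2*(1-z)) :
    postState !![(a:ℂ),0;0,(b:ℂ)] (blochState ![x,y,z])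
      = blochState ![2*a*b*x/(a^2*(1+z)+b^2*(1-z)),
          2*a*b*y/(a^2*(1+z)+b^2*(1-z)),
          (a^2*(1+z)-b^2*(1-z))/(a^2*(1+z)+b^2*(1-z))] := by
  have hTc : ((a^2*(1+z) + b^2*(1-z) : ℝ) : ℂ) ≠ 0 := by
    exact_mod_cast ne_of_gt hT
  push_cast at hTc
  rw [postState, trace_diag, blochState_eq, blochState_eq]
  ext i j
  fin_cases i <;> fin_cases j <;>
    simp [Matrix.mul_apply, Fin.sum_univ_two, Matrix.vecMul, dotProduct,
      Matrix.conjTranspose_apply, Complex.conj_ofReal] <;>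
    push_cast <;>
    field_simp [hTc] <;>
    ring

end Helpers

/-- post-measurement states of the qubit quantum-Label-Switch
measurement in the `z`-direction. -/
theorem qLS_z_postState (α : ℝ) (hα0 : 0 < α) (hα : α < 1)
    (r : Fin 3 → ℝ) (hr : Real.sqrt (∑ i, r i ^ 2) ≤ 1) :
    let δ : ℝ := 4 * arctanh α
    let Mp : Matrix (Fin 2) (Fin 2) ℂ :=
      (Real.sqrt (Real.exp δ / (Real.exp δ + 1)) : ℂ) • !![(1:ℂ), 0; 0, 0]
        + (Real.sqrt (1 / (Real.exp δ + 1)) : ℂ) • !![(0:ℂ), 0; 0, 1]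
    let Mm : Matrix (Fin 2) (Fin 2) ℂ :=
      (Real.sqrt (1 / (Real.exp δ + 1)) : ℂ) • !![(1:ℂ), 0; 0, 0]
        + (Real.sqrt (Real.exp δ / (Real.exp δ + 1)) : ℂ) • !![(0:ℂ), 0; 0, 1]
    (0 < outProb Mp (blochState r) →
      postState Mp (blochState r)
        = blochState ![2 * Real.exp (δ/2) * r 0 / (Real.exp δ + 1 + r 2 * (Real.exp δ - 1)),
            2 * Real.exp (δ/2) * r 1 / (Real.exp δ + 1 + r 2 * (Real.exp δ - 1)),
            (r 2 * (Real.exp δ + 1) + (Real.exp δ - 1))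
              / (Real.exp δ + 1 + r 2 * (Real.exp δ - 1))]) ∧
    (0 < outProb Mm (blochState r) →
      postState Mm (blochState r)
        = blochState ![2 * Real.exp (δ/2) * r 0 / (Real.exp δ + 1 - r 2 * (Real.exp δ - 1)),
            2 * Real.exp (δ/2) * r 1 / (Real.exp δ + 1 - r 2 * (Real.exp δ - 1)),
            (r 2 * (Real.exp δ + 1) - (Real.exp δ - 1))
              / (Real.exp δ + 1 - r 2 * (Real.exp δ - 1))]) := by
  intro δ Mp Mm
  set E := Real.exp δ with hE
  have hEpos : 0 < E := Real.exp_pos δ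
  have hE1 : (0:ℝ) < E + 1 := by linarith
  set a := Real.sqrt (E / (E + 1)) with ha
  set b := Real.sqrt (1 / (E + 1)) with hb
  set s := Real.exp (δ/2) with hsdef
  have hs2 : s^2 = E := by
    rw [hsdef, hE, sq, ← Real.exp_add]; ring_nf
  have ha2 : a^2 = E/(E+1) := Real.sq_sqrt (by positivity)
  have hb2 : b^2 = 1/(E+1) := Real.sq_sqrt (by positivity)
  have hE1' : E + 1 ≠ 0 := ne_of_gt hE1
  have hab : a * b = s/(E+1) := by
    rw [ha, hb, ← Real.sqrt_mul (by positivity)]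
    rw [show E/(E+1)*(1/(E+1)) = (s/(E+1))^2 by
      rw [div_pow, hs2, mul_one_div, div_div, sq]]
    exact Real.sqrt_sq (by positivity)
  have hba : b * a = s/(E+1) := by rw [mul_comm]; exact hab
  have hv : r = ![r 0, r 1, r 2] := by
    funext i; fin_cases i <;> simp
  have hbs : blochState r = blochState ![r 0, r 1, r 2] := by rw [← hv]
  have hMp : Mp = !![(a:ℂ),0;0,(b:ℂ)] := by
    ext i j; fin_cases i <;> fin_cases j <;>
      simp [Mp, ha, hb, E, one_div, Real.sqrt_inv]
  have hMm : Mm = !![(b:ℂ),0;0,(a:ℂ)] := by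
    ext i j; fin_cases i <;> fin_cases j <;>
      simp [Mm, ha, hb, E, one_div, Real.sqrt_inv]
  constructor
  · intro hp
    rw [hbs, hMp, outProb_diag, ha2, hb2,
      show (E/(E+1)*(1+r 2) + 1/(E+1)*(1-r 2))/2
          = (E + 1 + r 2 * (E-1)) / (2*(E+1)) by field_simp; ring] at hp
    have hD : 0 < E + 1 + r 2 * (E - 1) := by
      rcases div_pos_iff.mp hp with ⟨h, _⟩ | ⟨_, h⟩
      · exact h
      · linarith
    have hDne : E + 1 + r 2 * (E - 1) ≠ 0 := ne_of_gt hD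
    have hTeq : a^2*(1+r 2) + b^2*(1-r 2) = (E + 1 + r 2 * (E-1))/(E+1) := by
      rw [ha2, hb2]; field_simp; ring
    have hT : 0 < a^2*(1+r 2) + b^2*(1-r 2) := by
      rw [hTeq]; positivity
    have e0 : 2*a*b*r 0/(a^2*(1+r 2)+b^2*(1-r 2))
        = 2 * s * r 0 / (E + 1 + r 2 * (E - 1)) := by
      rw [hTeq, show 2*a*b*r 0 = 2*(a*b)*r 0 from by ring, hab]; field_simp
    have e1 : 2*a*b*r 1/(a^2*(1+r 2)+b^2*(1-r 2))
        = 2 * s * r 1 / (E + 1 + r 2 * (E - 1)) := by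
      rw [hTeq, show 2*a*b*r 1 = 2*(a*b)*r 1 from by ring, hab]; field_simp
    have e2 : (a^2*(1+r 2)-b^2*(1-r 2))/(a^2*(1+r 2)+b^2*(1-r 2))
        = (r 2 * (E + 1) + (E - 1)) / (E + 1 + r 2 * (E - 1)) := by
      rw [hTeq, show a^2*(1+r 2) - b^2*(1-r 2) = (r 2*(E+1)+(E-1))/(E+1) by
        rw [ha2, hb2]; field_simp; ring]
      rw [div_div_div_cancel_right₀]
      exact hE1'
    rw [hbs, hMp, postState_diag _ _ _ _ _ hT, e0, e1, e2]
  · intro hp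
    rw [hbs, hMm, outProb_diag,
      show (b^2*(1+r 2) + a^2*(1-r 2))/2
          = (E + 1 - r 2 * (E-1)) / (2*(E+1)) by
        rw [ha2, hb2]; field_simp; ring] at hp
    have hD : 0 < E + 1 - r 2 * (E - 1) := by
      rcases div_pos_iff.mp hp with ⟨h, _⟩ | ⟨_, h⟩
      · exact h
      · linarith
    have hDne : E + 1 - r 2 * (E - 1) ≠ 0 := ne_of_gt hD
    have hTeq : b^2*(1+r 2) + a^2*(1-r 2) = (E + 1 - r 2 * (E-1))/(E+1) := by
      rw [ha2, hb2]; field_simp; ring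
    have hT : 0 < b^2*(1+r 2) + a^2*(1-r 2) := by
      rw [hTeq]; positivity
    have e0 : 2*b*a*r 0/(b^2*(1+r 2)+a^2*(1-r 2))
        = 2 * s * r 0 / (E + 1 - r 2 * (E - 1)) := by
      rw [hTeq, show 2*b*a*r 0 = 2*(b*a)*r 0 from by ring, hba]; field_simp
    have e1 : 2*b*a*r 1/(b^2*(1+r 2)+a^2*(1-r 2))
        = 2 * s * r 1 / (E + 1 - r 2 * (E - 1)) := by
      rw [hTeq, show 2*b*a*r 1 = 2*(b*a)*r 1 from by ring, hba]; field_simp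
    have e2 : (b^2*(1+r 2)-a^2*(1-r 2))/(b^2*(1+r 2)+a^2*(1-r 2))
        = (r 2 * (E + 1) - (E - 1)) / (E + 1 - r 2 * (E - 1)) := by
      rw [hTeq, show b^2*(1+r 2) - a^2*(1-r 2) = (r 2*(E+1)-(E-1))/(E+1) by
        rw [ha2, hb2]; field_simp; ring]
      rw [div_div_div_cancel_right₀]
      exact hE1'
    rw [hbs, hMm, postState_diag _ _ _ _ _ hT, e0, e1, e2]
end

section
/- Let α ∈ (0,1), δ = 4·arctanh(α), and n ≥ 1. Consider, for each Pauli axis a ∈ {x,y,z}, n independent applications of the α-gentle quantum-Label-Switch basis measurement M_{α,a} (with outcomes ±1 and probabilities P(+1) = 1/2 + (1/2)((e^δ−1)/(e^δ+1)) r_a, P(−1) = 1/2 − (1/2)((e^δ−1)/(e^δ+1)) r_a) to n copies of a qubit ρ(r). Define r̃_a = ((e^δ+1)/(e^δ−1)) · (average of the n outcomes for axis a), let r̃ = (r̃_x, r̃_y, r̃_z), and let r̂ = r̃ / max(‖r̃‖₂, 1). Then for every Bloch vector r with ‖r‖₂ ≤ 1, the estimator ρ(r̂) satisfies E_r[ ‖ρ(r̂)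 − ρ(r)‖_Tr² ] ≤ 3(α² + 1)² / (16 α² n), where the expectation is over the 3n independent measurement outcomes. -/
open scoped BigOperators ComplexOrder
open Matrix

/-! ### Auxiliary lemmas -/

lemma trace_eq_sum_eigs {m : Type*} [Fintype m] [DecidableEq m] {A : Matrix m m ℂ}
    (hA : A.IsHermitian) : A.trace = ∑ i, (hA.eigenvalues i : ℂ) := by
  conv_lhs => rw [hA.spectral_theorem, Unitary.conjStarAlgAut_apply]
  rw [Matrix.trace_mul_cycle]
  rw [show (star (hA.eigenvectorUnitary : Matrix m m ℂ)) * (hA.eigenvectorUnitary : Matrix m m ℂ)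
      = 1 from Unitary.coe_star_mul_self _]
  simp [Matrix.trace_diagonal]

lemma blochState_sub_entries (a b : Fin 3 → ℝ) :
    blochState a - blochState b =
      (2:ℂ)⁻¹ • !![((a 2 - b 2 : ℝ) : ℂ), ((a 0 - b 0 : ℝ) : ℂ) - ((a 1 - b 1 : ℝ) : ℂ)*Complex.I;
                   ((a 0 - b 0 : ℝ) : ℂ) + ((a 1 - b 1 : ℝ) : ℂ)*Complex.I, -((a 2 - b 2 : ℝ) : ℂ)] := by
  ext i j
  fin_cases i <;> fin_cases j <;>
    simp [blochState, sigx, sigy, sigz, Matrix.one_apply] <;> push_cast <;> ring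

lemma bloch_sub_herm (a b : Fin 3 → ℝ) : (blochState a - blochState b).IsHermitian := by
  rw [blochState_sub_entries]
  unfold Matrix.IsHermitian
  ext i j
  fin_cases i <;> fin_cases j <;>
    simp [Matrix.conjTranspose_apply] <;> push_cast <;> ring

lemma traceDist_bloch_sq (a b : Fin 3 → ℝ) :
    traceDist (blochState a) (blochState b) ^ 2 = (∑ i, (a i - b i)^2) / 4 := by
  have hA : (blochState a - blochState b).IsHermitian := bloch_sub_herm a b
  have htr : (blochState a - blochState b).trace = 0 := by
    rw [blochState_sub_entries, Matrix.trace_smul, Matrix.trace_fin_two_of]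
    simp
  have hdet : (blochState a - blochState b).det = -((((∑ i, (a i - b i)^2 : ℝ)) / 4 : ℝ) : ℂ) := by
    rw [blochState_sub_entries, Matrix.det_smul, Matrix.det_fin_two_of]
    rw [Fin.sum_univ_three]
    push_cast
    simp only [smul_eq_mul, Fintype.card_fin]
    linear_combination (((a 1 : ℝ) : ℂ) - ((b 1 : ℝ) : ℂ))^2/4 * Complex.I_sq
  have h1 : hA.eigenvalues 0 + hA.eigenvalues 1 = 0 := by
    have h := trace_eq_sum_eigs hA
    rw [htr, Fin.sum_univ_two] at h
    exact_mod_cast h.symm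
  have h2 : hA.eigenvalues 0 * hA.eigenvalues 1 = -((∑ i, (a i - b i)^2) / 4) := by
    have h := hA.det_eq_prod_eigenvalues
    rw [hdet, Fin.prod_univ_two] at h
    have h' : -(((∑ i, (a i - b i)^2 : ℝ) / 4 : ℝ) : ℂ)
        = ((hA.eigenvalues 0 : ℝ) : ℂ) * ((hA.eigenvalues 1 : ℝ) : ℂ) := h
    exact_mod_cast h'.symm
  rw [traceDist, dif_pos hA, Fin.sum_univ_two]
  have hl1 : hA.eigenvalues 1 = - hA.eigenvalues 0 := by linarith
  rw [hl1] at h2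
  rw [hl1, abs_neg, show (|hA.eigenvalues 0| + |hA.eigenvalues 0|) / 2 = |hA.eigenvalues 0| by ring,
    sq_abs]
  linear_combination -h2

noncomputable def qw (μ : ℝ) (b : Bool) : ℝ := if b then 1/2 + μ/2 else 1/2 - μ/2
noncomputable def ep (b : Bool) : ℝ := if b then 1 else -1

lemma sum_pi_prod {ι : Type*} [Fintype ι] [DecidableEq ι] {κ : ι → Type*}
    [∀ i, Fintype (κ i)] [∀ i, DecidableEq (κ i)] (g : ∀ i, κ i → ℝ) :
    ∑ ω : ∀ i, κ i, ∏ i, g i (ω i) = ∏ i, ∑ s, g i s := by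
  rw [Finset.prod_univ_sum (fun _ => Finset.univ) g, Fintype.piFinset_univ]

lemma mass_one (n : ℕ) (μ : ℝ) :
    ∑ σ : Fin n → Bool, ∏ k, qw μ (σ k) = 1 := by
  rw [sum_pi_prod]
  apply Finset.prod_eq_one
  intro k _
  simp [qw, Fintype.sum_bool]
  ring

lemma momentC (n : ℕ) (μ : ℝ) (i j : Fin n) :
    ∑ ω : Fin n → Bool, (∏ k, qw μ (ω k)) * ((ep (ω i) - μ) * (ep (ω j) - μ))
      = if i = j then 1 - μ^2 else 0 := by
  have key : ∀ ω : Fin n → Bool, (∏ k, qw μ (ω k)) * ((ep (ω i) - μ) * (ep (ω j) - μ))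
      = ∏ k, (qw μ (ω k) * ((if k = i then ep (ω k) - μ else 1) * (if k = j then ep (ω k) - μ else 1))) := by
    intro ω
    rw [Finset.prod_mul_distrib, Finset.prod_mul_distrib, Finset.prod_ite_eq', Finset.prod_ite_eq']
    simp
  simp_rw [key]
  rw [sum_pi_prod (fun k b => qw μ b * ((if k = i then ep b - μ else 1) * (if k = j then ep b - μ else 1)))]
  by_cases hij : i = j
  · subst hij
    rw [if_pos rfl]
    have hfac : ∀ k : Fin n,
        (∑ b, qw μ b * ((if k = i then ep b - μ else 1) * (if k = i then ep b - μ else 1)))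
          = if k = i then 1 - μ^2 else 1 := by
      intro k
      by_cases h : k = i <;> simp [h, qw, ep, Fintype.sum_bool] <;> ring
    calc ∏ k, ∑ b, qw μ b * ((if k = i then ep b - μ else 1) * (if k = i then ep b - μ else 1))
        = ∏ k, (if k = i then 1 - μ^2 else 1) := Finset.prod_congr rfl (fun k _ => hfac k)
      _ = 1 - μ^2 := by rw [Finset.prod_ite_eq']; simp
  · rw [if_neg hij]
    apply Finset.prod_eq_zero (Finset.mem_univ i)
    have : (i = j) = False := by simp [hij]
    simp [this, qw, ep, Fintype.sum_bool]
    ring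

lemma axis_mse (n : ℕ) (hn : 0 < n) (μ : ℝ) :
    ∑ ω : Fin n → Bool, (∏ k, qw μ (ω k)) * ((∑ k, ep (ω k))/n - μ)^2 = (1 - μ^2)/n := by
  have hn0 : (n:ℝ) ≠ 0 := Nat.cast_ne_zero.2 hn.ne'
  have h1 : ∀ ω : Fin n → Bool, (∏ k, qw μ (ω k)) * ((∑ k, ep (ω k))/n - μ)^2
      = (1/(n:ℝ)^2) * ∑ i, ∑ j, ((∏ k, qw μ (ω k)) * ((ep (ω i) - μ) * (ep (ω j) - μ))) := by
    intro ω
    have hc : (∑ k, ep (ω k))/n - μ = (∑ k, (ep (ω k) - μ))/n := by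
      rw [Finset.sum_sub_distrib, Finset.sum_const, Finset.card_univ, Fintype.card_fin,
        nsmul_eq_mul]
      field_simp
    rw [hc, div_pow, sq, Finset.sum_mul_sum]
    rw [eq_comm]
    simp_rw [← Finset.mul_sum]
    ring
  calc ∑ ω : Fin n → Bool, (∏ k, qw μ (ω k)) * ((∑ k, ep (ω k))/n - μ)^2
      = ∑ ω : Fin n → Bool, (1/(n:ℝ)^2) * ∑ i, ∑ j, ((∏ k, qw μ (ω k)) * ((ep (ω i) - μ) * (ep (ω j) - μ))) :=
        Finset.sum_congr rfl (fun ω _ => h1 ω)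
    _ = (1/(n:ℝ)^2) * ∑ ω : Fin n → Bool, ∑ i, ∑ j, ((∏ k, qw μ (ω k)) * ((ep (ω i) - μ) * (ep (ω j) - μ))) := by
        rw [Finset.mul_sum]
    _ = (1/(n:ℝ)^2) * ∑ i, ∑ j, ∑ ω : Fin n → Bool, ((∏ k, qw μ (ω k)) * ((ep (ω i) - μ) * (ep (ω j) - μ))) := by
        rw [Finset.sum_comm]
        congr 1
        exact Finset.sum_congr rfl (fun i _ => Finset.sum_comm)
    _ = (1/(n:ℝ)^2) * ∑ i : Fin n, ∑ j : Fin n, (if i = j then 1 - μ^2 else 0) := by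
        congr 1
        exact Finset.sum_congr rfl (fun i _ => Finset.sum_congr rfl (fun j _ => momentC n μ i j))
    _ = (1/(n:ℝ)^2) * ∑ i : Fin n, (1 - μ^2) := by
        congr 1
        exact Finset.sum_congr rfl (fun i _ => by rw [Finset.sum_ite_eq]; simp)
    _ = (1 - μ^2)/n := by
        rw [Finset.sum_const, Finset.card_univ, Fintype.card_fin, nsmul_eq_mul]
        field_simp

lemma full_sum (n : ℕ) (μ : Fin 3 → ℝ) (f : Fin 3 → (Fin n → Bool) → ℝ) :
    ∑ ω : Fin 3 → Fin n → Bool, (∏ a, ∏ k, qw (μ a) (ω a k)) * (∑ a, f a (ω a))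
      = ∑ a, ∑ σ : Fin n → Bool, (∏ k, qw (μ a) (σ k)) * f a σ := by
  have h1 : ∀ ω : Fin 3 → Fin n → Bool,
      (∏ a, ∏ k, qw (μ a) (ω a k)) * (∑ a, f a (ω a))
        = ∑ a, (∏ b, ((∏ k, qw (μ b) (ω b k)) * (if b = a then f a (ω b) else 1))) := by
    intro ω
    rw [Finset.mul_sum]
    apply Finset.sum_congr rfl
    intro a _
    rw [Finset.prod_mul_distrib, Finset.prod_ite_eq']
    simp
  simp_rw [h1]
  rw [Finset.sum_comm]
  apply Finset.sum_congr rfl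
  intro a _
  rw [sum_pi_prod (fun b σ => (∏ k, qw (μ b) (σ k)) * (if b = a then f a σ else 1))]
  have hfac : ∀ b : Fin 3, (∑ σ : Fin n → Bool, (∏ k, qw (μ b) (σ k)) * (if b = a then f a σ else 1))
      = if b = a then (∑ σ : Fin n → Bool, (∏ k, qw (μ a) (σ k)) * f a σ) else 1 := by
    intro b
    by_cases h : b = a
    · subst h; simp
    · simp [h, mass_one n (μ b)]
  calc ∏ b, ∑ σ : Fin n → Bool, (∏ k, qw (μ b) (σ k)) * (if b = a then f a σ else 1)
      = ∏ b, (if b = a then (∑ σ : Fin n → Bool, (∏ k, qw (μ a) (σ k)) * f a σ) else 1) :=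
        Finset.prod_congr rfl (fun b _ => hfac b)
    _ = ∑ σ : Fin n → Bool, (∏ k, qw (μ a) (σ k)) * f a σ := by rw [Finset.prod_ite_eq']; simp

lemma proj_contract (t r : Fin 3 → ℝ) (hr2 : ∑ a, r a ^ 2 ≤ 1) :
    ∑ a, (t a / max (Real.sqrt (∑ b, t b ^ 2)) 1 - r a)^2 ≤ ∑ a, (t a - r a)^2 := by
  set m := max (Real.sqrt (∑ b, t b ^ 2)) 1 with hmdef
  have hm1 : (1:ℝ) ≤ m := le_max_right _ _
  have hm0 : (0:ℝ) < m := lt_of_lt_of_le one_pos hm1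
  have hgoal : ∑ a, (t a / m - r a)^2 = (∑ a, (t a - m * r a)^2) / m^2 := by
    rw [Finset.sum_div]
    apply Finset.sum_congr rfl
    intro a _
    field_simp
  rw [hgoal, div_le_iff₀ (by positivity)]
  by_cases hcase : Real.sqrt (∑ b, t b ^ 2) ≤ 1
  · have hm : m = 1 := max_eq_right hcase
    simp [hm]
  · have hm : m = Real.sqrt (∑ b, t b ^ 2) := max_eq_left (le_of_not_ge hcase)
    have hm2 : m^2 = ∑ b, t b ^ 2 := by
      rw [hm]
      exact Real.sq_sqrt (by positivity)
    have cs : (∑ a, t a * r a)^2 ≤ (∑ a, t a ^ 2) * (∑ a, r a ^ 2) :=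
      Finset.sum_mul_sq_le_sq_mul_sq Finset.univ t r
    have hSm : ∑ a, t a * r a ≤ m := by
      nlinarith [cs, hm2, hr2, Finset.sum_nonneg (fun a (_ : a ∈ Finset.univ) => sq_nonneg (t a))]
    simp only [Fin.sum_univ_three] at *
    have hkey : 0 ≤ (m - 1) * (m * ((m + 1) * m - 2 * (t 0 * r 0 + t 1 * r 1 + t 2 * r 2))) := by
      apply mul_nonneg (by linarith)
      apply mul_nonneg hm0.le
      nlinarith [hSm, hm1, hm0]
    have key2 : ((t 0 - r 0)^2 + (t 1 - r 1)^2 + (t 2 - r 2)^2) * m^2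
        - ((t 0 - m*r 0)^2 + (t 1 - m*r 1)^2 + (t 2 - m*r 2)^2)
        = (m-1)*((m+1)*(t 0^2 + t 1^2 + t 2^2) - 2*m*(t 0*r 0 + t 1*r 1 + t 2*r 2)) := by
      ring
    rw [← hm2] at key2
    nlinarith [hkey, key2]

/-- mean-squared error of the quantum-Label-Switch tomography
estimator for qubits. -/
theorem qLS_tomography_upper_bound (α : ℝ) (hα0 : 0 < α) (hα : α < 1)
    (n : ℕ) (hn : 1 ≤ n)
    (r : Fin 3 → ℝ) (hr : Real.sqrt (∑ a, r a ^ 2) ≤ 1) :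
    let δ : ℝ := 4 * arctanh α
    let c : ℝ := (Real.exp δ - 1) / (Real.exp δ + 1)
    -- probability of the full outcome table `ω` (3n independent ±1 outcomes)
    let P : (Fin 3 → Fin n → Bool) → ℝ := fun ω =>
      ∏ a, ∏ k, (if ω a k then 1/2 + 1/2 * c * r a else 1/2 - 1/2 * c * r a)
    -- rescaled empirical averages
    let rt : (Fin 3 → Fin n → Bool) → Fin 3 → ℝ := fun ω a =>
      ((Real.exp δ + 1) / (Real.exp δ - 1))
        * ((∑ k, (if ω a k then (1:ℝ) else -1)) / n)
    -- projection onto the Bloch ball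
    let rh : (Fin 3 → Fin n → Bool) → Fin 3 → ℝ := fun ω a =>
      rt ω a / max (Real.sqrt (∑ b, rt ω b ^ 2)) 1
    ∑ ω : Fin 3 → Fin n → Bool,
        P ω * traceDist (blochState (rh ω)) (blochState r) ^ 2
      ≤ 3 * (α ^ 2 + 1) ^ 2 / (16 * α ^ 2 * n) := by
  intro δ c P rt rh
  have hδdef : δ = 4 * arctanh α := rfl
  have hcdef : c = (Real.exp δ - 1) / (Real.exp δ + 1) := rfl
  have hn0 : (n:ℝ) ≠ 0 := Nat.cast_ne_zero.2 (by omega)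
  have hnpos : (0:ℝ) < n := by positivity
  have h1α : (0:ℝ) < 1 - α := by linarith
  have hu : (0:ℝ) < (1+α)/(1-α) := by positivity
  have hexp : Real.exp δ = ((1+α)/(1-α))^2 := by
    rw [hδdef]
    unfold arctanh
    rw [show 4 * (Real.log ((1 + α) / (1 - α)) / 2)
        = Real.log ((1+α)/(1-α)) + Real.log ((1+α)/(1-α)) by ring,
      Real.exp_add, Real.exp_log hu, sq]
  have hden : ((1+α)/(1-α))^2 + 1 ≠ 0 := by positivity
  have h1a : (1-α) ≠ 0 := h1α.ne'
  have h2a : (1+α^2) ≠ 0 := by positivity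
  have hc : c = 2*α/(1+α^2) := by
    rw [hcdef, hexp]
    field_simp
    ring
  have hc0 : 0 < c := by rw [hc]; positivity
  have hc1 : c ≤ 1 := by
    rw [hc, div_le_one (by positivity)]
    nlinarith [sq_nonneg (1-α)]
  have hs : (Real.exp δ + 1)/(Real.exp δ - 1) = c⁻¹ := by
    rw [hcdef, inv_div]
  have hr2 : ∑ a, r a ^ 2 ≤ 1 := by
    nlinarith [Real.sq_sqrt (show (0:ℝ) ≤ ∑ a, r a ^ 2 by positivity),
      Real.sqrt_nonneg (∑ a, r a ^ 2), hr]
  have hra : ∀ a, r a ^ 2 ≤ 1 := fun a =>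
    le_trans (Finset.single_le_sum (f := fun a => r a ^ 2)
      (fun i _ => sq_nonneg _) (Finset.mem_univ a)) hr2
  have hP : ∀ ω, P ω = ∏ a, ∏ k, qw (c * r a) (ω a k) := by
    intro ω
    apply Finset.prod_congr rfl
    intro a _
    apply Finset.prod_congr rfl
    intro k _
    cases ω a k <;> simp [qw] <;> ring
  have hP0 : ∀ ω, 0 ≤ P ω := by
    intro ω
    rw [hP]
    apply Finset.prod_nonneg
    intro a _
    apply Finset.prod_nonneg
    intro k _
    have hb1 : (0:ℝ) ≤ 1/2 + c * r a / 2 := by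
      nlinarith [hra a, hc0, hc1, sq_nonneg (r a - 1), sq_nonneg (r a + 1)]
    have hb2 : (0:ℝ) ≤ 1/2 - c * r a / 2 := by
      nlinarith [hra a, hc0, hc1, sq_nonneg (r a - 1), sq_nonneg (r a + 1)]
    cases ω a k
    · simpa [qw] using hb2
    · simpa [qw] using hb1
  have hpt : ∀ ω, traceDist (blochState (rh ω)) (blochState r) ^ 2
      ≤ (∑ a, (rt ω a - r a)^2)/4 := by
    intro ω
    rw [traceDist_bloch_sq]
    have h2 : ∑ a, (rh ω a - r a)^2 ≤ ∑ a, (rt ω a - r a)^2 := proj_contract (rt ω) r hr2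
    linarith
  have hrt : ∀ ω a, rt ω a - r a = c⁻¹ * ((∑ k, ep (ω a k))/n - c * r a) := by
    intro ω a
    have h1 : rt ω a = c⁻¹ * ((∑ k, ep (ω a k))/n) := by
      show (Real.exp δ + 1)/(Real.exp δ - 1) * ((∑ k, (if ω a k then (1:ℝ) else -1))/n) = _
      rw [hs]
      rfl
    rw [h1, mul_sub, ← mul_assoc, inv_mul_cancel₀ hc0.ne', one_mul]
  have hstep : ∀ ω, P ω * ((∑ a, (rt ω a - r a)^2)/4)
      = (c⁻¹^2/4) * ((∏ a, ∏ k, qw (c * r a) (ω a k))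
          * (∑ a, ((∑ k, ep (ω a k))/n - c * r a)^2)) := by
    intro ω
    rw [hP ω]
    have h3 : ∑ a, (rt ω a - r a)^2 = c⁻¹^2 * ∑ a, ((∑ k, ep (ω a k))/n - c * r a)^2 := by
      rw [Finset.mul_sum]
      exact Finset.sum_congr rfl (fun a _ => by rw [hrt ω a, mul_pow])
    rw [h3]
    ring
  calc ∑ ω : Fin 3 → Fin n → Bool, P ω * traceDist (blochState (rh ω)) (blochState r) ^ 2
      ≤ ∑ ω : Fin 3 → Fin n → Bool, P ω * ((∑ a, (rt ω a - r a)^2)/4) :=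
        Finset.sum_le_sum (fun ω _ => mul_le_mul_of_nonneg_left (hpt ω) (hP0 ω))
    _ = (c⁻¹^2/4) * ∑ ω : Fin 3 → Fin n → Bool, (∏ a, ∏ k, qw (c * r a) (ω a k))
          * (∑ a, ((∑ k, ep (ω a k))/n - c * r a)^2) := by
        rw [Finset.mul_sum]
        exact Finset.sum_congr rfl (fun ω _ => hstep ω)
    _ = (c⁻¹^2/4) * ∑ a, ∑ σ : Fin n → Bool, (∏ k, qw (c * r a) (σ k))
          * ((∑ k, ep (σ k))/n - c * r a)^2 := by
        rw [full_sum n (fun a => c * r a) (fun a σ => ((∑ k, ep (σ k))/n - c * r a)^2)]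
    _ = (c⁻¹^2/4) * ∑ a, (1 - (c * r a)^2)/n := by
        congr 1
        exact Finset.sum_congr rfl (fun a _ => axis_mse n (by omega) (c * r a))
    _ ≤ (c⁻¹^2/4) * (3/n) := by
        apply mul_le_mul_of_nonneg_left _ (by positivity)
        calc ∑ a : Fin 3, (1 - (c * r a)^2)/n ≤ ∑ a : Fin 3, (1:ℝ)/(n:ℝ) :=
              Finset.sum_le_sum (fun a _ => by
                gcongr
                nlinarith [sq_nonneg (c * r a)])
          _ = 3/(n:ℝ) := by
              rw [Finset.sum_const, Finset.card_univ, Fintype.card_fin, nsmul_eq_mul]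
              ring
    _ = 3 * (α ^ 2 + 1) ^ 2 / (16 * α ^ 2 * n) := by
        rw [hc]
        field_simp
        ring
end

section
/- Let α ∈ (0,1), δ = 4·arctanh(α), n ≥ 1, ε > 0, and let ρ0 = ρ(r0) be a fixed qubit. Let ρ̂_n = ρ(r̂) be the quantum-Label-Switch tomography estimator built from 3n independent α-gentle qLS outcomes (n per Pauli axis), which satisfies sup_r E_r[‖ρ(r̂) − ρ(r)‖_Tr²] ≤ 3(α²+1)²/(16 α² n). Define the test Δ that decides 1 if ‖ρ̂_n − ρ0‖_Tr > ε/2 and 0 otherwise. Then P_{ρ0}(Δ = 1) + sup_{ρ : ‖ρ − ρ0‖_Tr ≥ ε} P_{ρ}(Δ = 0) ≤ (3(1+α²)²/2) · 1/(n ε² α²). -/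
open scoped BigOperators ComplexOrder
open Matrix

open Finset

section ProdMeasure
variable {ι β : Type*} [Fintype ι] [Fintype β] [DecidableEq ι]

lemma sum_prod_eq (w : ι → β → ℝ) :
    ∑ ω : ι → β, ∏ i, w i (ω i) = ∏ i, ∑ b, w i b :=
  (Fintype.prod_sum w).symm

omit [Fintype β] in
lemma prod_apply_pair {h g : β → ℝ} {u : ι → β → ℝ} {k l : ι} (hkl : k ≠ l)
    (huk : u k = h) (hul : u l = g) (hui : ∀ i, i ≠ k → i ≠ l → u i = fun _ => (1:ℝ))
    (v : ι → β) : ∏ i, u i (v i) = h (v k) * g (v l) := by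
  rw [← Finset.mul_prod_erase univ (fun i => u i (v i)) (mem_univ k),
    ← Finset.mul_prod_erase (univ.erase k) (fun i => u i (v i))
      (Finset.mem_erase.2 ⟨hkl.symm, mem_univ l⟩)]
  rw [Finset.prod_eq_one, huk, hul, mul_one]
  intro i hi
  simp only [Finset.mem_erase] at hi
  rw [hui i hi.2.1 hi.1]

omit [Fintype β] in
lemma prod_apply_single {h : β → ℝ} {u : ι → β → ℝ} {k : ι}
    (huk : u k = h) (hui : ∀ i, i ≠ k → u i = fun _ => (1:ℝ))
    (v : ι → β) : ∏ i, u i (v i) = h (v k) := by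
  rw [Finset.prod_eq_single k]
  · rw [huk]
  · intro i _ hik; rw [hui i hik]
  · simp

lemma expect_single (w : ι → β → ℝ) (hw : ∀ i, ∑ b, w i b = 1) (k : ι) (h : β → ℝ) :
    ∑ ω : ι → β, (∏ i, w i (ω i)) * h (ω k) = ∑ b, w k b * h b := by
  classical
  obtain ⟨u, huk, hui⟩ : ∃ u : ι → β → ℝ, u k = h ∧ ∀ i, i ≠ k → u i = fun _ => (1:ℝ) :=
    ⟨Function.update (fun _ : ι => fun _ : β => (1:ℝ)) k h, Function.update_self _ _ _,
      fun i hik => Function.update_of_ne hik _ _⟩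
  calc ∑ ω : ι → β, (∏ i, w i (ω i)) * h (ω k)
      = ∑ ω : ι → β, ∏ i, (w i (ω i) * u i (ω i)) :=
        Finset.sum_congr rfl fun ω _ => by
          rw [Finset.prod_mul_distrib, prod_apply_single huk hui ω]
    _ = ∏ i, ∑ b, w i b * u i b := sum_prod_eq (fun i b => w i b * u i b)
    _ = ∑ b, w k b * h b := by
        refine (prod_apply_single (u := fun i => fun _ : Unit => ∑ b, w i b * u i b)
          (h := fun _ => ∑ b, w k b * h b) (k := k) ?_ ?_ (fun _ => ())).trans rfl
        · funext; simp [huk]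
        · intro i hik; funext; simp [hui i hik, hw i]

lemma expect_pair (w : ι → β → ℝ) (hw : ∀ i, ∑ b, w i b = 1) {k l : ι} (hkl : k ≠ l)
    (h g : β → ℝ) :
    ∑ ω : ι → β, (∏ i, w i (ω i)) * (h (ω k) * g (ω l))
      = (∑ b, w k b * h b) * (∑ b, w l b * g b) := by
  classical
  obtain ⟨u, huk, hul, hui⟩ : ∃ u : ι → β → ℝ, u k = h ∧ u l = g ∧
      ∀ i, i ≠ k → i ≠ l → u i = fun _ => (1:ℝ) := by
    refine ⟨Function.update (Function.update (fun _ : ι => fun _ : β => (1:ℝ)) k h) l g,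
      ?_, Function.update_self _ _ _, fun i hik hil => ?_⟩
    · rw [Function.update_of_ne hkl, Function.update_self]
    · rw [Function.update_of_ne hil, Function.update_of_ne hik]
  calc ∑ ω : ι → β, (∏ i, w i (ω i)) * (h (ω k) * g (ω l))
      = ∑ ω : ι → β, ∏ i, (w i (ω i) * u i (ω i)) :=
        Finset.sum_congr rfl fun ω _ => by
          rw [Finset.prod_mul_distrib, prod_apply_pair hkl huk hul hui ω]
    _ = ∏ i, ∑ b, w i b * u i b := sum_prod_eq (fun i b => w i b * u i b)
    _ = (∑ b, w k b * h b) * (∑ b, w l b * g b) := by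
        refine (prod_apply_pair (u := fun i => fun _ : Unit => ∑ b, w i b * u i b)
          (h := fun _ => ∑ b, w k b * h b) (g := fun _ => ∑ b, w l b * g b)
          hkl ?_ ?_ ?_ (fun _ => ())).trans rfl
        · funext; simp [huk]
        · funext; simp [hul]
        · intro i hik hil; funext; simp [hui i hik hil, hw i]
end ProdMeasure

section Axis
variable {n : ℕ}

lemma axis_sq (p : Bool → ℝ) (hp : p true + p false = 1) :
    ∑ τ : Fin n → Bool, (∏ k, p (τ k)) *
        (∑ k, ((if τ k then (1:ℝ) else -1) - (p true - p false))) ^ 2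
      = n * (1 - (p true - p false) ^ 2) := by
  classical
  set μ : ℝ := p true - p false with hμ
  set f : Bool → ℝ := fun b => (if b then (1:ℝ) else -1) - μ with hf
  have hw : ∀ _ : Fin n, ∑ b, p b = 1 := fun _ => by rw [Fintype.sum_bool]; exact hp
  have hpf : p false = 1 - p true := by linarith
  have hft : f true = 1 - μ := by simp [hf]
  have hff : f false = -1 - μ := by simp [hf]
  have E1 : ∑ b, p b * f b = 0 := by
    rw [Fintype.sum_bool, hft, hff, hμ, hpf]; ring
  have E2 : ∑ b, p b * f b ^ 2 = 1 - μ ^ 2 := by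
    rw [Fintype.sum_bool, hft, hff, hμ, hpf]; ring
  calc ∑ τ : Fin n → Bool, (∏ k, p (τ k)) * (∑ k, f (τ k)) ^ 2
      = ∑ τ : Fin n → Bool, ∑ k, ∑ l, (∏ k, p (τ k)) * (f (τ k) * f (τ l)) := by
        refine Finset.sum_congr rfl fun τ _ => ?_
        rw [sq, Finset.sum_mul_sum, Finset.mul_sum]
        exact Finset.sum_congr rfl fun k _ => by rw [Finset.mul_sum]
    _ = ∑ k, ∑ l : Fin n, ∑ τ : Fin n → Bool, (∏ k, p (τ k)) * (f (τ k) * f (τ l)) := by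
        rw [Finset.sum_comm]
        exact Finset.sum_congr rfl fun k _ => Finset.sum_comm
    _ = ∑ k, ∑ l : Fin n, (if l = k then 1 - μ ^ 2 else 0) := by
        refine Finset.sum_congr rfl fun k _ => Finset.sum_congr rfl fun l _ => ?_
        by_cases hkl : l = k
        · subst hkl
          rw [if_pos rfl]
          have h2 := expect_single (β := Bool) (fun _ : Fin n => p) hw l (fun b => f b ^ 2)
          calc ∑ τ : Fin n → Bool, (∏ k, p (τ k)) * (f (τ l) * f (τ l))
              = ∑ τ : Fin n → Bool, (∏ k, p (τ k)) * (fun b => f b ^ 2) (τ l) :=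
                Finset.sum_congr rfl fun τ _ => by rw [← sq]
            _ = 1 - μ ^ 2 := h2.trans E2
        · rw [if_neg hkl]
          have h3 := expect_pair (β := Bool) (fun _ : Fin n => p) hw (Ne.symm hkl) f f
          rw [h3, E1, mul_zero]
    _ = n * (1 - μ ^ 2) := by
        simp [Finset.sum_ite_eq]; ring
end Axis

section Geom

lemma sqrt_sum_sq_triangle (x y z : Fin 3 → ℝ) :
    Real.sqrt (∑ a, (x a - z a) ^ 2)
      ≤ Real.sqrt (∑ a, (x a - y a) ^ 2) + Real.sqrt (∑ a, (y a - z a) ^ 2) := by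
  have key : ∀ u v : Fin 3 → ℝ,
      ‖(WithLp.equiv 2 (Fin 3 → ℝ)).symm u - (WithLp.equiv 2 (Fin 3 → ℝ)).symm v‖
        = Real.sqrt (∑ a, (u a - v a) ^ 2) := by
    intro u v
    rw [EuclideanSpace.norm_eq]
    congr 1
    refine Finset.sum_congr rfl fun a _ => ?_
    have h : ((WithLp.equiv 2 (Fin 3 → ℝ)).symm u - (WithLp.equiv 2 (Fin 3 → ℝ)).symm v) a
        = u a - v a := by simp
    rw [h, Real.norm_eq_abs, sq_abs]
  rw [← key, ← key, ← key]
  exact norm_sub_le_norm_sub_add_norm_sub _ _ _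

lemma cauchy_sum (x y : Fin 3 → ℝ) (hx : Real.sqrt (∑ a, x a ^ 2) ≤ t) (ht : 0 ≤ t)
    (hy : Real.sqrt (∑ a, y a ^ 2) ≤ 1) : ∑ a, x a * y a ≤ t := by
  have hx2 : ∑ a, x a ^ 2 ≤ t ^ 2 := by
    have h0 : (0:ℝ) ≤ ∑ a, x a ^ 2 := Finset.sum_nonneg fun a _ => sq_nonneg _
    nlinarith [Real.sq_sqrt h0, Real.sqrt_nonneg (∑ a, x a ^ 2)]
  have hy2 : ∑ a, y a ^ 2 ≤ 1 := by
    have h0 : (0:ℝ) ≤ ∑ a, y a ^ 2 := Finset.sum_nonneg fun a _ => sq_nonneg _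
    nlinarith [Real.sq_sqrt h0, Real.sqrt_nonneg (∑ a, y a ^ 2)]
  have hCS := Finset.sum_mul_sq_le_sq_mul_sq Finset.univ x y
  nlinarith [hCS, hx2, hy2, Finset.sum_nonneg (fun a (_ : a ∈ Finset.univ) => sq_nonneg (x a))]

lemma proj_le (v r : Fin 3 → ℝ) (hr : Real.sqrt (∑ a, r a ^ 2) ≤ 1) :
    ∑ a, (v a / max (Real.sqrt (∑ b, v b ^ 2)) 1 - r a) ^ 2 ≤ ∑ a, (v a - r a) ^ 2 := by
  rcases le_or_gt (Real.sqrt (∑ b, v b ^ 2)) 1 with h | h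
  · rw [max_eq_right h]
    simp
  · rw [max_eq_left h.le]
    set t : ℝ := Real.sqrt (∑ b, v b ^ 2) with hts
    have ht1 : 1 < t := h
    have ht0 : 0 < t := lt_trans one_pos ht1
    have hQ : ∑ b, v b ^ 2 = t ^ 2 := by
      rw [hts, Real.sq_sqrt (Finset.sum_nonneg fun a _ => sq_nonneg _)]
    have hB : ∑ a, v a * r a ≤ t := cauchy_sum v r le_rfl ht0.le hr
    have expandL : ∑ a, (v a / t - r a) ^ 2
        = (∑ a, v a ^ 2) * (1 / t ^ 2) - (∑ a, v a * r a) * (2 / t) + ∑ a, r a ^ 2 := by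
      have he : ∀ a : Fin 3, (v a / t - r a) ^ 2
          = v a ^ 2 * (1 / t ^ 2) - v a * r a * (2 / t) + r a ^ 2 := fun a => by
        field_simp; ring
      rw [Finset.sum_congr rfl fun a _ => he a, Finset.sum_add_distrib,
        Finset.sum_sub_distrib, ← Finset.sum_mul, ← Finset.sum_mul]
    have expandR : ∑ a, (v a - r a) ^ 2
        = (∑ a, v a ^ 2) - (∑ a, v a * r a) * 2 + ∑ a, r a ^ 2 := by
      have he : ∀ a : Fin 3, (v a - r a) ^ 2
          = v a ^ 2 - v a * r a * 2 + r a ^ 2 := fun a => by ring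
      rw [Finset.sum_congr rfl fun a _ => he a, Finset.sum_add_distrib,
        Finset.sum_sub_distrib, ← Finset.sum_mul]
    rw [expandL, expandR, hQ]
    have h3 : (∑ a, v a * r a) / t ≤ 1 := (div_le_one ht0).2 hB
    have h4 : (∑ a, v a * r a) = ((∑ a, v a * r a) / t) * t := by field_simp
    set s : ℝ := (∑ a, v a * r a) / t with hsdef
    rw [h4]
    have h1 : t ^ 2 * (1 / t ^ 2) = 1 := by field_simp
    have h5 : s * t * (2 / t) = 2 * s := by field_simp
    rw [h1, h5]
    nlinarith [mul_nonneg (sub_nonneg.2 ht1.le) (sub_nonneg.2 h3), sq_nonneg (t - 1)]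

end Geom

section TraceDist

noncomputable def pauliM (w : Fin 3 → ℝ) : Matrix (Fin 2) (Fin 2) ℂ :=
  !![(w 2 : ℂ)/2, ((w 0 : ℂ) - (w 1 : ℂ) * Complex.I)/2;
     ((w 0 : ℂ) + (w 1 : ℂ) * Complex.I)/2, -(w 2 : ℂ)/2]

lemma blochState_sub (u v : Fin 3 → ℝ) :
    blochState u - blochState v = pauliM (fun a => u a - v a) := by
  ext i j
  fin_cases i <;> fin_cases j <;>
    simp [blochState, pauliM, sigx, sigy, sigz, Matrix.one_apply] <;> push_cast <;> ring

lemma pauliM_isHermitian (w : Fin 3 → ℝ) : (pauliM w).IsHermitian := by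
  show (pauliM w)ᴴ = pauliM w
  ext i j
  fin_cases i <;> fin_cases j <;>
    simp [pauliM, Matrix.conjTranspose_apply, Complex.ext_iff]

lemma pauliM_trace (w : Fin 3 → ℝ) : (pauliM w).trace = 0 := by
  rw [pauliM, Matrix.trace_fin_two_of]
  ring

lemma pauliM_det (w : Fin 3 → ℝ) :
    (pauliM w).det = -(((w 0 ^ 2 + w 1 ^ 2 + w 2 ^ 2 : ℝ) : ℂ)/4) := by
  rw [pauliM, Matrix.det_fin_two_of]
  push_cast
  linear_combination ((w 1 : ℂ) ^ 2 / 4) * Complex.I_sq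

lemma herm_trace_eq_sum {A : Matrix (Fin 2) (Fin 2) ℂ} (hA : A.IsHermitian) :
    A.trace = ∑ i, (hA.eigenvalues i : ℂ) := by
  nth_rewrite 1 [hA.spectral_theorem]
  rw [Unitary.conjStarAlgAut_apply]
  rw [Matrix.trace_mul_cycle]
  rw [Matrix.mem_unitaryGroup_iff'.mp (Matrix.IsHermitian.eigenvectorUnitary hA).2,
    one_mul, Matrix.trace_diagonal]
  simp

lemma traceDist_bloch (u v : Fin 3 → ℝ) :
    traceDist (blochState u) (blochState v) = Real.sqrt (∑ a, (u a - v a) ^ 2) / 2 := by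
  have hM := blochState_sub u v
  have hHerm : (blochState u - blochState v).IsHermitian := by
    rw [hM]; exact pauliM_isHermitian _
  rw [traceDist, dif_pos hHerm]
  have htr : ∑ i, (hHerm.eigenvalues i : ℂ) = 0 := by
    rw [← herm_trace_eq_sum hHerm, hM, pauliM_trace]
  have hdet := hHerm.det_eq_prod_eigenvalues
  conv at hdet => lhs; rw [hM]
  rw [pauliM_det] at hdet
  set x := hHerm.eigenvalues 0 with hx
  set y := hHerm.eigenvalues 1 with hy
  have hsum : x + y = 0 := by
    have := htr
    rw [Fin.sum_univ_two] at this
    exact_mod_cast this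
  set s : ℝ := ∑ a, (u a - v a) ^ 2 with hs
  have hs' : s = (u 0 - v 0) ^ 2 + (u 1 - v 1) ^ 2 + (u 2 - v 2) ^ 2 := by
    rw [hs, Fin.sum_univ_three]
  have hprodR : x * y = -(s/4) := by
    rw [Fin.prod_univ_two] at hdet
    rw [hs', hx, hy]
    have h2 := congrArg Complex.re hdet
    simpa [Complex.mul_re, ← Complex.ofReal_sub, ← Complex.ofReal_pow] using h2.symm
  have hy' : y = -x := by linarith
  rw [hy'] at hprodR
  have hx2 : x ^ 2 = s / 4 := by nlinarith [hprodR]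
  have hs0 : 0 ≤ s := Finset.sum_nonneg fun a _ => sq_nonneg _
  rw [Fin.sum_univ_two, ← hx, ← hy, hy', abs_neg]
  have : |x| = Real.sqrt s / 2 := by
    rw [← Real.sqrt_sq_eq_abs, hx2]
    rw [show (4:ℝ) = 2 ^ 2 by norm_num, Real.sqrt_div hs0,
      Real.sqrt_sq (by norm_num : (0:ℝ) ≤ 2)]
  rw [this]
  ring

end TraceDist

section Cheb

lemma chebyshev_key (n : ℕ) (hn : 1 ≤ n) (c C : ℝ) (hc0 : 0 < c) (hc1 : c ≤ 1)
    (hC : C = 1/c) (ε : ℝ) (hε : 0 < ε) (r : Fin 3 → ℝ)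
    (hr : Real.sqrt (∑ a, r a ^ 2) ≤ 1)
    (S : (Fin 3 → Fin n → Bool) → Prop) [DecidablePred S]
    (hS : ∀ ω, S ω → ε ≤ Real.sqrt (∑ a,
      ((C * ((∑ k, (if ω a k then (1:ℝ) else -1)) / n))
          / max (Real.sqrt (∑ b, (C * ((∑ k, (if ω b k then (1:ℝ) else -1)) / n)) ^ 2)) 1
        - r a) ^ 2)) :
    (∑ ω : Fin 3 → Fin n → Bool, if S ω then
        ∏ a, ∏ k, (if ω a k then 1/2 + 1/2 * c * r a else 1/2 - 1/2 * c * r a) else 0)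
      ≤ 3 / (c ^ 2 * n * ε ^ 2) := by
  classical
  have hn0 : (0:ℝ) < n := by exact_mod_cast Nat.lt_of_lt_of_le Nat.zero_lt_one hn
  -- bound on coordinates of r
  have hr1 : ∑ a, r a ^ 2 ≤ 1 := by
    have h0 : (0:ℝ) ≤ ∑ a, r a ^ 2 := Finset.sum_nonneg fun a _ => sq_nonneg _
    nlinarith [Real.sq_sqrt h0, Real.sqrt_nonneg (∑ a, r a ^ 2)]
  have hra : ∀ a, |r a| ≤ 1 := by
    intro a
    rw [abs_le]
    constructor <;> nlinarith [Finset.sum_le_sum_of_subset_of_nonneg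
      (Finset.singleton_subset_iff.2 (Finset.mem_univ a))
      (fun b _ _ => sq_nonneg (r b)), Finset.sum_singleton (fun b => r b ^ 2) a, hr1]
  -- the per-axis single-outcome probabilities
  have hpnn : ∀ (a : Fin 3) (b : Bool),
      0 ≤ (if b then 1/2 + 1/2 * c * r a else 1/2 - 1/2 * c * r a) := by
    intro a b
    have h1 : |c * r a| ≤ 1 := by
      rw [abs_mul]
      calc |c| * |r a| ≤ 1 * 1 :=
        mul_le_mul (by rwa [abs_of_pos hc0]) (hra a) (abs_nonneg _) zero_le_one
      _ = 1 := by ring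
    rw [abs_le] at h1
    cases b <;> simp <;> linarith [h1.1, h1.2]
  -- the product weights per axis
  have hw : ∀ a : Fin 3, ∑ τ : Fin n → Bool,
      ∏ k, (if τ k then 1/2 + 1/2 * c * r a else 1/2 - 1/2 * c * r a) = 1 := by
    intro a
    rw [sum_prod_eq (fun (_ : Fin n) (b : Bool) => if b then 1/2 + 1/2 * c * r a else 1/2 - 1/2 * c * r a)]
    have : ∑ b : Bool, (if b then 1/2 + 1/2 * c * r a else 1/2 - 1/2 * c * r a) = (1:ℝ) := by
      rw [Fintype.sum_bool]; norm_num
    rw [Finset.prod_congr rfl fun k _ => this]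
    simp
  have hPnn : ∀ ω : Fin 3 → Fin n → Bool,
      0 ≤ ∏ a, ∏ k, (if ω a k then 1/2 + 1/2 * c * r a else 1/2 - 1/2 * c * r a) :=
    fun ω => Finset.prod_nonneg fun a _ => Finset.prod_nonneg fun k _ => hpnn a _
  -- abbreviations (as plain functions)
  set P : (Fin 3 → Fin n → Bool) → ℝ := fun ω =>
    ∏ a, ∏ k, (if ω a k then 1/2 + 1/2 * c * r a else 1/2 - 1/2 * c * r a) with hP
  set v : (Fin 3 → Fin n → Bool) → Fin 3 → ℝ := fun ω a =>
    C * ((∑ k, (if ω a k then (1:ℝ) else -1)) / n) with hv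
  set q : (Fin 3 → Fin n → Bool) → Fin 3 → ℝ := fun ω a =>
    v ω a / max (Real.sqrt (∑ b, v ω b ^ 2)) 1 with hq
  -- step 1 : Chebyshev pointwise
  have step1 : (∑ ω : Fin 3 → Fin n → Bool, if S ω then P ω else 0)
      ≤ ∑ ω : Fin 3 → Fin n → Bool, P ω * ((∑ a, (v ω a - r a) ^ 2) / ε ^ 2) := by
    refine Finset.sum_le_sum fun ω _ => ?_
    have hXnn : (0:ℝ) ≤ ∑ a, (v ω a - r a) ^ 2 :=
      Finset.sum_nonneg fun a _ => sq_nonneg _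
    by_cases hSw : S ω
    · rw [if_pos hSw]
      have h1 := hS ω hSw
      have hQnn : (0:ℝ) ≤ ∑ a, (q ω a - r a) ^ 2 :=
        Finset.sum_nonneg fun a _ => sq_nonneg _
      have h2 : ε ^ 2 ≤ ∑ a, (q ω a - r a) ^ 2 := by
        nlinarith [Real.sq_sqrt hQnn, h1]
      have h3 : ∑ a, (q ω a - r a) ^ 2 ≤ ∑ a, (v ω a - r a) ^ 2 := proj_le (v ω) r hr
      have h4 : (1:ℝ) ≤ (∑ a, (v ω a - r a) ^ 2) / ε ^ 2 := by
        rw [le_div_iff₀ (by positivity)]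
        linarith
      nlinarith [hPnn ω, h4]
    · rw [if_neg hSw]
      exact mul_nonneg (hPnn ω) (div_nonneg hXnn (by positivity))
  -- step 2 : compute the expectation
  have step2 : ∀ a : Fin 3, ∑ ω : Fin 3 → Fin n → Bool, P ω * (v ω a - r a) ^ 2
      ≤ 1 / (c ^ 2 * n) := by
    intro a
    have hsingle := expect_single (β := Fin n → Bool)
      (fun a τ => ∏ k, (if τ k then 1/2 + 1/2 * c * r a else 1/2 - 1/2 * c * r a)) hw a
      (fun τ => (C * ((∑ k, (if τ k then (1:ℝ) else -1)) / n) - r a) ^ 2)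
    rw [hP, hv]
    rw [hsingle]
    -- now a single-axis computation
    have key : ∀ τ : Fin n → Bool,
        (C * ((∑ k, (if τ k then (1:ℝ) else -1)) / n) - r a) ^ 2
          = (1/(c*n)) ^ 2 * (∑ k, ((if τ k then (1:ℝ) else -1) - c * r a)) ^ 2 := by
      intro τ
      rw [Finset.sum_sub_distrib, Finset.sum_const, Finset.card_univ, Fintype.card_fin,
        nsmul_eq_mul, hC]
      rw [show (1:ℝ)/c * ((∑ k, (if τ k then (1:ℝ) else -1)) / n) - r a
          = (1/(c*n)) * ((∑ k, (if τ k then (1:ℝ) else -1)) - n * (c * r a)) by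
        field_simp]
      rw [mul_pow]
    have hre : ∀ τ : Fin n → Bool,
        (∏ k, (if τ k then 1/2 + 1/2 * c * r a else 1/2 - 1/2 * c * r a))
            * (C * ((∑ k, (if τ k then (1:ℝ) else -1)) / n) - r a) ^ 2
          = (1/(c*(n:ℝ))) ^ 2 * ((∏ k, (if τ k then 1/2 + 1/2 * c * r a else 1/2 - 1/2 * c * r a))
            * (∑ k, ((if τ k then (1:ℝ) else -1) - c * r a)) ^ 2) := by
      intro τ; rw [key τ]; ring
    rw [Finset.sum_congr rfl fun τ _ => hre τ, ← Finset.mul_sum]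
    have haxis := axis_sq (n := n) (fun b => if b then 1/2 + 1/2 * c * r a else 1/2 - 1/2 * c * r a)
      (by norm_num)
    have hμ : ((if true then 1/2 + 1/2 * c * r a else 1/2 - 1/2 * c * r a) : ℝ)
        - (if false then 1/2 + 1/2 * c * r a else 1/2 - 1/2 * c * r a) = c * r a := by
      norm_num
      ring
    rw [hμ] at haxis
    rw [haxis]
    have hfac : (0:ℝ) < (1/(c*n))^2 := by positivity
    have hb : (n:ℝ) * (1 - (c * r a) ^ 2) ≤ n := by nlinarith [sq_nonneg (c * r a)]
    calc (1/(c*n))^2 * ((n:ℝ) * (1 - (c * r a) ^ 2)) ≤ (1/(c*n))^2 * n :=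
          mul_le_mul_of_nonneg_left hb hfac.le
      _ = 1 / (c ^ 2 * n) := by field_simp
  -- assemble
  have step3 : ∑ ω : Fin 3 → Fin n → Bool, P ω * ((∑ a, (v ω a - r a) ^ 2) / ε ^ 2)
      = (∑ a : Fin 3, ∑ ω : Fin 3 → Fin n → Bool, P ω * (v ω a - r a) ^ 2) / ε ^ 2 := by
    have e1 : ∀ ω : Fin 3 → Fin n → Bool,
        P ω * ((∑ a, (v ω a - r a) ^ 2) / ε ^ 2) = ∑ a, P ω * (v ω a - r a) ^ 2 / ε ^ 2 := by
      intro ω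
      rw [Finset.sum_div, Finset.mul_sum]
      exact Finset.sum_congr rfl fun a _ => (mul_div_assoc _ _ _).symm
    calc ∑ ω : Fin 3 → Fin n → Bool, P ω * ((∑ a, (v ω a - r a) ^ 2) / ε ^ 2)
        = ∑ ω : Fin 3 → Fin n → Bool, ∑ a, P ω * (v ω a - r a) ^ 2 / ε ^ 2 :=
          Finset.sum_congr rfl fun ω _ => e1 ω
      _ = ∑ a : Fin 3, ∑ ω : Fin 3 → Fin n → Bool, P ω * (v ω a - r a) ^ 2 / ε ^ 2 :=
          Finset.sum_comm
      _ = (∑ a : Fin 3, ∑ ω : Fin 3 → Fin n → Bool, P ω * (v ω a - r a) ^ 2) / ε ^ 2 := by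
          rw [Finset.sum_div]
          exact Finset.sum_congr rfl fun a _ => by rw [Finset.sum_div]
  calc (∑ ω : Fin 3 → Fin n → Bool, if S ω then P ω else 0)
      ≤ ∑ ω : Fin 3 → Fin n → Bool, P ω * ((∑ a, (v ω a - r a) ^ 2) / ε ^ 2) := step1
    _ = (∑ a : Fin 3, ∑ ω : Fin 3 → Fin n → Bool, P ω * (v ω a - r a) ^ 2) / ε ^ 2 := step3
    _ ≤ (∑ a : Fin 3, 1 / (c ^ 2 * n)) / ε ^ 2 := by
        gcongr with a ha
        exact step2 a
    _ = 3 / (c ^ 2 * n * ε ^ 2) := by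
        rw [Finset.sum_const, Finset.card_univ, Fintype.card_fin, nsmul_eq_mul]
        field_simp
        norm_num

end Cheb


lemma exp_c (α : ℝ) (h0 : 0 < α) (h1 : α < 1) :
    (Real.exp (4 * arctanh α) - 1) / (Real.exp (4 * arctanh α) + 1) = 2*α/(1+α^2) ∧
    (Real.exp (4 * arctanh α) + 1) / (Real.exp (4 * arctanh α) - 1) = (1+α^2)/(2*α) := by
  have h1a : (0:ℝ) < 1 - α := by linarith
  have h1b : (0:ℝ) < 1 + α := by linarith
  have hu : (0:ℝ) < (1+α)/(1-α) := div_pos h1b h1a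
  have he : Real.exp (4 * arctanh α) = ((1+α)/(1-α))^2 := by
    rw [arctanh, show 4 * (Real.log ((1+α)/(1-α)) / 2)
        = ((2:ℕ):ℝ) * Real.log ((1+α)/(1-α)) by push_cast; ring,
      Real.exp_nat_mul, Real.exp_log hu]
  have hnum : ((1+α)/(1-α))^2 - 1 = 4*α/(1-α)^2 := by
    field_simp
    ring
  have hden : ((1+α)/(1-α))^2 + 1 = (2+2*α^2)/(1-α)^2 := by
    field_simp
    ring
  have hd0 : (2+2*α^2 : ℝ) ≠ 0 := by positivity
  have hsq : ((1-α)^2 : ℝ) ≠ 0 := by positivity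
  have hcan : ∀ a b cc : ℝ, cc ≠ 0 → b ≠ 0 → a/cc/(b/cc) = a/b := fun a b cc hc hb => by
    field_simp
  constructor
  · rw [he, hnum, hden, hcan _ _ _ hsq hd0]
    rw [div_eq_div_iff hd0 (by positivity)]
    ring
  · rw [he, hnum, hden, hcan _ _ _ hsq (by positivity : (4*α:ℝ) ≠ 0)]
    rw [div_eq_div_iff (by positivity) (by positivity)]
    ring

open scoped Classical in
/-- total error of the quantum-Label-Switch certification test. -/
theorem qLS_certification_upper_bound (α : ℝ) (hα0 : 0 < α) (hα : α < 1)
    (n : ℕ) (hn : 1 ≤ n) (ε : ℝ) (hε : 0 < ε)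
    (r0 : Fin 3 → ℝ) (hr0 : Real.sqrt (∑ a, r0 a ^ 2) ≤ 1) :
    let δ : ℝ := 4 * arctanh α
    let c : ℝ := (Real.exp δ - 1) / (Real.exp δ + 1)
    -- probability of the full outcome table `ω` under the true state `ρ(r)`
    let P : (Fin 3 → ℝ) → (Fin 3 → Fin n → Bool) → ℝ := fun r ω =>
      ∏ a, ∏ k, (if ω a k then 1/2 + 1/2 * c * r a else 1/2 - 1/2 * c * r a)
    -- rescaled empirical averages
    let rt : (Fin 3 → Fin n → Bool) → Fin 3 → ℝ := fun ω a =>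
      ((Real.exp δ + 1) / (Real.exp δ - 1))
        * ((∑ k, (if ω a k then (1:ℝ) else -1)) / n)
    -- projection onto the Bloch ball
    let rh : (Fin 3 → Fin n → Bool) → Fin 3 → ℝ := fun ω a =>
      rt ω a / max (Real.sqrt (∑ b, rt ω b ^ 2)) 1
    -- the test decides 1 iff the estimator is ε/2-far from ρ0
    let Δ : (Fin 3 → Fin n → Bool) → Prop := fun ω =>
      ε/2 < traceDist (blochState (rh ω)) (blochState r0)
    (∑ ω : Fin 3 → Fin n → Bool, if Δ ω then P r0 ω else 0)
      + (⨆ ρ : {r : Fin 3 → ℝ //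
            Real.sqrt (∑ a, r a ^ 2) ≤ 1
              ∧ ε ≤ traceDist (blochState r) (blochState r0)},
          ∑ ω : Fin 3 → Fin n → Bool, if Δ ω then 0 else P ρ.1 ω)
      ≤ 3 * (1 + α ^ 2) ^ 2 / 2 * (1 / (n * ε ^ 2 * α ^ 2)) := by
  intro δ c P rt rh Δ
  have hn0 : (0:ℝ) < n := by exact_mod_cast Nat.lt_of_lt_of_le Nat.zero_lt_one hn
  have hec := exp_c α hα0 hα
  have hc : c = 2*α/(1+α^2) := hec.1
  have hc0 : 0 < c := by rw [hc]; positivity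
  have hc1 : c ≤ 1 := by
    rw [hc, div_le_one (by positivity)]
    nlinarith [sq_nonneg (1-α)]
  have hC : (Real.exp δ + 1)/(Real.exp δ - 1) = 1/c := by
    rw [hec.2, hc, one_div_div]
  have hT1 : (∑ ω : Fin 3 → Fin n → Bool, if Δ ω then P r0 ω else 0)
      ≤ 3 / (c ^ 2 * n * ε ^ 2) := by
    refine chebyshev_key n hn c _ hc0 hc1 hC ε hε r0 hr0 Δ ?_
    intro ω hω
    have h1 : ε/2 < traceDist (blochState (rh ω)) (blochState r0) := hω
    rw [traceDist_bloch] at h1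
    show ε ≤ Real.sqrt (∑ a, (rh ω a - r0 a) ^ 2)
    linarith
  have hT2 : (⨆ ρ : {r : Fin 3 → ℝ //
            Real.sqrt (∑ a, r a ^ 2) ≤ 1
              ∧ ε ≤ traceDist (blochState r) (blochState r0)},
          ∑ ω : Fin 3 → Fin n → Bool, if Δ ω then 0 else P ρ.1 ω)
      ≤ 3 / (c ^ 2 * n * ε ^ 2) := by
    refine Real.iSup_le ?_ (by positivity)
    rintro ⟨r, hr, hfar⟩
    have hconv : ∀ ω : Fin 3 → Fin n → Bool,
        (if Δ ω then (0:ℝ) else P r ω) = (if ¬ Δ ω then P r ω else 0) := by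
      intro ω; by_cases h : Δ ω <;> simp [h]
    rw [Finset.sum_congr rfl fun ω _ => hconv ω]
    refine chebyshev_key n hn c _ hc0 hc1 hC ε hε r hr (fun ω => ¬ Δ ω) ?_
    intro ω hω
    have h2 : traceDist (blochState (rh ω)) (blochState r0) ≤ ε/2 := not_lt.1 hω
    rw [traceDist_bloch] at h2
    rw [traceDist_bloch] at hfar
    have htri := sqrt_sum_sq_triangle r (rh ω) r0
    have hsym : Real.sqrt (∑ a, (r a - rh ω a) ^ 2)
        = Real.sqrt (∑ a, (rh ω a - r a) ^ 2) := by
      congr 1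
      exact Finset.sum_congr rfl fun a _ => by ring
    rw [hsym] at htri
    show ε ≤ Real.sqrt (∑ a, (rh ω a - r a) ^ 2)
    linarith
  have hfin : 3 / (c ^ 2 * n * ε ^ 2) + 3 / (c ^ 2 * n * ε ^ 2)
      = 3 * (1 + α ^ 2) ^ 2 / 2 * (1 / (n * ε ^ 2 * α ^ 2)) := by
    rw [hc]
    have h1 : (1+α^2:ℝ) ≠ 0 := by positivity
    have h2 : (α:ℝ) ≠ 0 := ne_of_gt hα0
    have h3 : (n:ℝ) ≠ 0 := ne_of_gt hn0
    have h4 : (ε:ℝ) ≠ 0 := ne_of_gt hε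
    field_simp
    ring
  calc (∑ ω : Fin 3 → Fin n → Bool, if Δ ω then P r0 ω else 0)
      + (⨆ ρ : {r : Fin 3 → ℝ //
            Real.sqrt (∑ a, r a ^ 2) ≤ 1
              ∧ ε ≤ traceDist (blochState r) (blochState r0)},
          ∑ ω : Fin 3 → Fin n → Bool, if Δ ω then 0 else P ρ.1 ω)
      ≤ 3 / (c ^ 2 * n * ε ^ 2) + 3 / (c ^ 2 * n * ε ^ 2) := add_le_add hT1 hT2
    _ = 3 * (1 + α ^ 2) ^ 2 / 2 * (1 / (n * ε ^ 2 * α ^ 2)) := hfin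
end
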